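/- arXiv:1006.0826 — 15 statements merged into one kernel-verified Lean document; each statement's English description precedes it below -/
import Mathlib

section
/- Let Q ≥ 2, let π_1,…,π_Q ∈ [0,1] with Σ_q π_q = 1, let α, β ∈ ℝ, and define p(q,l) = α if q = l and p(q,l) = β if q ≠ l. Define the univariate polynomial U_Q(X) = Σ_{z : {1,…,Q+1}→{1,…,Q}} (Π_{k=1}^{Q+1} π_{z(k)}) · Π_{1≤i<j≤Q+1} (X − p(z(i),z(j))). Then U_Q(α) = 0; that is, the within-group connectivity parameter α is a real root of the degree (Q+1)Q/2 polynomial U_Q. -/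
open Finset

/-- In the binary affiliation random graph model with `Q` groups (within-group
connectivity `α`, between-group connectivity `β`), the within-group parameter `α` is a
root of the polynomial `U_Q(X) = E(∏_{1≤i<j≤Q+1} (X - X_{ij}))`, here written out as the
sum over node group assignments `z` of `(∏ π (z k)) · ∏_{i<j} (X - p(z i, z j))`
evaluated at `X = α`. -/
theorem affiliation_UQ_alpha_root
    (Q : ℕ) (hQ : 2 ≤ Q) (π : Fin Q → ℝ)
    (hπ : ∀ q, π q ∈ Set.Icc (0 : ℝ) 1) (hπsum : ∑ q, π q = 1)
    (α β : ℝ) :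
    (∑ z : Fin (Q + 1) → Fin Q, (∏ k, π (z k)) *
      ∏ i : Fin (Q + 1), ∏ j : Fin (Q + 1),
        (if i < j then (α - (if z i = z j then α else β)) else 1)) = 0 := by
  apply Finset.sum_eq_zero
  intro z _
  obtain ⟨i, j, hne, heq⟩ := Fintype.exists_ne_map_eq_of_card_lt z (by simp)
  rcases hne.lt_or_gt with h | h
  · have h0 : (∏ j' : Fin (Q + 1),
        (if i < j' then (α - (if z i = z j' then α else β)) else 1)) = 0 :=
      Finset.prod_eq_zero (Finset.mem_univ j) (by rw [if_pos h, if_pos heq, sub_self])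
    have h1 : (∏ i' : Fin (Q + 1), ∏ j' : Fin (Q + 1),
        (if i' < j' then (α - (if z i' = z j' then α else β)) else 1)) = 0 :=
      Finset.prod_eq_zero (Finset.mem_univ i) h0
    rw [h1, mul_zero]
  · have h0 : (∏ j' : Fin (Q + 1),
        (if j < j' then (α - (if z j = z j' then α else β)) else 1)) = 0 :=
      Finset.prod_eq_zero (Finset.mem_univ i) (by rw [if_pos h, if_pos heq.symm, sub_self])
    have h1 : (∏ i' : Fin (Q + 1), ∏ j' : Fin (Q + 1),
        (if i' < j' then (α - (if z i' = z j' then α else β)) else 1)) = 0 :=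
      Finset.prod_eq_zero (Finset.mem_univ j) h0
    rw [h1, mul_zero]
end

section
/- Let Q ≥ 2, let π_1,…,π_Q ∈ [0,1] with Σ_q π_q = 1, let α, β ∈ ℝ, and define p(q,l) = α if q = l and p(q,l) = β if q ≠ l. Define V_Q(X,Y) = Σ_{z : {1,…,Q+1}→{1,…,Q}} (Π_{k=1}^{Q+1} π_{z(k)}) · (X + (Q−1)Y − Σ_{i=1}^{Q} p(z(i),z(Q+1))) · Π_{1≤i<j≤Q} (X − p(z(i),z(j))). Then for every real Y one has V_Q(α,Y) = (Q−1) · Q! · (Π_{k=1}^Q π_k) · (α−β)^{Q(Q−1)/2} · (Y − β). In particular V_Q(α,β) = 0, and when all π_k > 0 the coefficient of Y in V_Q(α,Y) is non-zero precisely when α ≠ β. -/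
/-!
Split a group assignment of the `Q + 1` nodes into the groups `f` of the first `Q` nodes and the
group `t` of the last one. The product over pairs among the first `Q` nodes vanishes at `X = α`
unless `f` is injective, i.e. a bijection of `Fin Q`; it then equals `(α - β) ^ (Q(Q-1)/2)`, and
exactly one of the first `Q` nodes shares the group `t`, so the linear factor is `(Q - 1)(Y - β)`.
Summing over the `Q!` bijections and then over `t` (using `∑ π = 1`) gives the identity.
-/

open Finset

theorem Fin.prod_prod_ite_lt {M : Type*} [CommMonoid M] (n : ℕ) (c : M) :
    ∏ i : Fin n, ∏ j : Fin n, (if i < j then c else 1) = c ^ (n * (n - 1) / 2) := by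
  have row : ∀ i : Fin n, ∏ j : Fin n, (if i < j then c else 1) = c ^ (n - 1 - (i : ℕ)) := by
    intro i
    rw [prod_ite, prod_const_one, mul_one, Finset.prod_const, filter_lt_eq_Ioi, Fin.card_Ioi]
  rw [prod_congr rfl fun i _ => row i, prod_pow_eq_pow_sum,
    Fin.sum_univ_eq_sum_range (fun k => n - 1 - k) n, sum_range_reflect (fun k => k) n,
    sum_range_id]

theorem Fintype.card_filter_injective_eq_factorial (α : Type*) [Fintype α] [DecidableEq α] :
    #(univ.filter fun f : α → α => Function.Injective f) = (Fintype.card α).factorial := by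
  rw [← Fintype.card_subtype,
    Fintype.card_congr (Equiv.subtypeInjectiveEquivEmbedding α α),
    Fintype.card_embedding_eq, Nat.descFactorial_self]

theorem Fintype.sum_ite_eq_add_card_sub_one_mul {κ R : Type*} [Fintype κ] [DecidableEq κ]
    [CommRing R] (t : κ) (a b : R) :
    ∑ j : κ, (if j = t then a else b) = a + ((Fintype.card κ : R) - 1) * b := by
  have split : ∀ j : κ, (if j = t then a else b) = b + (if j = t then a - b else 0) := by
    intro j; split_ifs <;> ring
  simp only [split, sum_add_distrib, sum_const, sum_ite_eq', card_univ, nsmul_eq_mul]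
  ring

section Affiliation

variable {R : Type*} [CommRing R] {Q : ℕ} {ι : Type*} [DecidableEq ι]

theorem prod_pairs_sub_affiliation_of_not_injective (α β : R) {f : Fin Q → ι}
    (hf : ¬ Function.Injective f) :
    ∏ i : Fin Q, ∏ j : Fin Q, (if i < j then α - (if f i = f j then α else β) else 1) = 0 := by
  obtain ⟨i, j, hfij, hij⟩ : ∃ i j, f i = f j ∧ i ≠ j := by
    simpa [Function.Injective] using hf
  rcases hij.lt_or_gt with h | h
  · exact prod_eq_zero (mem_univ i) (prod_eq_zero (mem_univ j) (by simp [h, hfij]))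
  · exact prod_eq_zero (mem_univ j) (prod_eq_zero (mem_univ i) (by simp [h, hfij.symm]))

theorem prod_pairs_sub_affiliation_of_injective (α β : R) {f : Fin Q → ι}
    (hf : Function.Injective f) :
    ∏ i : Fin Q, ∏ j : Fin Q, (if i < j then α - (if f i = f j then α else β) else 1)
      = (α - β) ^ (Q * (Q - 1) / 2) := by
  rw [← Fin.prod_prod_ite_lt]
  refine prod_congr rfl fun i _ => prod_congr rfl fun j _ => ?_
  by_cases hij : i < j
  · simp [hij, hf.ne hij.ne]
  · simp [hij]

theorem sum_affiliation_of_bijective (α β : R) {f : Fin Q → Fin Q} (hf : Function.Bijective f)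
    (t : Fin Q) :
    ∑ i : Fin Q, (if f i = t then α else β) = α + ((Q : R) - 1) * β := by
  rw [Fintype.sum_bijective f hf _ (fun j => if j = t then α else β) fun _ => rfl,
    Fintype.sum_ite_eq_add_card_sub_one_mul, Fintype.card_fin]

theorem affiliation_summand_eq_ite (π : Fin Q → R) (α β Y : R) (f : Fin Q → Fin Q)
    (t : Fin Q) :
    (∏ i, π (f i)) * π t *
        ((α + ((Q : R) - 1) * Y - ∑ i : Fin Q, (if f i = t then α else β)) *
          ∏ i : Fin Q, ∏ j : Fin Q, (if i < j then α - (if f i = f j then α else β) else 1))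
      = if Function.Injective f then
          π t * ((∏ k, π k) * ((Q : R) - 1) * (α - β) ^ (Q * (Q - 1) / 2) * (Y - β))
        else 0 := by
  split_ifs with hf
  · have hb : Function.Bijective f := hf.bijective_of_finite
    rw [Fintype.prod_bijective f hb (fun i => π (f i)) π fun _ => rfl,
      sum_affiliation_of_bijective α β hb t, prod_pairs_sub_affiliation_of_injective α β hf]
    ring
  · rw [prod_pairs_sub_affiliation_of_not_injective α β hf, mul_zero, mul_zero]

theorem sum_affiliation_assignments (π : Fin Q → R) (hπsum : ∑ q, π q = 1) (α β Y : R) :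
    ∑ z : Fin (Q + 1) → Fin Q, (∏ k, π (z k)) *
        ((α + ((Q : R) - 1) * Y -
            ∑ i : Fin Q, (if z i.castSucc = z (Fin.last Q) then α else β)) *
          ∏ i : Fin Q, ∏ j : Fin Q,
            (if i < j then (α - (if z i.castSucc = z j.castSucc then α else β)) else 1))
      = ((Q : R) - 1) * (Nat.factorial Q : R) * (∏ k, π k) *
          (α - β) ^ (Q * (Q - 1) / 2) * (Y - β) := by
  rw [← (Fin.snocEquiv fun _ => Fin Q).sum_comp, Fintype.sum_prod_type]
  simp only [Fin.snocEquiv_apply, Fin.snoc_castSucc, Fin.snoc_last, Fin.prod_univ_castSucc,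
    affiliation_summand_eq_ite]
  simp only [sum_ite, sum_const_zero, add_zero, sum_const,
    Fintype.card_filter_injective_eq_factorial, Fintype.card_fin, nsmul_eq_mul]
  rw [← mul_sum, ← sum_mul, hπsum]
  ring

end Affiliation

theorem affiliation_VQ_identity_general
    (Q : ℕ) (hQ : 2 ≤ Q) (π : Fin Q → ℝ)
    (hπsum : ∑ q, π q = 1)
    (α β : ℝ) :
    (∀ Y : ℝ,
      (∑ z : Fin (Q + 1) → Fin Q, (∏ k, π (z k)) *
        ((α + ((Q : ℝ) - 1) * Y -
            ∑ i : Fin Q, (if z i.castSucc = z (Fin.last Q) then α else β)) *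
          ∏ i : Fin Q, ∏ j : Fin Q,
            (if i < j then (α - (if z i.castSucc = z j.castSucc then α else β)) else 1)))
      = ((Q : ℝ) - 1) * (Nat.factorial Q : ℝ) * (∏ k, π k) *
          (α - β) ^ (Q * (Q - 1) / 2) * (Y - β)) ∧
    (∑ z : Fin (Q + 1) → Fin Q, (∏ k, π (z k)) *
        ((α + ((Q : ℝ) - 1) * β -
            ∑ i : Fin Q, (if z i.castSucc = z (Fin.last Q) then α else β)) *
          ∏ i : Fin Q, ∏ j : Fin Q,
            (if i < j then (α - (if z i.castSucc = z j.castSucc then α else β)) else 1)))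
      = 0 ∧
    ((∀ k, 0 < π k) →
      (((Q : ℝ) - 1) * (Nat.factorial Q : ℝ) * (∏ k, π k) *
          (α - β) ^ (Q * (Q - 1) / 2) ≠ 0 ↔ α ≠ β)) := by
  refine ⟨sum_affiliation_assignments π hπsum α β, ?_, fun hπpos => ?_⟩
  · rw [sum_affiliation_assignments π hπsum α β β, sub_self, mul_zero]
  · have hQ1 : ((Q : ℝ) - 1) ≠ 0 := by
      have : (2 : ℝ) ≤ Q := by exact_mod_cast hQ
      linarith
    have hπprod : (∏ k, π k) ≠ 0 := (prod_pos fun k _ => hπpos k).ne'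
    have hexp : Q * (Q - 1) / 2 ≠ 0 := by
      have : 2 * 1 ≤ Q * (Q - 1) := Nat.mul_le_mul hQ (by omega)
      omega
    simp [hQ1, Nat.factorial_ne_zero, hπprod, hexp, sub_eq_zero]

/-- In the binary affiliation random graph model with `Q` groups, the polynomial
`V_Q(X,Y) = E((X+(Q-1)Y-∑_{i≤Q} X_{i(Q+1)}) ∏_{1≤i<j≤Q}(X - X_{ij}))`, evaluated at
`X = α`, equals `(Q-1)·Q!·(∏ π_k)·(α-β)^{Q(Q-1)/2}·(Y-β)` for every real `Y`.
In particular `V_Q(α,β) = 0`, and when all `π_k > 0` the coefficient of `Y` in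
`V_Q(α,Y)` is non-zero precisely when `α ≠ β`. Nodes `1,…,Q` are represented by
`Fin.castSucc i` and node `Q+1` by `Fin.last Q`. -/
theorem affiliation_VQ_identity
    (Q : ℕ) (hQ : 2 ≤ Q) (π : Fin Q → ℝ)
    (hπ : ∀ q, π q ∈ Set.Icc (0 : ℝ) 1) (hπsum : ∑ q, π q = 1)
    (α β : ℝ) :
    (∀ Y : ℝ,
      (∑ z : Fin (Q + 1) → Fin Q, (∏ k, π (z k)) *
        ((α + ((Q : ℝ) - 1) * Y -
            ∑ i : Fin Q, (if z i.castSucc = z (Fin.last Q) then α else β)) *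
          ∏ i : Fin Q, ∏ j : Fin Q,
            (if i < j then (α - (if z i.castSucc = z j.castSucc then α else β)) else 1)))
      = ((Q : ℝ) - 1) * (Nat.factorial Q : ℝ) * (∏ k, π k) *
          (α - β) ^ (Q * (Q - 1) / 2) * (Y - β)) ∧
    (∑ z : Fin (Q + 1) → Fin Q, (∏ k, π (z k)) *
        ((α + ((Q : ℝ) - 1) * β -
            ∑ i : Fin Q, (if z i.castSucc = z (Fin.last Q) then α else β)) *
          ∏ i : Fin Q, ∏ j : Fin Q,
            (if i < j then (α - (if z i.castSucc = z j.castSucc then α else β)) else 1)))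
      = 0 ∧
    ((∀ k, 0 < π k) →
      (((Q : ℝ) - 1) * (Nat.factorial Q : ℝ) * (∏ k, π k) *
          (α - β) ^ (Q * (Q - 1) / 2) ≠ 0 ↔ α ≠ β)) :=
  affiliation_VQ_identity_general Q hQ π hπsum α β
end

section
/- Let Q = 2, let π_1, π_2 ∈ (0,1) with π_1 + π_2 = 1, set s_k = π_1^k + π_2^k, let α, β ∈ [0,1], and define the moments m_1 = s_2 α + (1−s_2) β, m_2 = s_3 α² + 2(s_2−s_3) α β + (1−2 s_2+s_3) β², m_3 = s_3 α³ + 3(s_2−s_3) α β² + (1−3 s_2+2 s_3) β³. Then α is the unique real root of the cubic polynomial U_2(X) = X³ − 3 m_1 X² + 3 m_2 X − m_3. Moreover, if α ≠ β, then β is the unique real root of the polynomial Y ↦ V_2(α,Y), where V_2(X,Y) = X² + X Y − 3 m_1 X − m_1 Y + 2 m_2 (i.e. the coefficient α − m_1 of Y is non-zero and V_2(α,β) = 0). -/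
/-! With `p = π₁π₂` the power sums are `s₂ = 1 - 2p` and `s₃ = 1 - 3p`, and then
`U₂(X) = (X - α) ((X - α + 3p(α - β))² + 3p(1 - 3p)(α - β)²)` and
`V₂(α, Y) = (α - m₁)(Y - β)` with `α - m₁ = 2p(α - β)`. Since `0 < p ≤ 1/4`, the quadratic
factor of `U₂` is a positive definite form in `X - α + 3p(α - β)` and `α - β`, so it vanishes
only when `X = α`. -/

lemma sq_add_sq_eq_one_sub_two_mul {a b : ℝ} (h : a + b = 1) :
    a ^ 2 + b ^ 2 = 1 - 2 * (a * b) := by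
  linear_combination (a + b + 1) * h

lemma pow_three_add_pow_three_eq_one_sub_three_mul {a b : ℝ} (h : a + b = 1) :
    a ^ 3 + b ^ 3 = 1 - 3 * (a * b) := by
  linear_combination (a ^ 2 - a * b + b ^ 2 + a + b + 1) * h

lemma eq_zero_of_sq_add_mul_sq_eq_zero {a b c : ℝ} (hc : 0 < c) (h : a ^ 2 + c * b ^ 2 = 0) :
    a = 0 ∧ b = 0 := by
  have hb : c * b ^ 2 = 0 := by nlinarith [sq_nonneg a, mul_nonneg hc.le (sq_nonneg b)]
  have ha : a ^ 2 = 0 := by linarith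
  exact ⟨pow_eq_zero_iff two_ne_zero |>.mp ha,
    pow_eq_zero_iff two_ne_zero |>.mp ((mul_eq_zero.mp hb).resolve_left hc.ne')⟩

namespace AffiliationQ2

variable {p α β s₂ s₃ m₁ m₂ m₃ : ℝ}

lemma cubic_eq_mul (hs₂ : s₂ = 1 - 2 * p) (hs₃ : s₃ = 1 - 3 * p)
    (hm₁ : m₁ = s₂ * α + (1 - s₂) * β)
    (hm₂ : m₂ = s₃ * α ^ 2 + 2 * (s₂ - s₃) * α * β + (1 - 2 * s₂ + s₃) * β ^ 2)
    (hm₃ : m₃ = s₃ * α ^ 3 + 3 * (s₂ - s₃) * α * β ^ 2 + (1 - 3 * s₂ + 2 * s₃) * β ^ 3)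
    (x : ℝ) :
    x ^ 3 - 3 * m₁ * x ^ 2 + 3 * m₂ * x - m₃ =
      (x - α) * ((x - α + 3 * p * (α - β)) ^ 2 + 3 * p * (1 - 3 * p) * (α - β) ^ 2) := by
  subst hs₂ hs₃ hm₁ hm₂ hm₃
  ring

lemma eq_of_cubic_eq_zero (hp : 0 < p) (hp' : p < 1 / 3)
    (hs₂ : s₂ = 1 - 2 * p) (hs₃ : s₃ = 1 - 3 * p)
    (hm₁ : m₁ = s₂ * α + (1 - s₂) * β)
    (hm₂ : m₂ = s₃ * α ^ 2 + 2 * (s₂ - s₃) * α * β + (1 - 2 * s₂ + s₃) * β ^ 2)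
    (hm₃ : m₃ = s₃ * α ^ 3 + 3 * (s₂ - s₃) * α * β ^ 2 + (1 - 3 * s₂ + 2 * s₃) * β ^ 3)
    {x : ℝ} (hx : x ^ 3 - 3 * m₁ * x ^ 2 + 3 * m₂ * x - m₃ = 0) : x = α := by
  rw [cubic_eq_mul hs₂ hs₃ hm₁ hm₂ hm₃] at hx
  rcases mul_eq_zero.mp hx with hx | hq
  · exact sub_eq_zero.mp hx
  · obtain ⟨hshift, hαβ⟩ :=
      eq_zero_of_sq_add_mul_sq_eq_zero (by nlinarith : 0 < 3 * p * (1 - 3 * p)) hq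
    rw [hαβ, mul_zero, add_zero] at hshift
    exact sub_eq_zero.mp hshift

lemma sub_m₁_eq (hs₂ : s₂ = 1 - 2 * p) (hm₁ : m₁ = s₂ * α + (1 - s₂) * β) :
    α - m₁ = 2 * p * (α - β) := by
  subst hs₂ hm₁
  ring

lemma quadratic_eq_mul (hs₂ : s₂ = 1 - 2 * p) (hs₃ : s₃ = 1 - 3 * p)
    (hm₁ : m₁ = s₂ * α + (1 - s₂) * β)
    (hm₂ : m₂ = s₃ * α ^ 2 + 2 * (s₂ - s₃) * α * β + (1 - 2 * s₂ + s₃) * β ^ 2) (y : ℝ) :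
    α ^ 2 + α * y - 3 * m₁ * α - m₁ * y + 2 * m₂ = (α - m₁) * (y - β) := by
  subst hs₂ hs₃ hm₁ hm₂
  ring

end AffiliationQ2

open AffiliationQ2 in
theorem affiliation_Q2_unique_roots_general
    (π₁ π₂ : ℝ) (hπ₁ : π₁ ∈ Set.Ioo (0 : ℝ) 1) (hπ₂ : π₂ ∈ Set.Ioo (0 : ℝ) 1)
    (hπsum : π₁ + π₂ = 1)
    (α β : ℝ)
    (s₂ s₃ m₁ m₂ m₃ : ℝ)
    (hs₂ : s₂ = π₁ ^ 2 + π₂ ^ 2) (hs₃ : s₃ = π₁ ^ 3 + π₂ ^ 3)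
    (hm₁ : m₁ = s₂ * α + (1 - s₂) * β)
    (hm₂ : m₂ = s₃ * α ^ 2 + 2 * (s₂ - s₃) * α * β + (1 - 2 * s₂ + s₃) * β ^ 2)
    (hm₃ : m₃ = s₃ * α ^ 3 + 3 * (s₂ - s₃) * α * β ^ 2 + (1 - 3 * s₂ + 2 * s₃) * β ^ 3) :
    ((α ^ 3 - 3 * m₁ * α ^ 2 + 3 * m₂ * α - m₃ = 0) ∧
      (∀ x : ℝ, x ^ 3 - 3 * m₁ * x ^ 2 + 3 * m₂ * x - m₃ = 0 → x = α)) ∧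
    (α ≠ β →
      (α - m₁ ≠ 0 ∧
        (α ^ 2 + α * β - 3 * m₁ * α - m₁ * β + 2 * m₂ = 0) ∧
        (∀ y : ℝ, α ^ 2 + α * y - 3 * m₁ * α - m₁ * y + 2 * m₂ = 0 → y = β))) := by
  have hp : 0 < π₁ * π₂ := mul_pos hπ₁.1 hπ₂.1
  have hp' : π₁ * π₂ < 1 / 3 := by nlinarith [four_mul_le_sq_add π₁ π₂]
  have hs₂' := hs₂.trans (sq_add_sq_eq_one_sub_two_mul hπsum)
  have hs₃' := hs₃.trans (pow_three_add_pow_three_eq_one_sub_three_mul hπsum)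
  have hU := cubic_eq_mul hs₂' hs₃' hm₁ hm₂ hm₃
  have hV := quadratic_eq_mul hs₂' hs₃' hm₁ hm₂
  refine ⟨⟨by simp [hU], fun x hx ↦ eq_of_cubic_eq_zero hp hp' hs₂' hs₃' hm₁ hm₂ hm₃ hx⟩,
    fun hαβ ↦ ?_⟩
  have hcoef : α - m₁ ≠ 0 := by
    rw [sub_m₁_eq hs₂' hm₁]
    exact mul_ne_zero (by positivity) (sub_ne_zero.mpr hαβ)
  refine ⟨hcoef, by simp [hV], fun y hy ↦ ?_⟩
  rw [hV] at hy
  exact sub_eq_zero.mp ((mul_eq_zero.mp hy).resolve_left hcoef)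

/-- For the binary affiliation model with `Q = 2` groups, `α` is the unique real root
of `U₂(X) = X³ - 3m₁X² + 3m₂X - m₃`, and, provided `α ≠ β`, `β` is the unique real root
of `V₂(α,Y)` where `V₂(X,Y) = X² + XY - 3m₁X - m₁Y + 2m₂` (the coefficient `α - m₁` of
`Y` being non-zero). -/
theorem affiliation_Q2_unique_roots
    (π₁ π₂ : ℝ) (hπ₁ : π₁ ∈ Set.Ioo (0 : ℝ) 1) (hπ₂ : π₂ ∈ Set.Ioo (0 : ℝ) 1)
    (hπsum : π₁ + π₂ = 1)
    (α β : ℝ) (hα : α ∈ Set.Icc (0 : ℝ) 1) (hβ : β ∈ Set.Icc (0 : ℝ) 1)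
    (s₂ s₃ m₁ m₂ m₃ : ℝ)
    (hs₂ : s₂ = π₁ ^ 2 + π₂ ^ 2) (hs₃ : s₃ = π₁ ^ 3 + π₂ ^ 3)
    (hm₁ : m₁ = s₂ * α + (1 - s₂) * β)
    (hm₂ : m₂ = s₃ * α ^ 2 + 2 * (s₂ - s₃) * α * β + (1 - 2 * s₂ + s₃) * β ^ 2)
    (hm₃ : m₃ = s₃ * α ^ 3 + 3 * (s₂ - s₃) * α * β ^ 2 + (1 - 3 * s₂ + 2 * s₃) * β ^ 3) :
    ((α ^ 3 - 3 * m₁ * α ^ 2 + 3 * m₂ * α - m₃ = 0) ∧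
      (∀ x : ℝ, x ^ 3 - 3 * m₁ * x ^ 2 + 3 * m₂ * x - m₃ = 0 → x = α)) ∧
    (α ≠ β →
      (α - m₁ ≠ 0 ∧
        (α ^ 2 + α * β - 3 * m₁ * α - m₁ * β + 2 * m₂ = 0) ∧
        (∀ y : ℝ, α ^ 2 + α * y - 3 * m₁ * α - m₁ * y + 2 * m₂ = 0 → y = β))) :=
  affiliation_Q2_unique_roots_general π₁ π₂ hπ₁ hπ₂ hπsum α β s₂ s₃ m₁ m₂ m₃ hs₂ hs₃ hm₁ hm₂ hm₃
end

section
/- Let Q = 2 and suppose (π_1, α, β) and (π′_1, α′, β′) satisfy π_1, π′_1 ∈ (0,1), α ≠ β, α′ ≠ β′, with α, β, α′, β′ ∈ [0,1]. For each triple define s_2, s_3 with π_2 = 1−π_1 (resp. π′_2 = 1−π′_1) and the moments m_1 = s_2 α + (1−s_2) β, m_2 = s_3 α² + 2(s_2−s_3) α β + (1−2 s_2+s_3) β², m_3 = s_3 α³ + 3(s_2−s_3) α β² + (1−3 s_2+2 s_3) β³. If the two triples of moments coincide, m_i = m′_i for i = 1,2,3, then α = α′, β = β′, and {π_1, 1−π_1}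 = {π′_1, 1−π′_1}. In other words, the parameters of the binary affiliation model with 2 groups are identifiable, up to label swapping, from the distribution of K_3. -/
/-!
Write `p = π₁(1 - π₁)` and `δ = α - β`. Then `s₂ = 1 - 2p`, `s₃ = 1 - 3p`, and the variance and
third cumulant of the law of `K₃` are `m₂ - m₁² = p(1 - 4p)δ²` and
`m₃ - 3m₁m₂ + 2m₁³ = 2p²(3 - 8p)δ³`. With `x = 1 - 4p ∈ [0, 1)`, the scale-free ratio
(third cumulant)² / variance³ equals `(1 - x)(1 + 2x)² / x³`, an injective function of `x`, so
equal moments force equal `p`; then equal third cumulants give `δ³ = δ'³`, and `m₁ = α - 2pδ`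
recovers `α`. Finally `p` determines `{π₁, 1 - π₁}` as the roots of `X(1 - X) = p`.
-/

namespace Affiliation

def s₂ (π : ℝ) : ℝ := π ^ 2 + (1 - π) ^ 2

def s₃ (π : ℝ) : ℝ := π ^ 3 + (1 - π) ^ 3

def m₁ (π α β : ℝ) : ℝ := s₂ π * α + (1 - s₂ π) * β

def m₂ (π α β : ℝ) : ℝ :=
  s₃ π * α ^ 2 + 2 * (s₂ π - s₃ π) * α * β + (1 - 2 * s₂ π + s₃ π) * β ^ 2

def m₃ (π α β : ℝ) : ℝ :=
  s₃ π * α ^ 3 + 3 * (s₂ π - s₃ π) * α * β ^ 2 + (1 - 3 * s₂ π + 2 * s₃ π) * β ^ 3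

lemma m₁_eq (π α β : ℝ) : m₁ π α β = α - 2 * (π * (1 - π)) * (α - β) := by
  unfold m₁ s₂; ring

lemma m₂_sub_m₁_sq (π α β : ℝ) :
    m₂ π α β - m₁ π α β ^ 2 = π * (1 - π) * (1 - 4 * (π * (1 - π))) * (α - β) ^ 2 := by
  unfold m₁ m₂ s₂ s₃; ring

lemma m₃_sub_three_mul_add_two_mul (π α β : ℝ) :
    m₃ π α β - 3 * m₁ π α β * m₂ π α β + 2 * m₁ π α β ^ 3
      = 2 * (π * (1 - π)) ^ 2 * (3 - 8 * (π * (1 - π))) * (α - β) ^ 3 := by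
  unfold m₁ m₂ m₃ s₂ s₃; ring

end Affiliation

lemma mul_one_sub_mem_Ioc {π : ℝ} (hπ : π ∈ Set.Ioo 0 1) : π * (1 - π) ∈ Set.Ioc 0 (1 / 4) :=
  ⟨mul_pos hπ.1 (by linarith [hπ.2]), by nlinarith [sq_nonneg (1 - 2 * π)]⟩

lemma Set.pair_eq_pair_of_mul_one_sub_eq {R : Type*} [CommRing R] [NoZeroDivisors R] {a b : R}
    (h : a * (1 - a) = b * (1 - b)) : ({a, 1 - a} : Set R) = {b, 1 - b} := by
  have hfac : (a - b) * (a + b - 1) = 0 := by linear_combination -h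
  rcases mul_eq_zero.mp hfac with hab | hab
  · rw [sub_eq_zero.mp hab]
  · rw [show a = 1 - b by linear_combination hab, sub_sub_cancel, Set.pair_comm]

lemma eq_of_cross_mul_eq {x y : ℝ} (hx : 0 ≤ x) (hy : 0 ≤ y)
    (h : (1 - y) * (1 + 2 * y) ^ 2 * x ^ 3 = (1 - x) * (1 + 2 * x) ^ 2 * y ^ 3) : x = y := by
  have hfac : (x - y) * (x ^ 2 + x * y + y ^ 2 + 3 * x * y * (x + y)) = 0 := by
    linear_combination h
  rcases mul_eq_zero.mp hfac with hxy | hH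
  · exact sub_eq_zero.mp hxy
  · have hxy_nonneg : 0 ≤ x * y := mul_nonneg hx hy
    have hx0 : x = 0 := by nlinarith [mul_nonneg hxy_nonneg (add_nonneg hx hy)]
    subst hx0
    nlinarith

lemma eq_of_cumulants_eq {p q δ ε : ℝ} (hp : p ∈ Set.Ioc 0 (1 / 4)) (hq : q ∈ Set.Ioc 0 (1 / 4))
    (hδ : δ ≠ 0) (hε : ε ≠ 0)
    (hvar : p * (1 - 4 * p) * δ ^ 2 = q * (1 - 4 * q) * ε ^ 2)
    (hcum : 2 * p ^ 2 * (3 - 8 * p) * δ ^ 3 = 2 * q ^ 2 * (3 - 8 * q) * ε ^ 3) :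
    p = q ∧ δ = ε := by
  obtain ⟨hp0, hp4⟩ := hp
  obtain ⟨hq0, hq4⟩ := hq
  have hcross : (1 - (1 - 4 * q)) * (1 + 2 * (1 - 4 * q)) ^ 2 * (1 - 4 * p) ^ 3
      = (1 - (1 - 4 * p)) * (1 + 2 * (1 - 4 * p)) ^ 2 * (1 - 4 * q) ^ 3 := by
    refine mul_left_cancel₀ (by positivity : p ^ 3 * q ^ 3 * δ ^ 6 * ε ^ 6 ≠ 0) ?_
    calc _ = (p * (1 - 4 * p) * δ ^ 2) ^ 3 * (2 * q ^ 2 * (3 - 8 * q) * ε ^ 3) ^ 2 := by ring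
      _ = (q * (1 - 4 * q) * ε ^ 2) ^ 3 * (2 * p ^ 2 * (3 - 8 * p) * δ ^ 3) ^ 2 := by
        rw [hvar, hcum]
      _ = _ := by ring
  have hpq : p = q := by linarith [eq_of_cross_mul_eq (by linarith) (by linarith) hcross]
  subst hpq
  refine ⟨rfl, (Odd.pow_inj (by decide : Odd 3)).mp ?_⟩
  exact mul_left_cancel₀ (by nlinarith : 2 * p ^ 2 * (3 - 8 * p) ≠ 0) hcum

open Affiliation in
theorem affiliation_Q2_identifiable_from_K3_general
    (π₁ π₁' : ℝ) (hπ₁ : π₁ ∈ Set.Ioo (0 : ℝ) 1) (hπ₁' : π₁' ∈ Set.Ioo (0 : ℝ) 1)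
    (α β α' β' : ℝ)
    (hαβ : α ≠ β) (hαβ' : α' ≠ β')
    (s₂ s₃ s₂' s₃' : ℝ)
    (hs₂ : s₂ = π₁ ^ 2 + (1 - π₁) ^ 2) (hs₃ : s₃ = π₁ ^ 3 + (1 - π₁) ^ 3)
    (hs₂' : s₂' = π₁' ^ 2 + (1 - π₁') ^ 2) (hs₃' : s₃' = π₁' ^ 3 + (1 - π₁') ^ 3)
    (hm₁ : s₂ * α + (1 - s₂) * β = s₂' * α' + (1 - s₂') * β')
    (hm₂ : s₃ * α ^ 2 + 2 * (s₂ - s₃) * α * β + (1 - 2 * s₂ + s₃) * β ^ 2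
         = s₃' * α' ^ 2 + 2 * (s₂' - s₃') * α' * β' + (1 - 2 * s₂' + s₃') * β' ^ 2)
    (hm₃ : s₃ * α ^ 3 + 3 * (s₂ - s₃) * α * β ^ 2 + (1 - 3 * s₂ + 2 * s₃) * β ^ 3
         = s₃' * α' ^ 3 + 3 * (s₂' - s₃') * α' * β' ^ 2 + (1 - 3 * s₂' + 2 * s₃') * β' ^ 3) :
    α = α' ∧ β = β' ∧ ({π₁, 1 - π₁} : Set ℝ) = {π₁', 1 - π₁'} := by
  subst hs₂ hs₃ hs₂' hs₃'
  have hm₁ : m₁ π₁ α β = m₁ π₁' α' β' := hm₁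
  have hm₂ : m₂ π₁ α β = m₂ π₁' α' β' := hm₂
  have hm₃ : m₃ π₁ α β = m₃ π₁' α' β' := hm₃
  obtain ⟨hp, hdiff⟩ := eq_of_cumulants_eq (mul_one_sub_mem_Ioc hπ₁) (mul_one_sub_mem_Ioc hπ₁')
    (sub_ne_zero.mpr hαβ) (sub_ne_zero.mpr hαβ')
    (by rw [← m₂_sub_m₁_sq, ← m₂_sub_m₁_sq, hm₁, hm₂])
    (by rw [← m₃_sub_three_mul_add_two_mul, ← m₃_sub_three_mul_add_two_mul, hm₁, hm₂, hm₃])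
  have hα : α = α' := by
    rw [m₁_eq, m₁_eq, hp, hdiff] at hm₁
    linarith
  exact ⟨hα, by linarith, Set.pair_eq_pair_of_mul_one_sub_eq hp⟩

/-- Identifiability, up to label swapping, of the parameters `(π₁, α, β)` of the binary
affiliation random graph model with `Q = 2` groups from the distribution of `K₃`,
i.e. from the moments `m₁ = E(X_{ij})`, `m₂ = E(X_{ij}X_{ik})`, `m₃ = E(X_{ij}X_{ik}X_{jk})`,
provided `α ≠ β`. -/
theorem affiliation_Q2_identifiable_from_K3
    (π₁ π₁' : ℝ) (hπ₁ : π₁ ∈ Set.Ioo (0 : ℝ) 1) (hπ₁' : π₁' ∈ Set.Ioo (0 : ℝ) 1)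
    (α β α' β' : ℝ)
    (hα : α ∈ Set.Icc (0 : ℝ) 1) (hβ : β ∈ Set.Icc (0 : ℝ) 1)
    (hα' : α' ∈ Set.Icc (0 : ℝ) 1) (hβ' : β' ∈ Set.Icc (0 : ℝ) 1)
    (hαβ : α ≠ β) (hαβ' : α' ≠ β')
    (s₂ s₃ s₂' s₃' : ℝ)
    (hs₂ : s₂ = π₁ ^ 2 + (1 - π₁) ^ 2) (hs₃ : s₃ = π₁ ^ 3 + (1 - π₁) ^ 3)
    (hs₂' : s₂' = π₁' ^ 2 + (1 - π₁') ^ 2) (hs₃' : s₃' = π₁' ^ 3 + (1 - π₁') ^ 3)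
    (hm₁ : s₂ * α + (1 - s₂) * β = s₂' * α' + (1 - s₂') * β')
    (hm₂ : s₃ * α ^ 2 + 2 * (s₂ - s₃) * α * β + (1 - 2 * s₂ + s₃) * β ^ 2
         = s₃' * α' ^ 2 + 2 * (s₂' - s₃') * α' * β' + (1 - 2 * s₂' + s₃') * β' ^ 2)
    (hm₃ : s₃ * α ^ 3 + 3 * (s₂ - s₃) * α * β ^ 2 + (1 - 3 * s₂ + 2 * s₃) * β ^ 3
         = s₃' * α' ^ 3 + 3 * (s₂' - s₃') * α' * β' ^ 2 + (1 - 3 * s₂' + 2 * s₃') * β' ^ 3) :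
    α = α' ∧ β = β' ∧ ({π₁, 1 - π₁} : Set ℝ) = {π₁', 1 - π₁'} :=
  affiliation_Q2_identifiable_from_K3_general π₁ π₁' hπ₁ hπ₁' α β α' β' hαβ hαβ' s₂ s₃ s₂' s₃' hs₂
    hs₃ hs₂' hs₃' hm₁ hm₂ hm₃
end

section
/- Let Q ≥ 2, let π_1,…,π_Q ∈ (0,1) with Σ_q π_q = 1, set s_k = Σ_{q=1}^Q π_q^k, let α, β ∈ [0,1], and define m_1 = s_2 α + (1−s_2) β, m_2 = s_3 α² + 2(s_2−s_3) α β + (1−2 s_2+s_3) β², m_3 = s_3 α³ + 3(s_2−s_3) α β² + (1−3 s_2+2 s_3) β³. If m_2 ≠ m_1², then π is non-uniform (not all π_q equal 1/Q), the quantities m_1² − m_2 and 2 s_2³ − 3 s_3 s_2 + s_3 are non-zero, and β = [(s_3 − s_2 s_3) m_1³ + (s_2³ − s_3) m_2 m_1 + (s_3 s_2 − s_2³) m_3] / [(m_1² − m_2)(2 s_2³ − 3 s_3 s_2 + s_3)] and α = (m_1 + (s_2 − 1) β)/s_2. -/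
/-!
One has `m₂ - m₁² = (s₃ - s₂²)(α - β)²`, so `m₂ ≠ m₁²` forces `s₃ ≠ s₂²`, which fails
for uniform proportions. With `t = √s₂`, every `π_q` is at most `t`, hence `s₃ ≤ t³`.
The denominator `2s₂³ - 3s₃s₂ + s₃` is affine in `s₃` and positive at both ends `s₃ = 0`
and `s₃ = t³` (where it equals `t³(1 - t)²(1 + 2t)`), so it is positive. Once the
denominators are non-zero, the formulas for `β` and `α` are polynomial identities.
-/

open Finset

section PowerSums

variable {ι : Type*} [Fintype ι] {p : ι → ℝ}

theorem sum_pow_pos [Nonempty ι] (hp : ∀ i, 0 < p i) (n : ℕ) : 0 < ∑ i, p i ^ n :=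
  sum_pos (fun i _ => pow_pos (hp i) n) univ_nonempty

theorem sum_sq_lt_sum [Nonempty ι] (hp : ∀ i, p i ∈ Set.Ioo 0 1) :
    ∑ i, p i ^ 2 < ∑ i, p i :=
  sum_lt_sum_of_nonempty univ_nonempty fun i _ => by
    obtain ⟨h0, h1⟩ := hp i
    nlinarith

theorem sum_pow_three_le_sqrt_mul_sum_sq (p : ι → ℝ) :
    ∑ i, p i ^ 3 ≤ √(∑ i, p i ^ 2) * ∑ i, p i ^ 2 := by
  rw [mul_sum]
  refine sum_le_sum fun i _ => ?_
  have hle : p i ≤ √(∑ j, p j ^ 2) :=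
    (le_abs_self _).trans <| Real.abs_le_sqrt <|
      single_le_sum (fun j _ => sq_nonneg (p j)) (mem_univ i)
  calc p i ^ 3 = p i * p i ^ 2 := by ring
    _ ≤ √(∑ j, p j ^ 2) * p i ^ 2 := mul_le_mul_of_nonneg_right hle (sq_nonneg _)

theorem sum_pow_three_eq_sq_sum_sq_of_forall_eq {c : ℝ} (hc : ∀ i, p i = c)
    (hsum : ∑ i, p i = 1) : ∑ i, p i ^ 3 = (∑ i, p i ^ 2) ^ 2 := by
  simp only [hc, sum_const, card_univ, nsmul_eq_mul] at hsum ⊢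
  linear_combination (-(Fintype.card ι : ℝ) * c ^ 3) * hsum

end PowerSums

theorem affiliation_denominator_pos {s₂ s₃ : ℝ} (hs₂ : 0 < s₂) (hs₂_lt : s₂ < 1)
    (hs₃ : 0 < s₃) (hs₃_le : s₃ ≤ √s₂ * s₂) : 0 < 2 * s₂ ^ 3 - 3 * s₃ * s₂ + s₃ := by
  set t := √s₂
  have ht : 0 < t := Real.sqrt_pos.2 hs₂
  have hts : t ^ 2 = s₂ := Real.sq_sqrt hs₂.le
  have ht_lt : t < 1 := by nlinarith
  have hs₃_le' : s₃ ≤ t ^ 3 := by nlinarith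
  have hinterp : t ^ 3 * (2 * s₂ ^ 3 - 3 * s₃ * s₂ + s₃) =
      2 * t ^ 6 * (t ^ 3 - s₃) + s₃ * t ^ 3 * ((1 - t) ^ 2 * (1 + 2 * t)) := by
    rw [← hts]; ring
  have h1t : 0 < 1 - t := by linarith
  have hgap : 0 ≤ t ^ 3 - s₃ := by linarith
  have hprod : 0 < t ^ 3 * (2 * s₂ ^ 3 - 3 * s₃ * s₂ + s₃) := by
    rw [hinterp]; positivity
  exact pos_of_mul_pos_right hprod (by positivity)

section Moments

variable {s₂ s₃ α β m₁ m₂ m₃ : ℝ}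

theorem moment₂_sub_moment₁_sq (hm₁ : m₁ = s₂ * α + (1 - s₂) * β)
    (hm₂ : m₂ = s₃ * α ^ 2 + 2 * (s₂ - s₃) * α * β + (1 - 2 * s₂ + s₃) * β ^ 2) :
    m₂ - m₁ ^ 2 = (s₃ - s₂ ^ 2) * (α - β) ^ 2 := by
  subst hm₁ hm₂; ring

theorem beta_eq_of_moments (hm₁ : m₁ = s₂ * α + (1 - s₂) * β)
    (hm₂ : m₂ = s₃ * α ^ 2 + 2 * (s₂ - s₃) * α * β + (1 - 2 * s₂ + s₃) * β ^ 2)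
    (hm₃ : m₃ = s₃ * α ^ 3 + 3 * (s₂ - s₃) * α * β ^ 2 + (1 - 3 * s₂ + 2 * s₃) * β ^ 3)
    (hM : m₁ ^ 2 - m₂ ≠ 0) (hE : 2 * s₂ ^ 3 - 3 * s₃ * s₂ + s₃ ≠ 0) :
    β = ((s₃ - s₂ * s₃) * m₁ ^ 3 + (s₂ ^ 3 - s₃) * m₂ * m₁ + (s₃ * s₂ - s₂ ^ 3) * m₃) /
          ((m₁ ^ 2 - m₂) * (2 * s₂ ^ 3 - 3 * s₃ * s₂ + s₃)) := by
  rw [eq_div_iff (mul_ne_zero hM hE)]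
  subst hm₁ hm₂ hm₃; ring

theorem alpha_eq_of_moment₁ (hm₁ : m₁ = s₂ * α + (1 - s₂) * β) (hs₂ : s₂ ≠ 0) :
    α = (m₁ + (s₂ - 1) * β) / s₂ := by
  rw [eq_div_iff hs₂, hm₁]; ring

end Moments

theorem affiliation_nonuniform_rational_formulas_general
    (Q : ℕ) (π : Fin Q → ℝ)
    (hπ : ∀ q, π q ∈ Set.Ioo (0 : ℝ) 1) (hπsum : ∑ q, π q = 1)
    (α β : ℝ)
    (s₂ s₃ m₁ m₂ m₃ : ℝ)
    (hs₂ : s₂ = ∑ q, π q ^ 2) (hs₃ : s₃ = ∑ q, π q ^ 3)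
    (hm₁ : m₁ = s₂ * α + (1 - s₂) * β)
    (hm₂ : m₂ = s₃ * α ^ 2 + 2 * (s₂ - s₃) * α * β + (1 - 2 * s₂ + s₃) * β ^ 2)
    (hm₃ : m₃ = s₃ * α ^ 3 + 3 * (s₂ - s₃) * α * β ^ 2 + (1 - 3 * s₂ + 2 * s₃) * β ^ 3)
    (hne : m₂ ≠ m₁ ^ 2) :
    (¬ ∀ q, π q = 1 / (Q : ℝ)) ∧
    m₁ ^ 2 - m₂ ≠ 0 ∧
    2 * s₂ ^ 3 - 3 * s₃ * s₂ + s₃ ≠ 0 ∧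
    β = ((s₃ - s₂ * s₃) * m₁ ^ 3 + (s₂ ^ 3 - s₃) * m₂ * m₁ + (s₃ * s₂ - s₂ ^ 3) * m₃) /
          ((m₁ ^ 2 - m₂) * (2 * s₂ ^ 3 - 3 * s₃ * s₂ + s₃)) ∧
    α = (m₁ + (s₂ - 1) * β) / s₂ := by
  have : Nonempty (Fin Q) :=
    univ_nonempty_iff.1 (nonempty_of_sum_ne_zero (hπsum ▸ one_ne_zero))
  have hs₂_pos : 0 < s₂ := hs₂ ▸ sum_pow_pos (fun q => (hπ q).1) 2
  have hs₂_lt : s₂ < 1 := hs₂ ▸ hπsum ▸ sum_sq_lt_sum hπ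
  have hs₃_pos : 0 < s₃ := hs₃ ▸ sum_pow_pos (fun q => (hπ q).1) 3
  have hs₃_le : s₃ ≤ √s₂ * s₂ := hs₂ ▸ hs₃ ▸ sum_pow_three_le_sqrt_mul_sum_sq π
  have hE := affiliation_denominator_pos hs₂_pos hs₂_lt hs₃_pos hs₃_le
  have hs₃_ne : s₃ ≠ s₂ ^ 2 := fun h => hne <| sub_eq_zero.1 <| by
    rw [moment₂_sub_moment₁_sq hm₁ hm₂, h, sub_self, zero_mul]
  have hM : m₁ ^ 2 - m₂ ≠ 0 := sub_ne_zero.2 hne.symm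
  refine ⟨fun huni => hs₃_ne ?_, hM, hE.ne', beta_eq_of_moments hm₁ hm₂ hm₃ hM hE.ne',
    alpha_eq_of_moment₁ hm₁ hs₂_pos.ne'⟩
  rw [hs₂, hs₃]
  exact sum_pow_three_eq_sq_sum_sq_of_forall_eq huni hπsum

/-- For the binary affiliation model with `Q` groups: if `m₂ ≠ m₁²` then the group
proportions are non-uniform, the denominators `m₁² - m₂` and `2s₂³ - 3s₃s₂ + s₃` are
non-zero, and `α, β` are recovered by the stated rational formulas. -/
theorem affiliation_nonuniform_rational_formulas
    (Q : ℕ) (hQ : 2 ≤ Q) (π : Fin Q → ℝ)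
    (hπ : ∀ q, π q ∈ Set.Ioo (0 : ℝ) 1) (hπsum : ∑ q, π q = 1)
    (α β : ℝ) (hα : α ∈ Set.Icc (0 : ℝ) 1) (hβ : β ∈ Set.Icc (0 : ℝ) 1)
    (s₂ s₃ m₁ m₂ m₃ : ℝ)
    (hs₂ : s₂ = ∑ q, π q ^ 2) (hs₃ : s₃ = ∑ q, π q ^ 3)
    (hm₁ : m₁ = s₂ * α + (1 - s₂) * β)
    (hm₂ : m₂ = s₃ * α ^ 2 + 2 * (s₂ - s₃) * α * β + (1 - 2 * s₂ + s₃) * β ^ 2)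
    (hm₃ : m₃ = s₃ * α ^ 3 + 3 * (s₂ - s₃) * α * β ^ 2 + (1 - 3 * s₂ + 2 * s₃) * β ^ 3)
    (hne : m₂ ≠ m₁ ^ 2) :
    (¬ ∀ q, π q = 1 / (Q : ℝ)) ∧
    m₁ ^ 2 - m₂ ≠ 0 ∧
    2 * s₂ ^ 3 - 3 * s₃ * s₂ + s₃ ≠ 0 ∧
    β = ((s₃ - s₂ * s₃) * m₁ ^ 3 + (s₂ ^ 3 - s₃) * m₂ * m₁ + (s₃ * s₂ - s₂ ^ 3) * m₃) /
          ((m₁ ^ 2 - m₂) * (2 * s₂ ^ 3 - 3 * s₃ * s₂ + s₃)) ∧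
    α = (m₁ + (s₂ - 1) * β) / s₂ :=
  affiliation_nonuniform_rational_formulas_general Q π hπ hπsum α β s₂ s₃ m₁ m₂ m₃ hs₂ hs₃ hm₁ hm₂
    hm₃ hne
end

section
/- Let Q ≥ 2, let π_1,…,π_Q ∈ (0,1) with Σ_q π_q = 1, set s_k = Σ_{q=1}^Q π_q^k, let α, β ∈ [0,1] with α ≠ β, and define m_1 = s_2 α + (1−s_2) β, m_2 = s_3 α² + 2(s_2−s_3) α β + (1−2 s_2+s_3) β², m_3 = s_3 α³ + 3(s_2−s_3) α β² + (1−3 s_2+2 s_3) β³. If m_2 = m_1², then π is uniform (π_q = 1/Q for all q), and the parameters are recovered by (β − m_1)³ = (m_1³ − m_3)/(Q − 1) (so β = m_1 + ((m_1³−m_3)/(Q−1))^{1/3} with the real cube root) and α = Q m_1 + (1 − Q) β. -/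
open Finset

/-! The defect `m₂ - m₁²` factors as `(s₃ - s₂²) (α - β)²`, and `s₃ - s₂²` is the variance
`∑ π_q (π_q - s₂)²` of the group proportions weighted by themselves. So `m₂ = m₁²` with `α ≠ β`
forces every `π_q` to equal `s₂`, hence `π_q = 1/Q`; the recovery formulas are then identities
in `α`, `β` and `Q`. -/

section Weights

variable {ι : Type*} [Fintype ι] (w : ι → ℝ)

theorem sum_mul_sub_sum_sq_sq (hw : ∑ i, w i = 1) :
    ∑ i, w i * (w i - ∑ j, w j ^ 2) ^ 2 = ∑ i, w i ^ 3 - (∑ i, w i ^ 2) ^ 2 := by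
  set c := ∑ j, w j ^ 2
  calc ∑ i, w i * (w i - c) ^ 2 = ∑ i, (w i ^ 3 - 2 * c * w i ^ 2 + c ^ 2 * w i) :=
        sum_congr rfl fun i _ => by ring
    _ = ∑ i, w i ^ 3 - 2 * c * c + c ^ 2 * ∑ i, w i := by
        rw [sum_add_distrib, sum_sub_distrib, ← mul_sum, ← mul_sum]
    _ = ∑ i, w i ^ 3 - c ^ 2 := by rw [hw]; ring

variable {w}

theorem eq_sum_sq_of_sum_cube_eq (hpos : ∀ i, 0 < w i) (hw : ∑ i, w i = 1)
    (h : ∑ i, w i ^ 3 = (∑ i, w i ^ 2) ^ 2) (i : ι) : w i = ∑ j, w j ^ 2 := by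
  have hzero : ∑ i, w i * (w i - ∑ j, w j ^ 2) ^ 2 = 0 := by
    rw [sum_mul_sub_sum_sq_sq w hw, h, sub_self]
  have hterm := (sum_eq_zero_iff_of_nonneg fun i _ => by have := hpos i; positivity).mp
    hzero i (mem_univ i)
  simpa [(hpos i).ne', sub_eq_zero] using hterm

theorem sum_sq_eq_inv_card_of_sum_cube_eq (hpos : ∀ i, 0 < w i) (hw : ∑ i, w i = 1)
    (h : ∑ i, w i ^ 3 = (∑ i, w i ^ 2) ^ 2) : ∑ i, w i ^ 2 = 1 / Fintype.card ι := by
  have hconst := eq_sum_sq_of_sum_cube_eq hpos hw h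
  refine eq_one_div_of_mul_eq_one_right ?_
  rw [← hw, sum_congr rfl fun j _ => hconst j, sum_const, card_univ, nsmul_eq_mul]

end Weights

theorem affiliation_m₂_sub_m₁_sq (s₂ s₃ α β : ℝ) :
    (s₃ * α ^ 2 + 2 * (s₂ - s₃) * α * β + (1 - 2 * s₂ + s₃) * β ^ 2)
      - (s₂ * α + (1 - s₂) * β) ^ 2 = (s₃ - s₂ ^ 2) * (α - β) ^ 2 := by
  ring

theorem affiliation_uniform_recovery_general
    (Q : ℕ) (hQ : 2 ≤ Q) (π : Fin Q → ℝ)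
    (hπ : ∀ q, π q ∈ Set.Ioo (0 : ℝ) 1) (hπsum : ∑ q, π q = 1)
    (α β : ℝ)
    (hαβ : α ≠ β)
    (s₂ s₃ m₁ m₂ m₃ : ℝ)
    (hs₂ : s₂ = ∑ q, π q ^ 2) (hs₃ : s₃ = ∑ q, π q ^ 3)
    (hm₁ : m₁ = s₂ * α + (1 - s₂) * β)
    (hm₂ : m₂ = s₃ * α ^ 2 + 2 * (s₂ - s₃) * α * β + (1 - 2 * s₂ + s₃) * β ^ 2)
    (hm₃ : m₃ = s₃ * α ^ 3 + 3 * (s₂ - s₃) * α * β ^ 2 + (1 - 3 * s₂ + 2 * s₃) * β ^ 3)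
    (heq : m₂ = m₁ ^ 2) :
    (∀ q, π q = 1 / (Q : ℝ)) ∧
    (β - m₁) ^ 3 = (m₁ ^ 3 - m₃) / ((Q : ℝ) - 1) ∧
    α = (Q : ℝ) * m₁ + (1 - (Q : ℝ)) * β := by
  have hs₃_eq : s₃ = s₂ ^ 2 := by
    have hdefect := affiliation_m₂_sub_m₁_sq s₂ s₃ α β
    rw [← hm₂, ← hm₁, heq, sub_self, eq_comm, mul_eq_zero] at hdefect
    exact sub_eq_zero.mp (hdefect.resolve_right (pow_ne_zero 2 (sub_ne_zero.mpr hαβ)))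
  have hpos (q : Fin Q) : 0 < π q := (hπ q).1
  have hsums : ∑ q, π q ^ 3 = (∑ q, π q ^ 2) ^ 2 := hs₂ ▸ hs₃ ▸ hs₃_eq
  have hs₂Q : s₂ = 1 / Q := by
    simpa [hs₂] using sum_sq_eq_inv_card_of_sum_cube_eq hpos hπsum hsums
  have huniform (q : Fin Q) : π q = 1 / Q :=
    (eq_sum_sq_of_sum_cube_eq hpos hπsum hsums q).trans (hs₂ ▸ hs₂Q)
  have hQ1 : (Q : ℝ) - 1 ≠ 0 := by
    have : (2 : ℝ) ≤ Q := by exact_mod_cast hQ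
    linarith
  have hQ0 : (Q : ℝ) ≠ 0 := by positivity
  refine ⟨huniform, ?_, ?_⟩
  · rw [hm₃, hm₁, hs₃_eq, hs₂Q]
    field_simp
    ring
  · rw [hm₁, hs₂Q]
    field_simp
    ring

/-- For the binary affiliation model with `Q` groups and `α ≠ β`: if `m₂ = m₁²` then the
group proportions are uniform and the parameters are recovered by
`(β - m₁)³ = (m₁³ - m₃)/(Q - 1)` and `α = Q m₁ + (1 - Q) β`. -/
theorem affiliation_uniform_recovery
    (Q : ℕ) (hQ : 2 ≤ Q) (π : Fin Q → ℝ)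
    (hπ : ∀ q, π q ∈ Set.Ioo (0 : ℝ) 1) (hπsum : ∑ q, π q = 1)
    (α β : ℝ) (hα : α ∈ Set.Icc (0 : ℝ) 1) (hβ : β ∈ Set.Icc (0 : ℝ) 1)
    (hαβ : α ≠ β)
    (s₂ s₃ m₁ m₂ m₃ : ℝ)
    (hs₂ : s₂ = ∑ q, π q ^ 2) (hs₃ : s₃ = ∑ q, π q ^ 3)
    (hm₁ : m₁ = s₂ * α + (1 - s₂) * β)
    (hm₂ : m₂ = s₃ * α ^ 2 + 2 * (s₂ - s₃) * α * β + (1 - 2 * s₂ + s₃) * β ^ 2)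
    (hm₃ : m₃ = s₃ * α ^ 3 + 3 * (s₂ - s₃) * α * β ^ 2 + (1 - 3 * s₂ + 2 * s₃) * β ^ 3)
    (heq : m₂ = m₁ ^ 2) :
    (∀ q, π q = 1 / (Q : ℝ)) ∧
    (β - m₁) ^ 3 = (m₁ ^ 3 - m₃) / ((Q : ℝ) - 1) ∧
    α = (Q : ℝ) * m₁ + (1 - (Q : ℝ)) * β :=
  affiliation_uniform_recovery_general Q hQ π hπ hπsum α β hαβ s₂ s₃ m₁ m₂ m₃ hs₂ hs₃ hm₁ hm₂ hm₃
    heq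
end

section
/- Let Q ≥ 2 and fix known group proportions π_1,…,π_Q ∈ (0,1) with Σ_q π_q = 1; set s_k = Σ_{q=1}^Q π_q^k. Then the map from [0,1]² to ℝ³ sending (α, β) to the moment triple (m_1, m_2, m_3), where m_1 = s_2 α + (1−s_2) β, m_2 = s_3 α² + 2(s_2−s_3) α β + (1−2 s_2+s_3) β², m_3 = s_3 α³ + 3(s_2−s_3) α β² + (1−3 s_2+2 s_3) β³, is injective. That is, for fixed known π, both parameters α and β of the binary affiliation model are identifiable from the distribution of K_3. -/
open Finset

/-- The key positivity fact: for proportions `π` in `(0,1)` summing to `1`,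
the quantity `s₃ - 3 s₂ s₃ + 2 s₂ ^ 3` is strictly positive. -/
lemma affiliation_c_pos
    (Q : ℕ) (hQ : 2 ≤ Q) (π : Fin Q → ℝ)
    (hπ : ∀ q, π q ∈ Set.Ioo (0 : ℝ) 1) (hπsum : ∑ q, π q = 1)
    (s₂ s₃ : ℝ) (hs₂ : s₂ = ∑ q, π q ^ 2) (hs₃ : s₃ = ∑ q, π q ^ 3) :
    0 < s₃ - 3 * s₂ * s₃ + 2 * s₂ ^ 3 := by
  have hne : (Finset.univ : Finset (Fin Q)).Nonempty := by
    have : 0 < Q := by omega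
    exact Finset.univ_nonempty_iff.mpr ⟨⟨0, this⟩⟩
  obtain ⟨q0, -, hq0⟩ := Finset.exists_max_image Finset.univ π hne
  set M := π q0 with hM
  have hMpos : 0 < M := (hπ q0).1
  have hMlt : M < 1 := (hπ q0).2
  have hle : ∀ q, π q ≤ M := fun q => hq0 q (Finset.mem_univ q)
  -- s₂ > 0
  have hs2pos : 0 < s₂ := by
    rw [hs₂]
    exact Finset.sum_pos (fun q _ => pow_pos (hπ q).1 2) hne
  -- s₂ < 1
  have hs2lt : s₂ < 1 := by
    rw [hs₂, ← hπsum]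
    refine Finset.sum_lt_sum_of_nonempty hne fun q _ => ?_
    have h1 := (hπ q).1
    have h2 := (hπ q).2
    nlinarith
  -- M^2 ≤ s₂
  have hM2 : M ^ 2 ≤ s₂ := by
    rw [hs₂]
    exact Finset.single_le_sum (f := fun q => π q ^ 2)
      (fun q _ => sq_nonneg _) (Finset.mem_univ q0)
  -- s₂ ≤ M
  have hs2M : s₂ ≤ M := by
    calc s₂ = ∑ q, π q ^ 2 := hs₂
      _ ≤ ∑ q, M * π q := Finset.sum_le_sum fun q _ => by
          have := hle q; have := (hπ q).1; nlinarith
      _ = M := by rw [← Finset.mul_sum, hπsum, mul_one]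
  -- s₃ ≤ M * s₂
  have hs3M : s₃ ≤ M * s₂ := by
    calc s₃ = ∑ q, π q ^ 3 := hs₃
      _ ≤ ∑ q, M * π q ^ 2 := Finset.sum_le_sum fun q _ => by
          have := hle q; have := (hπ q).1; nlinarith
      _ = M * s₂ := by rw [← Finset.mul_sum, hs₂]
  -- s₂ ^ 2 ≤ s₃ (Cauchy–Schwarz via variance identity)
  have hVar : s₂ ^ 2 ≤ s₃ := by
    have h0 : (0 : ℝ) ≤ ∑ q, π q * (π q - s₂) ^ 2 :=
      Finset.sum_nonneg fun q _ => mul_nonneg (hπ q).1.le (sq_nonneg _)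
    have hexp : ∑ q, π q * (π q - s₂) ^ 2
        = (∑ q, π q ^ 3) - 2 * s₂ * (∑ q, π q ^ 2) + s₂ ^ 2 * (∑ q, π q) := by
      rw [Finset.mul_sum, Finset.mul_sum, ← Finset.sum_sub_distrib,
        ← Finset.sum_add_distrib]
      exact Finset.sum_congr rfl fun q _ => by ring
    rw [hexp, hπsum, ← hs₂, ← hs₃] at h0
    nlinarith
  -- finish: case analysis handled by nlinarith
  rcases le_or_gt s₂ (1 / 3) with h | h
  · have h1 : 0 ≤ (s₃ - s₂ ^ 2) * (1 - 3 * s₂) :=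
      mul_nonneg (by linarith) (by linarith)
    nlinarith [mul_pos (mul_pos hs2pos hs2pos) (sub_pos.mpr hs2lt)]
  · have ha : 0 ≤ (M * s₂ - s₃) * (3 * s₂ - 1) :=
      mul_nonneg (by linarith) (by linarith)
    rcases le_or_gt M (3 / 4) with hM34 | hM34
    · have hb : 0 ≤ 2 * s₂ * (s₂ - 3 * M / 4) ^ 2 :=
        mul_nonneg (by linarith) (sq_nonneg _)
      have hc2 : 0 < s₂ * (M * (1 - 9 * M / 8)) :=
        mul_pos hs2pos (mul_pos hMpos (by linarith))
      nlinarith [ha, hb, hc2]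
    · have hb : 0 ≤ s₂ * ((s₂ - M ^ 2) * (2 * s₂ + 2 * M ^ 2 - 3 * M)) := by
        have h2 : 0 ≤ 2 * s₂ + 2 * M ^ 2 - 3 * M := by nlinarith [hM2, hM34]
        exact mul_nonneg hs2pos.le (mul_nonneg (by linarith) h2)
      have hc2 : 0 < s₂ * (M * (1 - M) ^ 2 * (2 * M + 1)) :=
        mul_pos hs2pos (mul_pos (mul_pos hMpos (pow_pos (by linarith) 2))
          (by linarith))
      nlinarith [ha, hb, hc2]

/-- For fixed and known group proportions `π`, the map `(α, β) ↦ (m₁, m₂, m₃)` sending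
the connectivity parameters of the binary affiliation model to the moments of the
distribution of `K₃` is injective on `[0,1]²`. -/
theorem affiliation_known_pi_identifiable
    (Q : ℕ) (hQ : 2 ≤ Q) (π : Fin Q → ℝ)
    (hπ : ∀ q, π q ∈ Set.Ioo (0 : ℝ) 1) (hπsum : ∑ q, π q = 1)
    (s₂ s₃ : ℝ) (hs₂ : s₂ = ∑ q, π q ^ 2) (hs₃ : s₃ = ∑ q, π q ^ 3) :
    ∀ α β α' β' : ℝ,
      α ∈ Set.Icc (0 : ℝ) 1 → β ∈ Set.Icc (0 : ℝ) 1 →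
      α' ∈ Set.Icc (0 : ℝ) 1 → β' ∈ Set.Icc (0 : ℝ) 1 →
      s₂ * α + (1 - s₂) * β = s₂ * α' + (1 - s₂) * β' →
      s₃ * α ^ 2 + 2 * (s₂ - s₃) * α * β + (1 - 2 * s₂ + s₃) * β ^ 2
        = s₃ * α' ^ 2 + 2 * (s₂ - s₃) * α' * β' + (1 - 2 * s₂ + s₃) * β' ^ 2 →
      s₃ * α ^ 3 + 3 * (s₂ - s₃) * α * β ^ 2 + (1 - 3 * s₂ + 2 * s₃) * β ^ 3
        = s₃ * α' ^ 3 + 3 * (s₂ - s₃) * α' * β' ^ 2 + (1 - 3 * s₂ + 2 * s₃) * β' ^ 3 →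
      α = α' ∧ β = β' := by
  intro α β α' β' hα hβ hα' hβ' hm1 hm2 hm3
  have hc : 0 < s₃ - 3 * s₂ * s₃ + 2 * s₂ ^ 3 :=
    affiliation_c_pos Q hQ π hπ hπsum s₂ s₃ hs₂ hs₃
  set c : ℝ := s₃ - 3 * s₂ * s₃ + 2 * s₂ ^ 3 with hcdef
  -- the combination m₃ + 2 m₁³ − 3 m₁ m₂ equals c (α − β)³
  have e3 : c * (α - β) ^ 3 = c * (α' - β') ^ 3 := by
    linear_combination hm3
      + (2 * ((s₂ * α + (1 - s₂) * β) ^ 2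
          + (s₂ * α + (1 - s₂) * β) * (s₂ * α' + (1 - s₂) * β')
          + (s₂ * α' + (1 - s₂) * β') ^ 2)
        - 3 * (s₃ * α' ^ 2 + 2 * (s₂ - s₃) * α' * β'
            + (1 - 2 * s₂ + s₃) * β' ^ 2)) * hm1
      - 3 * (s₂ * α + (1 - s₂) * β) * hm2
  have hcube : (α - β) ^ 3 = (α' - β') ^ 3 := mul_left_cancel₀ (ne_of_gt hc) e3
  have hu : α - β = α' - β' :=
    Odd.strictMono_pow (R := ℝ) ⟨1, by norm_num⟩ |>.injective hcube
  have hb : β = β' := by linear_combination hm1 - s₂ * hu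
  exact ⟨by linarith [hu, hb], hb⟩
end

section
/- Let Q ≥ 1, let π_1,…,π_Q ∈ (0,1] with Σ_q π_q = 1 (all group proportions strictly positive), set s_k = Σ_{q=1}^Q π_q^k, let α, β ∈ [0,1] with α ≠ β, and define m_1 = s_2 α + (1−s_2) β, m_2 = s_3 α² + 2(s_2−s_3) α β + (1−2 s_2+s_3) β², m_3 = s_3 α³ + 3(s_2−s_3) α β² + (1−3 s_2+2 s_3) β³. Then 2 m_1³ − 3 m_1 m_2 + m_3 = 0 if, and only if, Q = 1. (Indeed 2 m_1³ − 3 m_1 m_2 + m_3 = (α−β)³ (2 s_2³ − 3 s_2 s_3 + s_3).) -/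
/-!
The identity `2m₁³ - 3m₁m₂ + m₃ = (α - β)³ (2s₂³ - 3s₂s₃ + s₃)` is a polynomial computation, so
everything rests on the sign of `2s₂³ - 3s₂s₃ + s₃`. For one group `s₂ = s₃ = 1` and it vanishes.
Otherwise every `π q < 1`, hence `s₂ < 1`; and since `π q ≤ √s₂` for every `q`, also
`s₃ ≤ √s₂ · s₂`. The expression is affine in `s₃`, positive at `s₃ = 0`, and at `s₃ = t³`
(`t = √s₂`) equals `t³ (1 - t)² (1 + 2t) > 0`.
-/

open Finset

lemma sum_pow_three_le_sqrt_sum_sq_mul_sum_sq {ι : Type*} (s : Finset ι) (f : ι → ℝ) :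
    ∑ i ∈ s, f i ^ 3 ≤ √(∑ i ∈ s, f i ^ 2) * ∑ i ∈ s, f i ^ 2 := by
  rw [mul_sum]
  refine sum_le_sum fun i hi => ?_
  have hfi : f i ≤ √(∑ j ∈ s, f j ^ 2) :=
    Real.le_sqrt_of_sq_le (single_le_sum (fun j _ => sq_nonneg (f j)) hi)
  calc f i ^ 3 = f i * f i ^ 2 := by ring
    _ ≤ √(∑ j ∈ s, f j ^ 2) * f i ^ 2 := mul_le_mul_of_nonneg_right hfi (sq_nonneg _)

lemma lt_one_of_sum_eq_one {ι : Type*} [Fintype ι] {π : ι → ℝ} (hπ : ∀ i, 0 < π i)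
    (hsum : ∑ i, π i = 1) (hcard : Fintype.card ι ≠ 1) (i : ι) : π i < 1 := by
  have hlt : 1 < Fintype.card ι := by
    have := Fintype.card_pos_iff.2 ⟨i⟩
    omega
  obtain ⟨j, hji⟩ := Fintype.exists_ne_of_one_lt_card hlt i
  rw [← hsum]
  exact single_lt_sum hji (mem_univ i) (mem_univ j) (hπ j) fun k _ _ => (hπ k).le

lemma sum_sq_lt_one {ι : Type*} [Fintype ι] {π : ι → ℝ} (hπ : ∀ i, 0 < π i)
    (hπ_lt : ∀ i, π i < 1) (hsum : ∑ i, π i = 1) : ∑ i, π i ^ 2 < 1 := by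
  have hne : (univ : Finset ι).Nonempty := nonempty_of_sum_ne_zero (hsum ▸ one_ne_zero)
  rw [← hsum]
  exact sum_lt_sum_of_nonempty hne fun i _ => by nlinarith [hπ i, hπ_lt i]

lemma two_mul_pow_three_sub_three_mul_add_pos {s₂ s₃ : ℝ} (h₀ : 0 < s₂) (h₁ : s₂ < 1)
    (hs₃ : 0 ≤ s₃) (hs₃_le : s₃ ≤ √s₂ * s₂) : 0 < 2 * s₂ ^ 3 - 3 * s₂ * s₃ + s₃ := by
  set t := √s₂
  have ht : 0 < t := Real.sqrt_pos.2 h₀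
  have hts : t ^ 2 = s₂ := Real.sq_sqrt h₀.le
  have ht₁ : t < 1 := by nlinarith
  rw [← hts] at hs₃_le ⊢
  rcases le_or_gt (3 * t ^ 2) 1 with hsmall | hlarge
  · nlinarith [pow_pos ht 6]
  · have hendpoint : 0 < t ^ 3 * ((1 - t) ^ 2 * (1 + 2 * t)) := by positivity
    nlinarith [mul_nonneg (sub_nonneg.2 hs₃_le) (sub_nonneg.2 hlarge.le)]

lemma affiliation_factor_pos {ι : Type*} [Fintype ι] {π : ι → ℝ} (hπ : ∀ i, 0 < π i)
    (hsum : ∑ i, π i = 1) (hcard : Fintype.card ι ≠ 1) :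
    0 < 2 * (∑ i, π i ^ 2) ^ 3 - 3 * (∑ i, π i ^ 2) * (∑ i, π i ^ 3) + ∑ i, π i ^ 3 := by
  have hne : (univ : Finset ι).Nonempty := nonempty_of_sum_ne_zero (hsum ▸ one_ne_zero)
  refine two_mul_pow_three_sub_three_mul_add_pos ?_ ?_ ?_ ?_
  · exact sum_pos (fun i _ => pow_pos (hπ i) 2) hne
  · exact sum_sq_lt_one hπ (lt_one_of_sum_eq_one hπ hsum hcard) hsum
  · exact sum_nonneg fun i _ => (pow_pos (hπ i) 3).le
  · exact sum_pow_three_le_sqrt_sum_sq_mul_sum_sq univ π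

theorem affiliation_detect_ER_general
    (Q : ℕ) (π : Fin Q → ℝ)
    (hπ : ∀ q, π q ∈ Set.Ioc (0 : ℝ) 1) (hπsum : ∑ q, π q = 1)
    (α β : ℝ)
    (hαβ : α ≠ β)
    (s₂ s₃ m₁ m₂ m₃ : ℝ)
    (hs₂ : s₂ = ∑ q, π q ^ 2) (hs₃ : s₃ = ∑ q, π q ^ 3)
    (hm₁ : m₁ = s₂ * α + (1 - s₂) * β)
    (hm₂ : m₂ = s₃ * α ^ 2 + 2 * (s₂ - s₃) * α * β + (1 - 2 * s₂ + s₃) * β ^ 2)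
    (hm₃ : m₃ = s₃ * α ^ 3 + 3 * (s₂ - s₃) * α * β ^ 2 + (1 - 3 * s₂ + 2 * s₃) * β ^ 3) :
    (2 * m₁ ^ 3 - 3 * m₁ * m₂ + m₃ = (α - β) ^ 3 * (2 * s₂ ^ 3 - 3 * s₂ * s₃ + s₃)) ∧
    (2 * m₁ ^ 3 - 3 * m₁ * m₂ + m₃ = 0 ↔ Q = 1) := by
  have hfactor : 2 * m₁ ^ 3 - 3 * m₁ * m₂ + m₃ = (α - β) ^ 3 * (2 * s₂ ^ 3 - 3 * s₂ * s₃ + s₃) := by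
    subst hm₁ hm₂ hm₃
    ring
  refine ⟨hfactor, ?_⟩
  rw [hfactor, mul_eq_zero, or_iff_right (pow_ne_zero 3 (sub_ne_zero.2 hαβ))]
  constructor
  · intro hzero
    by_contra hQ
    have hpos := affiliation_factor_pos (fun q => (hπ q).1) hπsum (by simpa using hQ)
    rw [← hs₂, ← hs₃] at hpos
    exact hpos.ne' hzero
  · rintro rfl
    have hπ₀ : π 0 = 1 := by simpa using hπsum
    norm_num [hs₂, hs₃, hπ₀]

/-- For the binary affiliation model with `Q ≥ 1` groups, all proportions positive and
`α ≠ β`, the moment polynomial `2m₁³ - 3m₁m₂ + m₃` vanishes if, and only if, `Q = 1`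
(the Erdős–Rényi case); indeed it factors as `(α-β)³(2s₂³ - 3s₂s₃ + s₃)`. -/
theorem affiliation_detect_ER
    (Q : ℕ) (hQ : 1 ≤ Q) (π : Fin Q → ℝ)
    (hπ : ∀ q, π q ∈ Set.Ioc (0 : ℝ) 1) (hπsum : ∑ q, π q = 1)
    (α β : ℝ) (hα : α ∈ Set.Icc (0 : ℝ) 1) (hβ : β ∈ Set.Icc (0 : ℝ) 1)
    (hαβ : α ≠ β)
    (s₂ s₃ m₁ m₂ m₃ : ℝ)
    (hs₂ : s₂ = ∑ q, π q ^ 2) (hs₃ : s₃ = ∑ q, π q ^ 3)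
    (hm₁ : m₁ = s₂ * α + (1 - s₂) * β)
    (hm₂ : m₂ = s₃ * α ^ 2 + 2 * (s₂ - s₃) * α * β + (1 - 2 * s₂ + s₃) * β ^ 2)
    (hm₃ : m₃ = s₃ * α ^ 3 + 3 * (s₂ - s₃) * α * β ^ 2 + (1 - 3 * s₂ + 2 * s₃) * β ^ 3) :
    (2 * m₁ ^ 3 - 3 * m₁ * m₂ + m₃ = (α - β) ^ 3 * (2 * s₂ ^ 3 - 3 * s₂ * s₃ + s₃)) ∧
    (2 * m₁ ^ 3 - 3 * m₁ * m₂ + m₃ = 0 ↔ Q = 1) :=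
  affiliation_detect_ER_general Q π hπ hπsum α β hαβ s₂ s₃ m₁ m₂ m₃ hs₂ hs₃ hm₁ hm₂ hm₃
end

section
/- Let Q ≥ 2 be an integer, let α, β ∈ [0,1] with α ≠ β, and set s_k = Q^{1−k} (uniform group proportions π_q = 1/Q). Define m_1 = s_2 α + (1−s_2) β, m_31 = s_3 α³ + 3(s_2−s_3) α β² + (1−3 s_2+2 s_3) β³, and m_41 = s_4 α⁴ + 2(s_2²+2 s_3−3 s_4) α² β² + 4(s_2−s_2²−2 s_3+2 s_4) α β³ + (1−4 s_2+2 s_2²+4 s_3−3 s_4) β⁴. Then m_1⁴ ≠ m_41 and Q = (−m_31⁴ − m_41³ − 3 m_41 m_1⁸ + 3 m_41² m_1⁴ − 6 m_1⁶ m_31² + 4 m_1⁹ m_31 + 4 m_1³ m_31³)/(m_1⁴ − m_41)³. In particular, the number of node groups Q in the binary affiliation model with uniform group priors is identified by the moments m_1, m_31, m_41. -/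
/-!
With uniform priors the centred moments factor as `A = m₃₁ - m₁³ = (Q - 1) (d / Q)³` and
`B = m₄₁ - m₁⁴ = (Q - 1) (d / Q)⁴`, where `d = α - β`, so `A⁴ / B³ = Q - 1`. The numerator of the
formula is exactly `-(A⁴ + B³)` and its denominator `-B³`, so the quotient is `1 + A⁴ / B³ = Q`.
-/

namespace AffiliationModel

def moment1 (s₂ α β : ℝ) : ℝ := s₂ * α + (1 - s₂) * β

def moment31 (s₂ s₃ α β : ℝ) : ℝ :=
  s₃ * α ^ 3 + 3 * (s₂ - s₃) * α * β ^ 2 + (1 - 3 * s₂ + 2 * s₃) * β ^ 3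

def moment41 (s₂ s₃ s₄ α β : ℝ) : ℝ :=
  s₄ * α ^ 4 + 2 * (s₂ ^ 2 + 2 * s₃ - 3 * s₄) * α ^ 2 * β ^ 2
    + 4 * (s₂ - s₂ ^ 2 - 2 * s₃ + 2 * s₄) * α * β ^ 3
    + (1 - 4 * s₂ + 2 * s₂ ^ 2 + 4 * s₃ - 3 * s₄) * β ^ 4

variable {Q : ℝ} (α β : ℝ)

theorem moment31_uniform_sub_moment1_pow (hQ : Q ≠ 0) :
    moment31 Q⁻¹ (Q ^ 2)⁻¹ α β - moment1 Q⁻¹ α β ^ 3 = (Q - 1) * ((α - β) / Q) ^ 3 := by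
  unfold moment31 moment1
  field_simp
  ring

theorem moment41_uniform_sub_moment1_pow (hQ : Q ≠ 0) :
    moment41 Q⁻¹ (Q ^ 2)⁻¹ (Q ^ 3)⁻¹ α β - moment1 Q⁻¹ α β ^ 4
      = (Q - 1) * ((α - β) / Q) ^ 4 := by
  unfold moment41 moment1
  field_simp
  ring

end AffiliationModel

theorem moment_formula_eq_one_add {m₁ m₃₁ m₄₁ : ℝ} (hB : m₄₁ - m₁ ^ 4 ≠ 0) :
    (-m₃₁ ^ 4 - m₄₁ ^ 3 - 3 * m₄₁ * m₁ ^ 8 + 3 * m₄₁ ^ 2 * m₁ ^ 4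
        - 6 * m₁ ^ 6 * m₃₁ ^ 2 + 4 * m₁ ^ 9 * m₃₁ + 4 * m₁ ^ 3 * m₃₁ ^ 3) / (m₁ ^ 4 - m₄₁) ^ 3
      = 1 + (m₃₁ - m₁ ^ 3) ^ 4 / (m₄₁ - m₁ ^ 4) ^ 3 := by
  rw [← neg_sub m₄₁]
  field_simp
  ring

theorem mul_pow_three_pow_four_div {c e : ℝ} (hc : c ≠ 0) (he : e ≠ 0) :
    (c * e ^ 3) ^ 4 / (c * e ^ 4) ^ 3 = c := by
  field_simp

open AffiliationModel in
theorem affiliation_uniform_Q_formula_general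
    (Q : ℕ) (hQ : 2 ≤ Q)
    (α β : ℝ)
    (hαβ : α ≠ β)
    (s₂ s₃ s₄ m₁ m₃₁ m₄₁ : ℝ)
    (hs₂ : s₂ = ((Q : ℝ))⁻¹) (hs₃ : s₃ = ((Q : ℝ) ^ 2)⁻¹) (hs₄ : s₄ = ((Q : ℝ) ^ 3)⁻¹)
    (hm₁ : m₁ = s₂ * α + (1 - s₂) * β)
    (hm₃₁ : m₃₁ = s₃ * α ^ 3 + 3 * (s₂ - s₃) * α * β ^ 2 + (1 - 3 * s₂ + 2 * s₃) * β ^ 3)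
    (hm₄₁ : m₄₁ = s₄ * α ^ 4 + 2 * (s₂ ^ 2 + 2 * s₃ - 3 * s₄) * α ^ 2 * β ^ 2
      + 4 * (s₂ - s₂ ^ 2 - 2 * s₃ + 2 * s₄) * α * β ^ 3
      + (1 - 4 * s₂ + 2 * s₂ ^ 2 + 4 * s₃ - 3 * s₄) * β ^ 4) :
    m₁ ^ 4 ≠ m₄₁ ∧
    (Q : ℝ) = (-m₃₁ ^ 4 - m₄₁ ^ 3 - 3 * m₄₁ * m₁ ^ 8 + 3 * m₄₁ ^ 2 * m₁ ^ 4
        - 6 * m₁ ^ 6 * m₃₁ ^ 2 + 4 * m₁ ^ 9 * m₃₁ + 4 * m₁ ^ 3 * m₃₁ ^ 3) /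
      (m₁ ^ 4 - m₄₁) ^ 3 := by
  have hQ₀ : (Q : ℝ) ≠ 0 := by positivity
  have hQ₁ : (Q : ℝ) - 1 ≠ 0 := sub_ne_zero.mpr (by exact_mod_cast (by omega : Q ≠ 1))
  have hd : (α - β) / Q ≠ 0 := div_ne_zero (sub_ne_zero.mpr hαβ) hQ₀
  obtain rfl : m₁ = moment1 s₂ α β := hm₁
  obtain rfl : m₃₁ = moment31 s₂ s₃ α β := hm₃₁
  obtain rfl : m₄₁ = moment41 s₂ s₃ s₄ α β := hm₄₁
  subst hs₂ hs₃ hs₄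
  have hB := moment41_uniform_sub_moment1_pow α β hQ₀
  have hB₀ : (Q - 1 : ℝ) * ((α - β) / Q) ^ 4 ≠ 0 := mul_ne_zero hQ₁ (pow_ne_zero 4 hd)
  refine ⟨fun h => hB₀ (by rw [← hB, h, sub_self]), ?_⟩
  rw [moment_formula_eq_one_add (hB ▸ hB₀), moment31_uniform_sub_moment1_pow α β hQ₀, hB,
    mul_pow_three_pow_four_div hQ₁ hd]
  ring

/-- In the binary affiliation model with uniform group priors (`s_k = Q^{1-k}`) and
`α ≠ β`, the number of groups `Q` is identified from the moments `m₁`, `m₃₁`, `m₄₁`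
by an explicit rational formula. -/
theorem affiliation_uniform_Q_formula
    (Q : ℕ) (hQ : 2 ≤ Q)
    (α β : ℝ) (hα : α ∈ Set.Icc (0 : ℝ) 1) (hβ : β ∈ Set.Icc (0 : ℝ) 1)
    (hαβ : α ≠ β)
    (s₂ s₃ s₄ m₁ m₃₁ m₄₁ : ℝ)
    (hs₂ : s₂ = ((Q : ℝ))⁻¹) (hs₃ : s₃ = ((Q : ℝ) ^ 2)⁻¹) (hs₄ : s₄ = ((Q : ℝ) ^ 3)⁻¹)
    (hm₁ : m₁ = s₂ * α + (1 - s₂) * β)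
    (hm₃₁ : m₃₁ = s₃ * α ^ 3 + 3 * (s₂ - s₃) * α * β ^ 2 + (1 - 3 * s₂ + 2 * s₃) * β ^ 3)
    (hm₄₁ : m₄₁ = s₄ * α ^ 4 + 2 * (s₂ ^ 2 + 2 * s₃ - 3 * s₄) * α ^ 2 * β ^ 2
      + 4 * (s₂ - s₂ ^ 2 - 2 * s₃ + 2 * s₄) * α * β ^ 3
      + (1 - 4 * s₂ + 2 * s₂ ^ 2 + 4 * s₃ - 3 * s₄) * β ^ 4) :
    m₁ ^ 4 ≠ m₄₁ ∧
    (Q : ℝ) = (-m₃₁ ^ 4 - m₄₁ ^ 3 - 3 * m₄₁ * m₁ ^ 8 + 3 * m₄₁ ^ 2 * m₁ ^ 4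
        - 6 * m₁ ^ 6 * m₃₁ ^ 2 + 4 * m₁ ^ 9 * m₃₁ + 4 * m₁ ^ 3 * m₃₁ ^ 3) /
      (m₁ ^ 4 - m₄₁) ^ 3 :=
  affiliation_uniform_Q_formula_general Q hQ α β hαβ s₂ s₃ s₄ m₁ m₃₁ m₄₁ hs₂ hs₃ hs₄ hm₁ hm₃₁ hm₄₁
end

section
/- Consider the binary affiliation random graph model with uniform group priors on n = 4 nodes: for an integer Q ≥ 2 and α, β ∈ [0,1], the distribution of K_4 is the probability mass function on x = (x_{ij})_{1≤i<j≤4} ∈ {0,1}^6 given by P_{Q,α,β}(x) = Σ_{z : {1,…,4}→{1,…,Q}} Q^{−4} · Π_{1≤i<j≤4} p(z(i),z(j))^{x_{ij}} (1−p(z(i),z(j)))^{1−x_{ij}}, where p(q,l) = α if q = l and β otherwise. If Q, Q′ ≥ 2 are integers, α ≠ β, α′ ≠ β′, and P_{Q,α,β} = P_{Q′,α′,β′} as functions on {0,1}^6, then Q = Q′, α = α′, and β = β′. That is, the parameters α, β and Q of the binary affiliation model with uniform group priors are identifiable from the distribution of K_4. -/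
/-!
Summing the likelihood against `∏_{e ∈ S} x_e` for a set `S` of edges gives, by conditional
independence of the edges, the probability `E[∏_{e ∈ S} p(z e.1, z e.2)]` that all edges of `S`
are present. For the single edge, the triangle and the square these are `m`, `m³ + (Q-1)u³` and
`m⁴ + (Q-1)u⁴`, where `u = (α - β)/Q` and `m = β + u`: the last two are normalised traces of powers
of the affinity matrix `(α - β) I + β J`, whose eigenvalues are `Q m` (once) and `Q u` (`Q - 1`
times). Equal distributions therefore give equal `m`, and then `(Q-1)u³` and `(Q-1)u⁴`
determine `u` and `Q`.
-/

open Finset Matrix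

theorem sum_pi_pi_prod_prod {ι ι' β R : Type*} [Fintype ι] [DecidableEq ι] [Fintype ι']
    [DecidableEq ι'] [Fintype β] [CommSemiring R] (h : ι → ι' → β → R) :
    ∑ x : ι → ι' → β, ∏ i, ∏ j, h i j (x i j) = ∏ i, ∏ j, ∑ b, h i j b := by
  simp only [Fintype.prod_sum]

theorem sum_fin_four_pi {κ M : Type*} [Fintype κ] [AddCommMonoid M] (f : (Fin 4 → κ) → M) :
    ∑ z, f z = ∑ a, ∑ b, ∑ c, ∑ d, f ![a, b, c, d] := by
  simp only [← (Fin.consEquiv fun _ => κ).sum_comp, Fintype.sum_prod_type, Fintype.sum_unique]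
  congr!

theorem trace_pow_three {n R : Type*} [Fintype n] [DecidableEq n] [CommSemiring R]
    (M : Matrix n n R) : trace (M ^ 3) = ∑ a, ∑ b, ∑ c, M a b * M b c * M c a := by
  simp only [pow_succ, pow_zero, Matrix.one_mul, trace, diag_apply, mul_apply, sum_mul]
  exact sum_congr rfl fun _ _ => sum_comm

theorem trace_pow_four {n R : Type*} [Fintype n] [DecidableEq n] [CommSemiring R]
    (M : Matrix n n R) :
    trace (M ^ 4) = ∑ a, ∑ b, ∑ c, ∑ d, M a b * M b c * M c d * M d a := by
  simp only [pow_succ, pow_zero, Matrix.one_mul, trace, diag_apply, mul_apply, sum_mul]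
  refine sum_congr rfl fun _ _ => ?_
  rw [sum_comm, sum_congr rfl fun _ _ => sum_comm, sum_comm]

theorem IsIdempotentElem.smul_one_sub_add_smul_pow {R A : Type*} [CommRing R] [Ring A]
    [Algebra R A] {e : A} (he : IsIdempotentElem e) (a b : R) (k : ℕ) :
    (a • (1 - e) + b • e) ^ k = a ^ k • (1 - e) + b ^ k • e := by
  induction k with
  | zero => simp
  | succ k ih =>
    have h₁ : (1 - e) * e = 0 := by rw [sub_mul, one_mul, he.eq, sub_self]
    have h₂ : e * (1 - e) = 0 := by rw [mul_sub, mul_one, he.eq, sub_self]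
    rw [pow_succ, ih]
    simp only [add_mul, mul_add, smul_mul_smul_comm, he.eq, he.one_sub.eq, h₁, h₂, smul_zero,
      add_zero, zero_add, pow_succ]

theorem eq_and_eq_of_mul_pow_three_eq_of_mul_pow_four_eq {K : Type*} [Field K] {c c' u u' : K}
    (hc : c ≠ 0) (hu : u ≠ 0) (h₃ : c * u ^ 3 = c' * u' ^ 3) (h₄ : c * u ^ 4 = c' * u' ^ 4) :
    c = c' ∧ u = u' := by
  have hcu : c * u ^ 3 ≠ 0 := mul_ne_zero hc (pow_ne_zero 3 hu)
  have hu' : u = u' := by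
    refine mul_left_cancel₀ hcu ?_
    calc c * u ^ 3 * u = c * u ^ 4 := by ring
      _ = c' * u' ^ 3 * u' := by rw [h₄]; ring
      _ = c * u ^ 3 * u' := by rw [h₃]
  subst hu'
  exact ⟨mul_right_cancel₀ (pow_ne_zero 3 hu) h₃, rfl⟩

section Model

variable {V κ : Type*} [Fintype V] [LinearOrder V] [DecidableEq κ]

def affinity (α β : ℝ) (a b : κ) : ℝ := if a = b then α else β

theorem affinity_comm (α β : ℝ) (a b : κ) : affinity α β a b = affinity α β b a := by
  simp only [affinity, eq_comm]

theorem sum_affinity [Fintype κ] (α β : ℝ) (a : κ) :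
    ∑ b, affinity α β a b = α - β + Fintype.card κ * β := by
  have h : ∀ b, affinity α β a b = (if a = b then α - β else 0) + β := by
    intro b
    by_cases hab : a = b <;> simp [affinity, hab]
  simp [h, sum_add_distrib]

def edgeLikelihood (α β : ℝ) (z : V → κ) (x : V → V → Bool) : ℝ :=
  ∏ i, ∏ j, if i < j then (if x i j then affinity α β (z i) (z j)
    else 1 - affinity α β (z i) (z j)) else 1

def affiliationMixture [Fintype κ] (π : (V → κ) → ℝ) (α β : ℝ) (x : V → V → Bool) : ℝ :=
  ∑ z, π z * edgeLikelihood α β z x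

def edgeMoment [Fintype κ] (π : (V → κ) → ℝ) (α β : ℝ) (S : Finset (V × V)) : ℝ :=
  ∑ z, π z * ∏ e ∈ S, affinity α β (z e.1) (z e.2)

/-- The factor `2` comes from the coordinates `x i j` with `¬ i < j`, which are summed over
although they do not enter the likelihood. -/
theorem sum_prod_mem_mul_edgeLikelihood (α β : ℝ) (z : V → κ) {S : Finset (V × V)}
    (hS : ∀ e ∈ S, e.1 < e.2) :
    ∑ x : V → V → Bool, (∏ e ∈ S, if x e.1 e.2 then 1 else 0) * edgeLikelihood α β z x
      = 2 ^ #{e : V × V | ¬ e.1 < e.2} * ∏ e ∈ S, affinity α β (z e.1) (z e.2) := by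
  set p : V → V → ℝ := fun i j => affinity α β (z i) (z j)
  let g : V → V → Bool → ℝ := fun i j b => (if (i, j) ∈ S then (if b then 1 else 0) else 1) *
    (if i < j then (if b then p i j else 1 - p i j) else 1)
  have hg : ∀ x : V → V → Bool,
      (∏ e ∈ S, if x e.1 e.2 then (1 : ℝ) else 0) * edgeLikelihood α β z x
        = ∏ i, ∏ j, g i j (x i j) := by
    intro x
    rw [edgeLikelihood, ← Fintype.prod_ite_mem, Fintype.prod_prod_type]
    simp only [g, p, ← prod_mul_distrib]
  have hg_sum : ∀ i j, ∑ b, g i j b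
      = (if (i, j) ∈ S then p i j else 1) * (if i < j then 1 else 2) := by
    intro i j
    by_cases hij : (i, j) ∈ S
    · simp [g, hij, hS _ hij]
    · by_cases hlt : i < j <;> simp [g, hij, hlt]
  rw [sum_congr rfl fun x _ => hg x, sum_pi_pi_prod_prod g]
  simp_rw [hg_sum, prod_mul_distrib]
  rw [← Fintype.prod_prod_type (fun e : V × V => if e ∈ S then p e.1 e.2 else 1),
    Fintype.prod_ite_mem, mul_comm,
    ← Fintype.prod_prod_type (fun e : V × V => if e.1 < e.2 then (1 : ℝ) else 2),
    prod_ite, prod_const_one, one_mul, prod_const]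

theorem sum_prod_mem_mul_affiliationMixture [Fintype κ] (π : (V → κ) → ℝ) (α β : ℝ)
    {S : Finset (V × V)} (hS : ∀ e ∈ S, e.1 < e.2) :
    ∑ x : V → V → Bool, (∏ e ∈ S, if x e.1 e.2 then 1 else 0) * affiliationMixture π α β x
      = 2 ^ #{e : V × V | ¬ e.1 < e.2} * edgeMoment π α β S := by
  simp only [affiliationMixture, edgeMoment, mul_sum]
  rw [sum_comm]
  refine sum_congr rfl fun z _ => ?_
  simp only [mul_left_comm _ (π z), ← mul_sum, sum_prod_mem_mul_edgeLikelihood α β z hS]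

theorem edgeMoment_eq_of_affiliationMixture_eq {κ' : Type*} [Fintype κ] [Fintype κ']
    [DecidableEq κ'] {π : (V → κ) → ℝ} {π' : (V → κ') → ℝ} {α β α' β' : ℝ}
    (h : ∀ x, affiliationMixture π α β x = affiliationMixture π' α' β' x)
    {S : Finset (V × V)} (hS : ∀ e ∈ S, e.1 < e.2) :
    edgeMoment π α β S = edgeMoment π' α' β' S := by
  have h' := sum_prod_mem_mul_affiliationMixture π α β hS
  simp_rw [h, sum_prod_mem_mul_affiliationMixture π' α' β' hS] at h'
  exact (mul_left_cancel₀ (pow_ne_zero _ two_ne_zero) h').symm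

end Model

section AffinityMatrix

variable {κ : Type*} [Fintype κ]

variable (κ) in
noncomputable def uniformAverage : Matrix κ κ ℝ := of fun _ _ => (Fintype.card κ : ℝ)⁻¹

variable [Nonempty κ]

theorem isIdempotentElem_uniformAverage : IsIdempotentElem (uniformAverage κ) := by
  ext a b
  simp [uniformAverage, mul_apply]

theorem trace_uniformAverage : trace (uniformAverage κ) = 1 := by
  simp [uniformAverage, trace]

variable [DecidableEq κ]

theorem of_affinity_eq (α β : ℝ) :
    of (affinity α β) = (α - β) • (1 - uniformAverage κ)
      + (α - β + Fintype.card κ * β) • uniformAverage κ := by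
  ext a b
  have : (Fintype.card κ : ℝ) ≠ 0 := by positivity
  by_cases hab : a = b <;> simp [affinity, uniformAverage, hab] <;> field_simp <;> ring

theorem trace_affinity_pow (α β : ℝ) (k : ℕ) :
    trace (of (affinity α β : κ → κ → ℝ) ^ k)
      = (Fintype.card κ - 1) * (α - β) ^ k + (α - β + Fintype.card κ * β) ^ k := by
  rw [of_affinity_eq, isIdempotentElem_uniformAverage.smul_one_sub_add_smul_pow,
    trace_add, trace_smul, trace_smul, trace_sub, trace_one, trace_uniformAverage]
  simp only [smul_eq_mul]
  ring

end AffinityMatrix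

section Uniform

noncomputable def uniformPrior (Q : ℕ) : (Fin 4 → Fin Q) → ℝ := fun _ => ((Q : ℝ) ^ 4)⁻¹

variable {Q : ℕ} [NeZero Q]

theorem edgeMoment_uniformPrior_edge (α β : ℝ) :
    edgeMoment (uniformPrior Q) α β {(0, 1)} = β + (α - β) / Q := by
  have hsum : edgeMoment (uniformPrior Q) α β {(0, 1)}
      = ((Q : ℝ) ^ 4)⁻¹ * (Q * (Q * (Q * (α - β + Q * β)))) := by
    simp [edgeMoment, uniformPrior, ← mul_sum, sum_fin_four_pi, sum_affinity]
  have hQ : (Q : ℝ) ≠ 0 := NeZero.ne _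
  rw [hsum]
  field_simp
  ring

theorem edgeMoment_uniformPrior_triangle (α β : ℝ) :
    edgeMoment (uniformPrior Q) α β {(0, 1), (1, 2), (0, 2)}
      = (β + (α - β) / Q) ^ 3 + (Q - 1) * ((α - β) / Q) ^ 3 := by
  have htrace : edgeMoment (uniformPrior Q) α β {(0, 1), (1, 2), (0, 2)}
      = ((Q : ℝ) ^ 4)⁻¹ * (Q * trace (of (affinity α β : Fin Q → Fin Q → ℝ) ^ 3)) := by
    rw [edgeMoment, trace_pow_three]
    simp only [of_apply, uniformPrior, ← mul_sum]
    congr 1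
    rw [sum_fin_four_pi]
    simp [prod_insert, mul_sum, affinity_comm α β, mul_comm, mul_left_comm]
  have hQ : (Q : ℝ) ≠ 0 := NeZero.ne _
  rw [htrace, trace_affinity_pow, Fintype.card_fin]
  field_simp
  ring

theorem edgeMoment_uniformPrior_square (α β : ℝ) :
    edgeMoment (uniformPrior Q) α β {(0, 1), (1, 2), (2, 3), (0, 3)}
      = (β + (α - β) / Q) ^ 4 + (Q - 1) * ((α - β) / Q) ^ 4 := by
  have htrace : edgeMoment (uniformPrior Q) α β {(0, 1), (1, 2), (2, 3), (0, 3)}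
      = ((Q : ℝ) ^ 4)⁻¹ * trace (of (affinity α β : Fin Q → Fin Q → ℝ) ^ 4) := by
    rw [edgeMoment, trace_pow_four]
    simp only [of_apply, uniformPrior, ← mul_sum]
    congr 1
    rw [sum_fin_four_pi]
    simp [prod_insert, affinity_comm α β, mul_comm, mul_left_comm]
  have hQ : (Q : ℝ) ≠ 0 := NeZero.ne _
  rw [htrace, trace_affinity_pow, Fintype.card_fin]
  field_simp
  ring

end Uniform

theorem affiliation_uniform_identifiable_from_K4_general
    (Q Q' : ℕ) (hQ : 2 ≤ Q) (hQ' : 2 ≤ Q')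
    (α β α' β' : ℝ)
    (hαβ : α ≠ β)
    (heq : ∀ x : Fin 4 → Fin 4 → Bool,
      (∑ z : Fin 4 → Fin Q, ((Q : ℝ) ^ 4)⁻¹ *
        ∏ i, ∏ j, (if i < j then
          (if x i j then (if z i = z j then α else β)
            else 1 - (if z i = z j then α else β)) else 1))
      = ∑ z : Fin 4 → Fin Q', ((Q' : ℝ) ^ 4)⁻¹ *
        ∏ i, ∏ j, (if i < j then
          (if x i j then (if z i = z j then α' else β')
            else 1 - (if z i = z j then α' else β')) else 1)) :
    Q = Q' ∧ α = α' ∧ β = β' := by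
  have hmix : ∀ x, affiliationMixture (uniformPrior Q) α β x
      = affiliationMixture (uniformPrior Q') α' β' x := heq
  have : NeZero Q := ⟨by omega⟩
  have : NeZero Q' := ⟨by omega⟩
  have hedge := edgeMoment_eq_of_affiliationMixture_eq hmix (S := {(0, 1)}) (by decide)
  have htri := edgeMoment_eq_of_affiliationMixture_eq hmix (S := {(0, 1), (1, 2), (0, 2)})
    (by decide)
  have hsq := edgeMoment_eq_of_affiliationMixture_eq hmix (S := {(0, 1), (1, 2), (2, 3), (0, 3)})
    (by decide)
  rw [edgeMoment_uniformPrior_edge, edgeMoment_uniformPrior_edge] at hedge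
  rw [edgeMoment_uniformPrior_triangle, edgeMoment_uniformPrior_triangle, hedge,
    add_right_inj] at htri
  rw [edgeMoment_uniformPrior_square, edgeMoment_uniformPrior_square, hedge,
    add_right_inj] at hsq
  have hQ₁ : (Q : ℝ) - 1 ≠ 0 := by
    have : (2 : ℝ) ≤ Q := by exact_mod_cast hQ
    linarith
  have hu : (α - β) / Q ≠ 0 := div_ne_zero (sub_ne_zero.2 hαβ) (NeZero.ne _)
  obtain ⟨hQQ', hu'⟩ := eq_and_eq_of_mul_pow_three_eq_of_mul_pow_four_eq hQ₁ hu htri hsq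
  obtain rfl : Q = Q' := by exact_mod_cast sub_left_inj.mp hQQ'
  obtain rfl : β = β' := by linarith
  refine ⟨rfl, ?_, rfl⟩
  linarith [(div_left_inj' (NeZero.ne (Q : ℝ))).mp hu']

/-- Identifiability of the parameters `Q`, `α`, `β` of the binary affiliation random
graph model with uniform group priors from the distribution of `K₄`. -/
theorem affiliation_uniform_identifiable_from_K4
    (Q Q' : ℕ) (hQ : 2 ≤ Q) (hQ' : 2 ≤ Q')
    (α β α' β' : ℝ)
    (hα : α ∈ Set.Icc (0 : ℝ) 1) (hβ : β ∈ Set.Icc (0 : ℝ) 1)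
    (hα' : α' ∈ Set.Icc (0 : ℝ) 1) (hβ' : β' ∈ Set.Icc (0 : ℝ) 1)
    (hαβ : α ≠ β) (hαβ' : α' ≠ β')
    (heq : ∀ x : Fin 4 → Fin 4 → Bool,
      (∑ z : Fin 4 → Fin Q, ((Q : ℝ) ^ 4)⁻¹ *
        ∏ i, ∏ j, (if i < j then
          (if x i j then (if z i = z j then α else β)
            else 1 - (if z i = z j then α else β)) else 1))
      = ∑ z : Fin 4 → Fin Q', ((Q' : ℝ) ^ 4)⁻¹ *
        ∏ i, ∏ j, (if i < j then
          (if x i j then (if z i = z j then α' else β')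
            else 1 - (if z i = z j then α' else β')) else 1)) :
    Q = Q' ∧ α = α' ∧ β = β' :=
  affiliation_uniform_identifiable_from_K4_general Q Q' hQ hQ' α β α' β' hαβ heq
end

section
/- Let Θ ⊆ ℝ^p and let F : Θ → (probability measures on ℝ) be a family such that (i) F(θ)({0}) = 0 for all θ ∈ Θ, and (ii) finite mixtures from the family have identifiable parameters: for every m ≥ 1, nonnegative weights (α_i), (α′_i) and parameters (θ_i), (θ′_i), the equality Σ_{i=1}^m α_i F(θ_i) = Σ_{i=1}^m α′_i F(θ′_i) (as measures on ℝ) implies Σ_{i=1}^m α_i δ_{θ_i} = Σ_{i=1}^m α′_i δ_{θ′_i}. Let Q ≥ 1 and consider two parameter sets (π, p, θ) and (π′, p′, θ′) of the parametric weighted random graph mixture model, each satisfying: π_q ∈ (0,1) with Σ_q π_q = 1, symmetric p_{ql} ∈ (0,1], symmetric θ_{ql} ∈ Θ with the Q(Q+1)/2 values (θ_{ql})_{1≤q≤l≤Q} pairwise distinct (and likewise for the primed set). If the two induced distributions of K_3, namely the measures Σ_{q,l,m=1}^Q π_q π_l π_m · μ_{ql} ⊗ μ_{qm} ⊗ μ_{lm}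 on ℝ³ with μ_{ql} = (1−p_{ql}) δ_0 + p_{ql} F(θ_{ql}), coincide, then there is a permutation σ of {1,…,Q} such that π′_q = π_{σ(q)}, p′_{ql} = p_{σ(q)σ(l)}, and θ′_{ql} = θ_{σ(q)σ(l)} for all q, l. -/
/-!
Taking `C = ℝ`, the law of `K₃` yields the joint law `∑_q π_q M_q ⊗ M_q` of `(X₁₂, X₁₃)`, where
`M_q` is the law of an edge out of a node of class `q`. Off the atom at `0`, the measure
`A ↦ P(X₁₂ ∈ A, X₁₃ ∈ B)` is a finite mixture of the `F(θ_{ql})`, so identifiability of such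
mixtures recovers, for every parameter value `t`, the measure
`B ↦ ∑_{θ_{ql} = t} π_q π_l p_{ql} M_q(B)`.

For `t = θ'_{qq}` the primed sum has the single term `(q, q)`, while the unprimed one runs over
`{(a, b), (b, a)}` for some `a, b`. If `a ≠ b`, then `M'_q` would be a combination of `M_a` and
`M_b`; identifiability would put all of rows `a` and `b` of `θ` into row `q` of `θ'`, which has
only `Q` distinct entries, so rows `a` and `b` would have the same entries, which is impossible
since `θ_{bb}` does not occur in row `a`. Hence `M'_q = M_{σ q}` with `θ'_{qq} = θ_{σq σq}`, and a
last use of identifiability on `M'_q = M_{σ q}` matches the rows of `θ` and the weights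
`π_l p_{ql}`.
-/

open Finset MeasureTheory

/-- The zero-inflated edge distribution `μ = (1-p)δ₀ + pF` of a weighted random graph
mixture model. -/
noncomputable def edgeMeasure (p : ℝ) (ν : MeasureTheory.Measure ℝ) :
    MeasureTheory.Measure ℝ :=
  ENNReal.ofReal (1 - p) • MeasureTheory.Measure.dirac 0 + ENNReal.ofReal p • ν

open scoped ENNReal

theorem Function.Injective.range_eq_of_range_subset {ι α : Type*} [Finite ι] {f g : ι → α}
    (hf : Function.Injective f) (hfg : Set.range f ⊆ Set.range g) :
    Set.range f = Set.range g := by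
  refine hfg.antisymm ?_
  choose k hk using fun i => hfg ⟨i, rfl⟩
  have hk_inj : Function.Injective k := fun i i' e => hf (by rw [← hk, ← hk, e])
  rintro _ ⟨j, rfl⟩
  obtain ⟨i, rfl⟩ := Finite.surjective_of_injective hk_inj j
  exact ⟨i, (hk i).symm⟩

namespace MeasureTheory.Measure

theorem eq_of_smul_eq_smul {α : Type*} [MeasurableSpace α] {μ ν : Measure α}
    [IsProbabilityMeasure μ] [IsProbabilityMeasure ν] {c c' : ℝ≥0∞} (h0 : c ≠ 0)
    (htop : c ≠ ∞) (h : c • μ = c' • ν) : c = c' ∧ μ = ν := by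
  obtain rfl : c = c' := by simpa using congrArg (· Set.univ) h
  exact ⟨rfl, Measure.ext fun s _ => (ENNReal.mul_right_inj h0 htop).1 (by
    simpa using congrArg (· s) h)⟩

theorem sum_smul_dirac_apply_singleton {P : Type*} [MeasurableSpace P]
    [MeasurableSingletonClass P] {ι : Type*} [Fintype ι] (c : ι → ℝ≥0∞) (τ : ι → P) (t : P)
    [DecidablePred (τ · = t)] :
    (∑ i, c i • dirac (τ i)) {t} = ∑ i with τ i = t, c i := by
  simp [finsetSum_apply, Set.indicator, Finset.sum_filter]

end MeasureTheory.Measure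

section Mixtures

variable {P : Type*} [MeasurableSpace P]

def MixturesIdentifiable (S : Set P) (F : P → Measure ℝ) : Prop :=
  ∀ (m : ℕ) (a a' : Fin m → ℝ) (t t' : Fin m → P),
    (∀ i, 0 ≤ a i) → (∀ i, 0 ≤ a' i) → (∀ i, t i ∈ S) → (∀ i, t' i ∈ S) →
    (∑ i, ENNReal.ofReal (a i) • F (t i) = ∑ i, ENNReal.ofReal (a' i) • F (t' i)) →
    (∑ i, ENNReal.ofReal (a i) • Measure.dirac (t i)
      = ∑ i, ENNReal.ofReal (a' i) • Measure.dirac (t' i))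

namespace MixturesIdentifiable

variable {S : Set P} {F : P → Measure ℝ}

theorem of_fintype (hF : MixturesIdentifiable S F) {ι : Type*} [Fintype ι] {a a' : ι → ℝ}
    {t t' : ι → P} (ha : ∀ i, 0 ≤ a i) (ha' : ∀ i, 0 ≤ a' i) (ht : ∀ i, t i ∈ S)
    (ht' : ∀ i, t' i ∈ S)
    (h : ∑ i, ENNReal.ofReal (a i) • F (t i) = ∑ i, ENNReal.ofReal (a' i) • F (t' i)) :
    ∑ i, ENNReal.ofReal (a i) • Measure.dirac (t i)
      = ∑ i, ENNReal.ofReal (a' i) • Measure.dirac (t' i) := by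
  let e := (Fintype.equivFin ι).symm
  have key := hF _ (a ∘ e) (a' ∘ e) (t ∘ e) (t' ∘ e) (fun _ => ha _) (fun _ => ha' _)
    (fun _ => ht _) (fun _ => ht' _)
    ((e.sum_comp fun i => ENNReal.ofReal (a i) • F (t i)).trans
      (h.trans (e.sum_comp fun i => ENNReal.ofReal (a' i) • F (t' i)).symm))
  exact (e.sum_comp fun i => ENNReal.ofReal (a i) • Measure.dirac (t i)).symm.trans
    (key.trans (e.sum_comp fun i => ENNReal.ofReal (a' i) • Measure.dirac (t' i)))

variable {ι κ : Type*} [Fintype ι] [Fintype κ] {c : ι → ℝ≥0∞} {c' : κ → ℝ≥0∞}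
  {τ : ι → P} {τ' : κ → P}

theorem sum_smul_dirac_eq (hF : MixturesIdentifiable S F) (hc : ∀ i, c i ≠ ∞)
    (hc' : ∀ j, c' j ≠ ∞) (hτ : ∀ i, τ i ∈ S) (hτ' : ∀ j, τ' j ∈ S)
    (h : ∑ i, c i • F (τ i) = ∑ j, c' j • F (τ' j)) :
    ∑ i, c i • Measure.dirac (τ i) = ∑ j, c' j • Measure.dirac (τ' j) := by
  have hpad := hF.of_fintype (a := Sum.elim (fun i => (c i).toReal) 0)
    (a' := Sum.elim 0 (fun j => (c' j).toReal)) (t := Sum.elim τ τ') (t' := Sum.elim τ τ')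
    (by simp) (by simp) (by simp [hτ, hτ']) (by simp [hτ, hτ'])
    (by simpa [Fintype.sum_sum_type, ENNReal.ofReal_toReal, hc, hc'] using h)
  simpa [Fintype.sum_sum_type, ENNReal.ofReal_toReal, hc, hc'] using hpad

theorem sum_filter_eq [MeasurableSingletonClass P] (hF : MixturesIdentifiable S F)
    (hc : ∀ i, c i ≠ ∞) (hc' : ∀ j, c' j ≠ ∞) (hτ : ∀ i, τ i ∈ S) (hτ' : ∀ j, τ' j ∈ S)
    (h : ∑ i, c i • F (τ i) = ∑ j, c' j • F (τ' j)) (t : P) [DecidablePred (τ · = t)]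
    [DecidablePred (τ' · = t)] :
    ∑ i with τ i = t, c i = ∑ j with τ' j = t, c' j := by
  rw [← Measure.sum_smul_dirac_apply_singleton, ← Measure.sum_smul_dirac_apply_singleton,
    hF.sum_smul_dirac_eq hc hc' hτ hτ' h]

theorem exists_eq_of_ne_zero [MeasurableSingletonClass P] (hF : MixturesIdentifiable S F)
    (hc : ∀ i, c i ≠ ∞) (hc' : ∀ j, c' j ≠ ∞) (hτ : ∀ i, τ i ∈ S) (hτ' : ∀ j, τ' j ∈ S)
    (h : ∑ i, c i • F (τ i) = ∑ j, c' j • F (τ' j)) {i : ι} (hi : c i ≠ 0) :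
    ∃ j, τ' j = τ i := by
  classical
  have hpos : ∑ j with τ' j = τ i, c' j ≠ 0 := by
    rw [← hF.sum_filter_eq hc hc' hτ hτ' h]
    exact ne_zero_of_lt (lt_of_lt_of_le (pos_iff_ne_zero.2 hi)
      (Finset.single_le_sum (fun _ _ => zero_le) (by simp)))
  obtain ⟨j, hj, -⟩ := Finset.exists_ne_zero_of_sum_ne_zero hpos
  exact ⟨j, (Finset.mem_filter.1 hj).2⟩

end MixturesIdentifiable

end Mixtures

section SymmDistinct

variable {α : Type*} {Q : ℕ} {θ : Fin Q → Fin Q → α}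

theorem apply_eq_apply_iff_of_symm (hsym : ∀ q l, θ q l = θ l q)
    (hinj : ∀ q l q' l', q ≤ l → q' ≤ l' → θ q l = θ q' l' → q = q' ∧ l = l')
    {a b u v : Fin Q} : θ a b = θ u v ↔ (a = u ∧ b = v) ∨ (a = v ∧ b = u) := by
  refine ⟨fun h => ?_, ?_⟩
  · rcases le_total a b with hab | hab <;> rcases le_total u v with huv | huv
    · exact .inl (hinj a b u v hab huv h)
    · exact .inr (hinj a b v u hab huv (h.trans (hsym u v)))
    · exact .inr (hinj b a u v hab huv ((hsym b a).trans h)).symm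
    · exact .inl (hinj b a v u hab huv ((hsym b a).trans (h.trans (hsym u v)))).symm
  · rintro (⟨rfl, rfl⟩ | ⟨rfl, rfl⟩)
    exacts [rfl, hsym a b]

theorem injective_of_symm (hsym : ∀ q l, θ q l = θ l q)
    (hinj : ∀ q l q' l', q ≤ l → q' ≤ l' → θ q l = θ q' l' → q = q' ∧ l = l') (q : Fin Q) :
    Function.Injective (θ q) := fun l l' h => by
  rcases (apply_eq_apply_iff_of_symm hsym hinj).1 h with ⟨-, h⟩ | ⟨rfl, rfl⟩
  exacts [h, rfl]

theorem filter_apply_eq_apply [DecidableEq α] (hsym : ∀ q l, θ q l = θ l q)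
    (hinj : ∀ q l q' l', q ≤ l → q' ≤ l' → θ q l = θ q' l' → q = q' ∧ l = l') (a b : Fin Q) :
    ({x : Fin Q × Fin Q | θ x.1 x.2 = θ a b} : Finset _) = {(a, b), (b, a)} := by
  ext ⟨u, v⟩
  simp only [Finset.mem_filter, Finset.mem_univ, true_and, Finset.mem_insert,
    Finset.mem_singleton, Prod.mk.injEq, apply_eq_apply_iff_of_symm hsym hinj]

end SymmDistinct

theorem isProbabilityMeasure_edgeMeasure {p : ℝ} (hp0 : 0 ≤ p) (hp1 : p ≤ 1) (ν : Measure ℝ)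
    [IsProbabilityMeasure ν] : IsProbabilityMeasure (edgeMeasure p ν) :=
  ⟨by simp [edgeMeasure, ← ENNReal.ofReal_add, hp0, hp1]⟩

theorem edgeMeasure_restrict_compl_zero (p : ℝ) {ν : Measure ℝ} (hν : ν {0} = 0) :
    (edgeMeasure p ν).restrict {0}ᶜ = ENNReal.ofReal p • ν := by
  rw [edgeMeasure, Measure.restrict_add, Measure.restrict_smul, Measure.restrict_smul,
    restrict_dirac, if_neg (by simp),
    Measure.restrict_eq_self_of_ae_mem (s := {0}ᶜ) (compl_mem_ae_iff.2 hν), smul_zero, zero_add]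

section Model

variable {P : Type*} {Q : ℕ}

structure IsAdmissibleParam (Θ : Set P) (π : Fin Q → ℝ) (p : Fin Q → Fin Q → ℝ)
    (θ : Fin Q → Fin Q → P) : Prop where
  π_pos : ∀ q, 0 < π q
  sum_π : ∑ q, π q = 1
  p_pos : ∀ q l, 0 < p q l
  p_le_one : ∀ q l, p q l ≤ 1
  θ_mem : ∀ q l, θ q l ∈ Θ
  θ_symm : ∀ q l, θ q l = θ l q
  θ_inj : ∀ q l q' l', q ≤ l → q' ≤ l' → θ q l = θ q' l' → q = q' ∧ l = l'

/-- The law of `X₁₂` given `z(1) = q`. -/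
noncomputable def rowLaw (F : P → Measure ℝ) (π : Fin Q → ℝ) (p : Fin Q → Fin Q → ℝ)
    (θ : Fin Q → Fin Q → P) (q : Fin Q) : Measure ℝ :=
  ∑ l, ENNReal.ofReal (π l) • edgeMeasure (p q l) (F (θ q l))

/-- `P(X₁₂ ∈ A, X₁₃ ∈ B, X₂₃ ∈ C)`. -/
noncomputable def k3Mass (F : P → Measure ℝ) (π : Fin Q → ℝ) (p : Fin Q → Fin Q → ℝ)
    (θ : Fin Q → Fin Q → P) (A B C : Set ℝ) : ℝ≥0∞ :=
  ∑ q : Fin Q, ∑ l : Fin Q, ∑ r : Fin Q,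
    ENNReal.ofReal (π q * π l * π r) *
      (edgeMeasure (p q l) (F (θ q l)) A *
        (edgeMeasure (p q r) (F (θ q r)) B * edgeMeasure (p l r) (F (θ l r)) C))

/-- `fiberLaw F π p θ t B` is the probability that `X₁₂` is drawn from `F t` and `X₁₃ ∈ B`. -/
noncomputable def fiberLaw [DecidableEq P] (F : P → Measure ℝ) (π : Fin Q → ℝ)
    (p : Fin Q → Fin Q → ℝ) (θ : Fin Q → Fin Q → P) (t : P) : Measure ℝ :=
  ∑ x : Fin Q × Fin Q with θ x.1 x.2 = t,
    ENNReal.ofReal (π x.1 * (π x.2 * p x.1 x.2)) • rowLaw F π p θ x.1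

variable {Θ : Set P} {F : P → Measure ℝ} {π : Fin Q → ℝ} {p : Fin Q → Fin Q → ℝ}
  {θ : Fin Q → Fin Q → P}

theorem rowLaw_apply (q : Fin Q) (A : Set ℝ) :
    rowLaw F π p θ q A = ∑ l, ENNReal.ofReal (π l) * edgeMeasure (p q l) (F (θ q l)) A := by
  simp [rowLaw, Measure.finsetSum_apply]

theorem rowLaw_restrict_compl_zero (hπ : ∀ l, 0 ≤ π l) {q : Fin Q}
    (hF0 : ∀ l, F (θ q l) {0} = 0) :
    (rowLaw F π p θ q).restrict {0}ᶜ = ∑ l, ENNReal.ofReal (π l * p q l) • F (θ q l) := by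
  rw [rowLaw, ← Measure.restrictₗ_apply, map_sum]
  simp only [map_smul, Measure.restrictₗ_apply, edgeMeasure_restrict_compl_zero _ (hF0 _),
    smul_smul, ENNReal.ofReal_mul (hπ _)]

namespace IsAdmissibleParam

theorem π_mul_p_pos (h : IsAdmissibleParam Θ π p θ) (q l : Fin Q) : 0 < π l * p q l :=
  mul_pos (h.π_pos l) (h.p_pos q l)

theorem edgeMeasure_univ (h : IsAdmissibleParam Θ π p θ)
    (hF : ∀ x ∈ Θ, IsProbabilityMeasure (F x)) (q l : Fin Q) :
    edgeMeasure (p q l) (F (θ q l)) .univ = 1 :=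
  have := hF _ (h.θ_mem q l)
  (isProbabilityMeasure_edgeMeasure (h.p_pos q l).le (h.p_le_one q l) _).measure_univ

theorem isProbabilityMeasure_rowLaw (h : IsAdmissibleParam Θ π p θ)
    (hF : ∀ x ∈ Θ, IsProbabilityMeasure (F x)) (q : Fin Q) :
    IsProbabilityMeasure (rowLaw F π p θ q) := by
  constructor
  simp_rw [rowLaw_apply, h.edgeMeasure_univ hF, mul_one]
  rw [← ENNReal.ofReal_sum_of_nonneg fun l _ => (h.π_pos l).le, h.sum_π, ENNReal.ofReal_one]

theorem k3Mass_univ (h : IsAdmissibleParam Θ π p θ)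
    (hF : ∀ x ∈ Θ, IsProbabilityMeasure (F x)) (A B : Set ℝ) :
    k3Mass F π p θ A B .univ
      = ∑ q, ENNReal.ofReal (π q) * (rowLaw F π p θ q A * rowLaw F π p θ q B) := by
  simp_rw [k3Mass, h.edgeMeasure_univ hF, mul_one, rowLaw_apply, Finset.sum_mul_sum,
    Finset.mul_sum]
  refine Finset.sum_congr rfl fun q _ => Finset.sum_congr rfl fun l _ =>
    Finset.sum_congr rfl fun r _ => ?_
  rw [ENNReal.ofReal_mul (mul_pos (h.π_pos q) (h.π_pos l)).le,
    ENNReal.ofReal_mul (h.π_pos q).le]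
  ring

end IsAdmissibleParam

end Model

section Identification

variable {P : Type*} {Q : ℕ} {Θ : Set P} {F : P → Measure ℝ}
  {π π' : Fin Q → ℝ} {p p' : Fin Q → Fin Q → ℝ} {θ θ' : Fin Q → Fin Q → P}

theorem sum_smul_rowLaw_eq (h : IsAdmissibleParam Θ π p θ) (h' : IsAdmissibleParam Θ π' p' θ')
    (hF : ∀ x ∈ Θ, IsProbabilityMeasure (F x))
    (heq : ∀ A B C : Set ℝ, MeasurableSet A → MeasurableSet B → MeasurableSet C →
      k3Mass F π p θ A B C = k3Mass F π' p' θ' A B C)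
    {B : Set ℝ} (hB : MeasurableSet B) :
    ∑ q, (ENNReal.ofReal (π q) * rowLaw F π p θ q B) • rowLaw F π p θ q
      = ∑ q, (ENNReal.ofReal (π' q) * rowLaw F π' p' θ' q B) • rowLaw F π' p' θ' q := by
  ext A hA
  have hAB := heq A B .univ hA hB .univ
  rw [h.k3Mass_univ hF, h'.k3Mass_univ hF] at hAB
  simp only [Measure.finsetSum_apply, Measure.smul_apply, smul_eq_mul]
  convert hAB using 2 <;> ring

variable [MeasurableSpace P] [MeasurableSingletonClass P]

theorem fiberLaw_eq [DecidableEq P] (hid : MixturesIdentifiable Θ F)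
    (hF : ∀ x ∈ Θ, IsProbabilityMeasure (F x)) (hF0 : ∀ x ∈ Θ, F x {0} = 0)
    (h : IsAdmissibleParam Θ π p θ) (h' : IsAdmissibleParam Θ π' p' θ')
    (heq : ∀ A B C : Set ℝ, MeasurableSet A → MeasurableSet B → MeasurableSet C →
      k3Mass F π p θ A B C = k3Mass F π' p' θ' A B C) (t : P) :
    fiberLaw F π p θ t = fiberLaw F π' p' θ' t := by
  ext B hB
  have hsum := congrArg (·.restrict {0}ᶜ) (sum_smul_rowLaw_eq h h' hF heq hB)
  simp only [← Measure.restrictₗ_apply, map_sum, map_smul] at hsum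
  simp only [Measure.restrictₗ_apply, rowLaw_restrict_compl_zero (fun l => (h.π_pos l).le)
    (fun l => hF0 _ (h.θ_mem _ l)), rowLaw_restrict_compl_zero (fun l => (h'.π_pos l).le)
    (fun l => hF0 _ (h'.θ_mem _ l)), Finset.smul_sum, smul_smul] at hsum
  rw [← Fintype.sum_prod_type', ← Fintype.sum_prod_type'] at hsum
  have := h.isProbabilityMeasure_rowLaw hF
  have := h'.isProbabilityMeasure_rowLaw hF
  have hatoms := hid.sum_filter_eq (τ := fun x : Fin Q × Fin Q => θ x.1 x.2)
    (τ' := fun x : Fin Q × Fin Q => θ' x.1 x.2)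
    (fun _ => by finiteness) (fun _ => by finiteness) (fun x => h.θ_mem x.1 x.2)
    (fun x => h'.θ_mem x.1 x.2) hsum t
  simp only [fiberLaw, Measure.finsetSum_apply, Measure.smul_apply, smul_eq_mul]
  convert hatoms using 2 with x _ x _
  · rw [ENNReal.ofReal_mul (h.π_pos _).le]; ring
  · rw [ENNReal.ofReal_mul (h'.π_pos _).le]; ring

theorem eq_of_smul_rowLaw_add_smul_rowLaw_eq (hid : MixturesIdentifiable Θ F)
    (hF0 : ∀ x ∈ Θ, F x {0} = 0) (h : IsAdmissibleParam Θ π p θ)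
    (h' : IsAdmissibleParam Θ π' p' θ') {a b q₀ : Fin Q} {c₁ c₂ c' : ℝ≥0∞}
    (hc₁ : c₁ ≠ 0) (hc₂ : c₂ ≠ 0) (hc₁' : c₁ ≠ ∞) (hc₂' : c₂ ≠ ∞) (hc' : c' ≠ ∞)
    (hsum : c₁ • rowLaw F π p θ a + c₂ • rowLaw F π p θ b = c' • rowLaw F π' p' θ' q₀) :
    a = b := by
  have hres := congrArg (·.restrict {0}ᶜ) hsum
  simp only [Measure.restrict_add, Measure.restrict_smul,
    rowLaw_restrict_compl_zero (fun l => (h.π_pos l).le) (fun l => hF0 _ (h.θ_mem _ l)),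
    rowLaw_restrict_compl_zero (fun l => (h'.π_pos l).le) (fun l => hF0 _ (h'.θ_mem _ l)),
    Finset.smul_sum, smul_smul] at hres
  have hmix : ∑ i : Fin Q ⊕ Fin Q,
      Sum.elim (fun l => c₁ * ENNReal.ofReal (π l * p a l))
        (fun l => c₂ * ENNReal.ofReal (π l * p b l)) i • F (Sum.elim (θ a) (θ b) i)
      = ∑ l, (c' * ENNReal.ofReal (π' l * p' q₀ l)) • F (θ' q₀ l) := by
    simpa only [Fintype.sum_sum_type, Sum.elim_inl, Sum.elim_inr] using hres
  have hsupp (i : Fin Q ⊕ Fin Q) : Sum.elim (θ a) (θ b) i ∈ Set.range (θ' q₀) :=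
    hid.exists_eq_of_ne_zero
      (by rintro (l | l) <;> exact ENNReal.mul_ne_top (by assumption) ENNReal.ofReal_ne_top)
      (fun l => ENNReal.mul_ne_top hc' ENNReal.ofReal_ne_top)
      (by rintro (l | l) <;> exact h.θ_mem _ l) (fun l => h'.θ_mem _ l) hmix
      (by rcases i with l | l <;>
        exact mul_ne_zero (by assumption) (ENNReal.ofReal_pos.2 (h.π_mul_p_pos _ l)).ne')
  have hrange : Set.range (θ a) = Set.range (θ' q₀) :=
    (injective_of_symm h.θ_symm h.θ_inj a).range_eq_of_range_subset
      (Set.range_subset_iff.2 fun l => hsupp (.inl l))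
  obtain ⟨l, hl⟩ : θ b b ∈ Set.range (θ a) := hrange ▸ hsupp (.inr b)
  rcases (apply_eq_apply_iff_of_symm h.θ_symm h.θ_inj).1 hl with ⟨rfl, -⟩ | ⟨rfl, -⟩ <;> rfl

theorem exists_diag_match [DecidableEq P] (hid : MixturesIdentifiable Θ F)
    (hF : ∀ x ∈ Θ, IsProbabilityMeasure (F x)) (hF0 : ∀ x ∈ Θ, F x {0} = 0)
    (h : IsAdmissibleParam Θ π p θ) (h' : IsAdmissibleParam Θ π' p' θ')
    (hfib : ∀ t, fiberLaw F π p θ t = fiberLaw F π' p' θ' t) (q₀ : Fin Q) :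
    ∃ a, θ a a = θ' q₀ q₀ ∧ rowLaw F π' p' θ' q₀ = rowLaw F π p θ a ∧
      π a * (π a * p a a) = π' q₀ * (π' q₀ * p' q₀ q₀) := by
  have := h'.isProbabilityMeasure_rowLaw hF
  have := h.isProbabilityMeasure_rowLaw hF
  have hw (a b : Fin Q) : 0 < π a * (π b * p a b) := mul_pos (h.π_pos a) (h.π_mul_p_pos a b)
  have hw' : 0 < π' q₀ * (π' q₀ * p' q₀ q₀) := mul_pos (h'.π_pos q₀) (h'.π_mul_p_pos q₀ q₀)
  have hfib' : fiberLaw F π' p' θ' (θ' q₀ q₀)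
      = ENNReal.ofReal (π' q₀ * (π' q₀ * p' q₀ q₀)) • rowLaw F π' p' θ' q₀ := by
    rw [fiberLaw, filter_apply_eq_apply h'.θ_symm h'.θ_inj, Finset.pair_eq_singleton,
      Finset.sum_singleton]
  obtain ⟨⟨a, b⟩, hab, -⟩ := Finset.exists_ne_zero_of_sum_ne_zero
    (show fiberLaw F π p θ (θ' q₀ q₀) ≠ 0 by
      rw [hfib, hfib']
      exact Measure.ennreal_smul_eq_zero.not.2
        (not_or.2 ⟨(ENNReal.ofReal_pos.2 hw').ne', IsProbabilityMeasure.ne_zero _⟩))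
  replace hab : θ a b = θ' q₀ q₀ := (Finset.mem_filter.1 hab).2
  have hfibab := hfib (θ' q₀ q₀)
  rw [← hab, fiberLaw, filter_apply_eq_apply h.θ_symm h.θ_inj, hab, hfib'] at hfibab
  rcases eq_or_ne a b with rfl | hne
  · rw [Finset.pair_eq_singleton, Finset.sum_singleton] at hfibab
    obtain ⟨hc, hrow⟩ := Measure.eq_of_smul_eq_smul (ENNReal.ofReal_pos.2 (hw a a)).ne'
      ENNReal.ofReal_ne_top hfibab
    exact ⟨a, hab, hrow.symm, (ENNReal.ofReal_eq_ofReal_iff (hw a a).le hw'.le).1 hc⟩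
  · rw [Finset.sum_pair (by simp [hne])] at hfibab
    exact absurd (eq_of_smul_rowLaw_add_smul_rowLaw_eq hid hF0 h h'
      (ENNReal.ofReal_pos.2 (hw a b)).ne' (ENNReal.ofReal_pos.2 (hw b a)).ne'
      ENNReal.ofReal_ne_top ENNReal.ofReal_ne_top ENNReal.ofReal_ne_top hfibab) hne

theorem exists_row_match (hid : MixturesIdentifiable Θ F) (hF0 : ∀ x ∈ Θ, F x {0} = 0)
    (h : IsAdmissibleParam Θ π p θ) (h' : IsAdmissibleParam Θ π' p' θ') {q a : Fin Q}
    (hrow : rowLaw F π' p' θ' q = rowLaw F π p θ a) (l : Fin Q) :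
    ∃ r, θ a r = θ' q l ∧ π' l * p' q l = π r * p a r := by
  classical
  have hres := congrArg (·.restrict {0}ᶜ) hrow
  simp only [rowLaw_restrict_compl_zero (fun l => (h.π_pos l).le) (fun l => hF0 _ (h.θ_mem _ l)),
    rowLaw_restrict_compl_zero (fun l => (h'.π_pos l).le) (fun l => hF0 _ (h'.θ_mem _ l))]
    at hres
  obtain ⟨r, hr⟩ := hid.exists_eq_of_ne_zero (fun _ => ENNReal.ofReal_ne_top)
    (fun _ => ENNReal.ofReal_ne_top) (h'.θ_mem q) (h.θ_mem a) hres
    (ENNReal.ofReal_pos.2 (h'.π_mul_p_pos q l)).ne'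
  have hatom := hid.sum_filter_eq (fun _ => ENNReal.ofReal_ne_top)
    (fun _ => ENNReal.ofReal_ne_top) (h'.θ_mem q) (h.θ_mem a) hres (θ' q l)
  have hl_iff (i : Fin Q) : θ' q i = θ' q l ↔ i = l :=
    (injective_of_symm h'.θ_symm h'.θ_inj q).eq_iff
  have hr_iff (j : Fin Q) : θ a j = θ' q l ↔ j = r := by
    rw [← hr, (injective_of_symm h.θ_symm h.θ_inj a).eq_iff]
  simp only [hl_iff, hr_iff, Finset.filter_eq', Finset.mem_univ, if_true,
    Finset.sum_singleton] at hatom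
  exact ⟨r, hr, (ENNReal.ofReal_eq_ofReal_iff (h'.π_mul_p_pos q l).le
    (h.π_mul_p_pos a r).le).1 hatom⟩

end Identification

theorem exists_perm_of_match {P : Type*} {Q : ℕ} {Θ : Set P} {π π' : Fin Q → ℝ}
    {p p' : Fin Q → Fin Q → ℝ} {θ θ' : Fin Q → Fin Q → P} (h : IsAdmissibleParam Θ π p θ)
    (h' : IsAdmissibleParam Θ π' p' θ') {g : Fin Q → Fin Q}
    (hdiag : ∀ q, θ (g q) (g q) = θ' q q)
    (hrow : ∀ q l, ∃ r, θ (g q) r = θ' q l ∧ π' l * p' q l = π r * p (g q) r)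
    (hmass : ∀ q, π (g q) * (π (g q) * p (g q) (g q)) = π' q * (π' q * p' q q)) :
    ∃ σ : Equiv.Perm (Fin Q), (∀ q, π' q = π (σ q)) ∧ (∀ q l, p' q l = p (σ q) (σ l)) ∧
      (∀ q l, θ' q l = θ (σ q) (σ l)) := by
  have hg : Function.Injective g := fun q₁ q₂ e => by
    have : θ' q₁ q₁ = θ' q₂ q₂ := by rw [← hdiag, ← hdiag, e]
    exact ((apply_eq_apply_iff_of_symm h'.θ_symm h'.θ_inj).1 this).elim And.left And.left
  have hθ (q l : Fin Q) : θ' q l = θ (g q) (g l) := by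
    obtain ⟨r₁, hr₁, -⟩ := hrow q l
    obtain ⟨r₂, hr₂, -⟩ := hrow l q
    rcases (apply_eq_apply_iff_of_symm h.θ_symm h.θ_inj).1
      (hr₁.trans ((h'.θ_symm q l).trans hr₂.symm)) with ⟨hql, -⟩ | ⟨-, rfl⟩
    · obtain rfl := hg hql
      exact (hdiag q).symm
    · exact hr₁.symm
  have hw (q l : Fin Q) : π' l * p' q l = π (g l) * p (g q) (g l) := by
    obtain ⟨r, hr, hweight⟩ := hrow q l
    rw [hθ, (injective_of_symm h.θ_symm h.θ_inj _).eq_iff] at hr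
    rwa [hr] at hweight
  have hπ (q : Fin Q) : π' q = π (g q) := by
    have := hmass q
    rw [← hw q q] at this
    exact (mul_right_cancel₀ (h'.π_mul_p_pos q q).ne' this).symm
  refine ⟨Equiv.ofBijective g hg.bijective_of_finite, hπ, fun q l => ?_, hθ⟩
  exact mul_left_cancel₀ (h.π_pos (g l)).ne' (hπ l ▸ hw q l)

theorem parametric_weighted_identifiable_from_K3_general
    (pd : ℕ) (Θ : Set (Fin pd → ℝ)) (F : (Fin pd → ℝ) → Measure ℝ)
    (hFprob : ∀ θ ∈ Θ, IsProbabilityMeasure (F θ))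
    (hF0 : ∀ θ ∈ Θ, F θ {0} = 0)
    (hident : ∀ (m : ℕ) (a a' : Fin m → ℝ) (t t' : Fin m → (Fin pd → ℝ)),
      (∀ i, 0 ≤ a i) → (∀ i, 0 ≤ a' i) → (∀ i, t i ∈ Θ) → (∀ i, t' i ∈ Θ) →
      (∑ i, ENNReal.ofReal (a i) • F (t i) = ∑ i, ENNReal.ofReal (a' i) • F (t' i)) →
      (∑ i, ENNReal.ofReal (a i) • Measure.dirac (t i)
        = ∑ i, ENNReal.ofReal (a' i) • Measure.dirac (t' i)))
    (Q : ℕ)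
    (π π' : Fin Q → ℝ) (p p' : Fin Q → Fin Q → ℝ)
    (θ θ' : Fin Q → Fin Q → (Fin pd → ℝ))
    (hπ : ∀ q, π q ∈ Set.Ioo (0 : ℝ) 1) (hπ' : ∀ q, π' q ∈ Set.Ioo (0 : ℝ) 1)
    (hπsum : ∑ q, π q = 1) (hπ'sum : ∑ q, π' q = 1)
    (hp : ∀ q l, p q l ∈ Set.Ioc (0 : ℝ) 1) (hp' : ∀ q l, p' q l ∈ Set.Ioc (0 : ℝ) 1)
    (hθΘ : ∀ q l, θ q l ∈ Θ) (hθ'Θ : ∀ q l, θ' q l ∈ Θ)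
    (hθsym : ∀ q l, θ q l = θ l q) (hθ'sym : ∀ q l, θ' q l = θ' l q)
    (hθdist : ∀ q l q' l' : Fin Q, q ≤ l → q' ≤ l' →
      θ q l = θ q' l' → q = q' ∧ l = l')
    (hθ'dist : ∀ q l q' l' : Fin Q, q ≤ l → q' ≤ l' →
      θ' q l = θ' q' l' → q = q' ∧ l = l')
    (heq : ∀ A B C : Set ℝ, MeasurableSet A → MeasurableSet B → MeasurableSet C →
      (∑ q : Fin Q, ∑ l : Fin Q, ∑ r : Fin Q,
        ENNReal.ofReal (π q * π l * π r) *
          (edgeMeasure (p q l) (F (θ q l)) A *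
            (edgeMeasure (p q r) (F (θ q r)) B *
              edgeMeasure (p l r) (F (θ l r)) C)))
      = ∑ q : Fin Q, ∑ l : Fin Q, ∑ r : Fin Q,
        ENNReal.ofReal (π' q * π' l * π' r) *
          (edgeMeasure (p' q l) (F (θ' q l)) A *
            (edgeMeasure (p' q r) (F (θ' q r)) B *
              edgeMeasure (p' l r) (F (θ' l r)) C))) :
    ∃ σ : Equiv.Perm (Fin Q),
      (∀ q, π' q = π (σ q)) ∧
      (∀ q l, p' q l = p (σ q) (σ l)) ∧
      (∀ q l, θ' q l = θ (σ q) (σ l)) := by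
  classical
  have h : IsAdmissibleParam Θ π p θ := ⟨fun q => (hπ q).1, hπsum, fun q l => (hp q l).1,
    fun q l => (hp q l).2, hθΘ, hθsym, hθdist⟩
  have h' : IsAdmissibleParam Θ π' p' θ' := ⟨fun q => (hπ' q).1, hπ'sum,
    fun q l => (hp' q l).1, fun q l => (hp' q l).2, hθ'Θ, hθ'sym, hθ'dist⟩
  have hfib := fiberLaw_eq hident hFprob hF0 h h' heq
  choose g hdiag hrowLaw hmass using exists_diag_match hident hFprob hF0 h h' hfib
  exact exists_perm_of_match h h' hdiag
    (fun q => exists_row_match hident hF0 h h' (hrowLaw q)) hmass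

/-- Identifiability, up to label swapping, of the parameters of the parametric weighted
random graph mixture model from the distribution of `K₃`, under the assumptions that the
parametric family `F` has no point mass at `0`, has identifiable finite-mixture
parameters, and that the `Q(Q+1)/2` connectivity parameters `θ_{ql}` are pairwise
distinct. Equality of the distributions of `K₃ = (X₁₂, X₁₃, X₂₃)` (mixture measures on
`ℝ³`) is expressed by equality on all measurable rectangles `A × B × C`. -/
theorem parametric_weighted_identifiable_from_K3
    (pd : ℕ) (Θ : Set (Fin pd → ℝ)) (F : (Fin pd → ℝ) → Measure ℝ)
    (hFprob : ∀ θ ∈ Θ, IsProbabilityMeasure (F θ))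
    (hF0 : ∀ θ ∈ Θ, F θ {0} = 0)
    (hident : ∀ (m : ℕ) (a a' : Fin m → ℝ) (t t' : Fin m → (Fin pd → ℝ)),
      (∀ i, 0 ≤ a i) → (∀ i, 0 ≤ a' i) → (∀ i, t i ∈ Θ) → (∀ i, t' i ∈ Θ) →
      (∑ i, ENNReal.ofReal (a i) • F (t i) = ∑ i, ENNReal.ofReal (a' i) • F (t' i)) →
      (∑ i, ENNReal.ofReal (a i) • Measure.dirac (t i)
        = ∑ i, ENNReal.ofReal (a' i) • Measure.dirac (t' i)))
    (Q : ℕ) (hQ : 1 ≤ Q)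
    (π π' : Fin Q → ℝ) (p p' : Fin Q → Fin Q → ℝ)
    (θ θ' : Fin Q → Fin Q → (Fin pd → ℝ))
    (hπ : ∀ q, π q ∈ Set.Ioo (0 : ℝ) 1) (hπ' : ∀ q, π' q ∈ Set.Ioo (0 : ℝ) 1)
    (hπsum : ∑ q, π q = 1) (hπ'sum : ∑ q, π' q = 1)
    (hp : ∀ q l, p q l ∈ Set.Ioc (0 : ℝ) 1) (hp' : ∀ q l, p' q l ∈ Set.Ioc (0 : ℝ) 1)
    (hpsym : ∀ q l, p q l = p l q) (hp'sym : ∀ q l, p' q l = p' l q)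
    (hθΘ : ∀ q l, θ q l ∈ Θ) (hθ'Θ : ∀ q l, θ' q l ∈ Θ)
    (hθsym : ∀ q l, θ q l = θ l q) (hθ'sym : ∀ q l, θ' q l = θ' l q)
    (hθdist : ∀ q l q' l' : Fin Q, q ≤ l → q' ≤ l' →
      θ q l = θ q' l' → q = q' ∧ l = l')
    (hθ'dist : ∀ q l q' l' : Fin Q, q ≤ l → q' ≤ l' →
      θ' q l = θ' q' l' → q = q' ∧ l = l')
    (heq : ∀ A B C : Set ℝ, MeasurableSet A → MeasurableSet B → MeasurableSet C →
      (∑ q : Fin Q, ∑ l : Fin Q, ∑ r : Fin Q,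
        ENNReal.ofReal (π q * π l * π r) *
          (edgeMeasure (p q l) (F (θ q l)) A *
            (edgeMeasure (p q r) (F (θ q r)) B *
              edgeMeasure (p l r) (F (θ l r)) C)))
      = ∑ q : Fin Q, ∑ l : Fin Q, ∑ r : Fin Q,
        ENNReal.ofReal (π' q * π' l * π' r) *
          (edgeMeasure (p' q l) (F (θ' q l)) A *
            (edgeMeasure (p' q r) (F (θ' q r)) B *
              edgeMeasure (p' l r) (F (θ' l r)) C))) :
    ∃ σ : Equiv.Perm (Fin Q),
      (∀ q, π' q = π (σ q)) ∧
      (∀ q l, p' q l = p (σ q) (σ l)) ∧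
      (∀ q l, θ' q l = θ (σ q) (σ l)) :=
  parametric_weighted_identifiable_from_K3_general pd Θ F hFprob hF0 hident Q π π' p p' θ θ' hπ hπ'
    hπsum hπ'sum hp hp' hθΘ hθ'Θ hθsym hθ'sym hθdist hθ'dist heq
end

section
/- Consider the random graph mixture model with κ-state edge variables and Q ≥ 2 latent groups: parameters are π ∈ (0,1)^Q with Σ_q π_q = 1 and symmetric probability vectors p_{ql} = (p_{ql}(1),…,p_{ql}(κ)) (entries nonnegative summing to 1); the distribution of K_9 is the probability mass function on x = (x_{ij})_{1≤i<j≤9} ∈ {1,…,κ}^{36} given by P_{π,p}(x) = Σ_{z : {1,…,9}→{1,…,Q}} (Π_{i=1}^9 π_{z(i)}) · Π_{1≤i<j≤9} p_{z(i)z(j)}(x_{ij}). Suppose κ ≥ Q(Q+1)/2 and that each of two parameter sets (π, p) and (π′, p′) has the property that its Q(Q+1)/2 vectors {p_{ql}}_{1≤q≤l≤Q} ⊆ ℝ^κ are linearly independent. If P_{π,p} = P_{π′,p′}, then there is a permutation σ of {1,…,Q} such that π′_q = π_{σ(q)} and p′_{ql} = p_{σ(q)σ(l)} for all q, l. -/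
/-!
Conditionally on the label `q` of a vertex, its edges to the other vertices are independent with
common law `μ_q = ∑_r π_r p_{qr}`. Linear independence of the `p_{ql}` (`q ≤ l`) and `π > 0`
force linear independence of the `μ_q`, so the joint law of three edges at a common vertex, the
tensor `∑_q π_q μ_q ⊗ μ_q ⊗ μ_q`, determines `(π, μ)` up to a relabelling `σ`: pairing it with
the dual functionals of the two families shows that each `μ'_q` is one of the `μ_r`.
Once `π` and `μ` are known, the joint law of an edge `{0, 1}` and of one further edge at each of
its endpoints, `∑_{q,l} π_q π_l p_{ql} ⊗ μ_q ⊗ μ_l`, determines every `p_{ql}`.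
-/

section Duality

variable {K V : Type*} [Field K] [AddCommGroup V] [Module K V]

theorem LinearIndependent.exists_dual_apply_eq_ite {ι : Type*} [DecidableEq ι] {w : ι → V}
    (hw : LinearIndependent K w) (i : ι) :
    ∃ f : Module.Dual K V, ∀ j, f (w j) = if j = i then 1 else 0 := by
  obtain ⟨f, hf⟩ := ((Module.Basis.span hw).coord i).exists_extend
  refine ⟨f, fun j => ?_⟩
  simpa [Module.Basis.span_apply, Finsupp.single_apply] using congr($hf (Module.Basis.span hw j))

theorem Module.eq_of_forall_dual_apply_eq {v v' : V} (h : ∀ f : Module.Dual K V, f v = f v') :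
    v = v' :=
  Module.eval_apply_injective K (LinearMap.ext h)

end Duality

section Moments

variable {K V D : Type*} [Field K] [AddCommGroup V] [Module K V] [Fintype D]

def cubicMoment (P : D → K) (w : D → V) (f₁ f₂ f₃ : Module.Dual K V) : K :=
  ∑ d, P d * (f₁ (w d) * f₂ (w d) * f₃ (w d))

/-- Testing the moments against `(δ' e, δ' e, δ d)` and `(δ d, δ d', δ' e)` shows that two
nonzero entries `δ' e (w d)`, `δ' e (w d')` would make `δ d (w' e) * δ d' (w' e)` both nonzero
and zero; testing against `(δ' e, δ' e, ℓ)` shows that some entry is nonzero. -/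
theorem existsUnique_dual_apply_ne_zero_of_cubicMoment_eq {w w' : D → V} {P P' : D → K}
    (hP : ∀ d, P d ≠ 0) (hP' : ∀ d, P' d ≠ 0) {ℓ : Module.Dual K V} (hℓ : ∀ d, ℓ (w d) = 1)
    (hℓ' : ∀ d, ℓ (w' d) = 1) [DecidableEq D] {δ δ' : D → Module.Dual K V}
    (hδ : ∀ e d, δ e (w d) = if d = e then 1 else 0)
    (hδ' : ∀ e d, δ' e (w' d) = if d = e then 1 else 0)
    (h : ∀ f₁ f₂ f₃, cubicMoment P w f₁ f₂ f₃ = cubicMoment P' w' f₁ f₂ f₃) (e : D) :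
    ∃! d, δ' e (w d) ≠ 0 := by
  have hnorm : ∑ d, P d * (δ' e (w d) * δ' e (w d)) = P' e := by
    simpa [cubicMoment, hδ', hℓ, hℓ'] using h (δ' e) (δ' e) ℓ
  have hdiag (d : D) : P d * (δ' e (w d) * δ' e (w d)) = P' e * δ d (w' e) := by
    simpa [cubicMoment, hδ, hδ'] using h (δ' e) (δ' e) (δ d)
  have hoff (d d' : D) (hdd : d ≠ d') : P' e * (δ d (w' e) * δ d' (w' e)) = 0 := by
    simpa [cubicMoment, hδ, hδ', hdd.symm] using (h (δ d) (δ d') (δ' e)).symm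
  have hdual_ne (d : D) (hd : δ' e (w d) ≠ 0) : δ d (w' e) ≠ 0 := by
    intro h0
    have := hdiag d
    rw [h0, mul_zero] at this
    exact mul_ne_zero (hP d) (mul_ne_zero hd hd) this
  obtain ⟨d, hd⟩ : ∃ d, δ' e (w d) ≠ 0 := by
    by_contra! h0
    exact hP' e (by simp [← hnorm, h0])
  refine ⟨d, hd, fun d' hd' => ?_⟩
  by_contra hdd
  exact mul_ne_zero (hP' e) (mul_ne_zero (hdual_ne d' hd') (hdual_ne d hd)) (hoff d' d hdd)

theorem exists_equiv_of_cubicMoment_eq {w w' : D → V} (hw : LinearIndependent K w)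
    (hw' : LinearIndependent K w') {P P' : D → K} (hP : ∀ d, P d ≠ 0) (hP' : ∀ d, P' d ≠ 0)
    (ℓ : Module.Dual K V) (hℓ : ∀ d, ℓ (w d) = 1) (hℓ' : ∀ d, ℓ (w' d) = 1)
    (h : ∀ f₁ f₂ f₃, cubicMoment P w f₁ f₂ f₃ = cubicMoment P' w' f₁ f₂ f₃) :
    ∃ σ : D ≃ D, ∀ d, w' d = w (σ d) ∧ P' d = P (σ d) := by
  classical
  choose δ hδ using hw.exists_dual_apply_eq_ite
  choose δ' hδ' using hw'.exists_dual_apply_eq_ite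
  choose σ hσ hσ_unique using
    existsUnique_dual_apply_ne_zero_of_cubicMoment_eq hP hP' hℓ hℓ' hδ hδ' h
  have hproj (e : D) (f : Module.Dual K V) :
      P (σ e) * (δ' e (w (σ e)) * δ' e (w (σ e))) * f (w (σ e)) = P' e * f (w' e) := by
    have := h f (δ' e) (δ' e)
    simp only [cubicMoment, hδ'] at this
    rw [Finset.sum_eq_single (σ e) (fun d _ hd => by simp [not_imp_comm.mp (hσ_unique e d) hd])
      (by simp)] at this
    simpa [mul_comm, mul_left_comm, mul_assoc] using this
  have hscale (e : D) : P (σ e) * (δ' e (w (σ e)) * δ' e (w (σ e))) = P' e := by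
    simpa [hℓ, hℓ'] using hproj e ℓ
  have hw'σ (e : D) : w' e = w (σ e) :=
    Module.eq_of_forall_dual_apply_eq fun f =>
      mul_left_cancel₀ (hP' e) (by rw [← hproj e f, hscale e])
  have hP'σ (e : D) : P' e = P (σ e) := by
    simpa [← hw'σ e, hδ'] using (hscale e).symm
  have hσ_inj : Function.Injective σ := fun a b hab => hw'.injective (by rw [hw'σ, hw'σ, hab])
  exact ⟨Equiv.ofBijective σ hσ_inj.bijective_of_finite, fun e => ⟨hw'σ e, hP'σ e⟩⟩

variable {X : Type*} [AddCommGroup X] [Module K X]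

def pairMoment (P : D → K) (w : D → V) (x : D → D → X) (g : Module.Dual K X)
    (f₁ f₂ : Module.Dual K V) : K :=
  ∑ q, ∑ l, P q * P l * (g (x q l) * (f₁ (w q) * f₂ (w l)))

theorem eq_of_pairMoment_eq {w w' : D → V} (hw : LinearIndependent K w) {P P' : D → K}
    (hP : ∀ d, P d ≠ 0) {σ : D ≃ D} (hw' : ∀ d, w' d = w (σ d)) (hP' : ∀ d, P' d = P (σ d))
    {x x' : D → D → X} (h : ∀ g f₁ f₂, pairMoment P w x g f₁ f₂ = pairMoment P' w' x' g f₁ f₂)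
    (q l : D) : x' q l = x (σ q) (σ l) := by
  classical
  choose δ hδ using hw.exists_dual_apply_eq_ite
  refine Module.eq_of_forall_dual_apply_eq (K := K) fun g => ?_
  simpa [pairMoment, hw', hP', hδ, σ.injective.eq_iff, hP] using (h g (δ (σ q)) (δ (σ l))).symm

end Moments

theorem sum_prod_prod_eq_prod_prod_sum {ι₁ ι₂ α R : Type*} [Fintype ι₁] [Fintype ι₂] [Fintype α]
    [DecidableEq ι₁] [DecidableEq ι₂] [CommSemiring R] (F : ι₁ → ι₂ → α → R) :
    ∑ x : ι₁ → ι₂ → α, ∏ i, ∏ j, F i j (x i j) = ∏ i, ∏ j, ∑ a, F i j a := by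
  simp_rw [Fintype.prod_sum]

theorem sum_fun_fin_succ {α M : Type*} [Fintype α] [AddCommMonoid M] {m : ℕ}
    (F : (Fin (m + 1) → α) → M) : ∑ z, F z = ∑ a, ∑ y : Fin m → α, F (Fin.cons a y) := by
  rw [← (Fin.consEquiv fun _ => α).sum_comp, Fintype.sum_prod_type]
  rfl

section MixtureModel

variable {Q κ n : ℕ}

def mixtureProb (π : Fin Q → ℝ) (p : Fin Q → Fin Q → Fin κ → ℝ) (x : Fin n → Fin n → Fin κ) : ℝ :=
  ∑ z : Fin n → Fin Q, (∏ i, π (z i)) * ∏ i, ∏ j, if i < j then p (z i) (z j) (x i j) else 1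

def mixtureMoment (π : Fin Q → ℝ) (p : Fin Q → Fin Q → Fin κ → ℝ)
    (f : Fin n → Fin n → Fin κ → ℝ) : ℝ :=
  ∑ z : Fin n → Fin Q, (∏ i, π (z i)) * ∏ i, ∏ j, if i < j then f i j ⬝ᵥ p (z i) (z j) else 1

/-- The entries `x i j` with `j ≤ i` do not enter `mixtureProb`; the weight `κ⁻¹` averages
them out. -/
theorem mixtureMoment_eq_sum_mul_mixtureProb (hκ : κ ≠ 0) (π : Fin Q → ℝ)
    (p : Fin Q → Fin Q → Fin κ → ℝ) (f : Fin n → Fin n → Fin κ → ℝ) :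
    mixtureMoment π p f =
      ∑ x, (∏ i, ∏ j, if i < j then f i j (x i j) else (κ : ℝ)⁻¹) * mixtureProb π p x := by
  have hexpand (z : Fin n → Fin Q) :
      (∏ i, ∏ j, if i < j then f i j ⬝ᵥ p (z i) (z j) else 1) =
        ∑ x : Fin n → Fin n → Fin κ, ∏ i, ∏ j, (if i < j then f i j (x i j) else (κ : ℝ)⁻¹) *
          if i < j then p (z i) (z j) (x i j) else 1 := by
    rw [sum_prod_prod_eq_prod_prod_sum fun i j k =>
      (if i < j then f i j k else (κ : ℝ)⁻¹) * if i < j then p (z i) (z j) k else 1]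
    refine Finset.prod_congr rfl fun i _ => Finset.prod_congr rfl fun j _ => ?_
    split_ifs
    · simp [dotProduct]
    · simp [hκ]
  simp_rw [mixtureMoment, mixtureProb, hexpand, Finset.mul_sum, Finset.prod_mul_distrib]
  rw [Finset.sum_comm]
  exact Finset.sum_congr rfl fun z _ => Finset.sum_congr rfl fun x _ => by ring

theorem mixtureMoment_eq_of_mixtureProb_eq (hκ : κ ≠ 0) {π π' : Fin Q → ℝ}
    {p p' : Fin Q → Fin Q → Fin κ → ℝ}
    (h : ∀ x : Fin n → Fin n → Fin κ, mixtureProb π p x = mixtureProb π' p' x)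
    (f : Fin n → Fin n → Fin κ → ℝ) : mixtureMoment π p f = mixtureMoment π' p' f := by
  simp only [mixtureMoment_eq_sum_mul_mixtureProb hκ, h]

/-- Edge weights of a double star: the roots `0` and `1` are joined by an edge weighted by `g`,
the leaf `j + 2` is joined to `0` by an edge weighted by `u j` and to `1` by one weighted by
`v j`, and all other weights are `1`. -/
def doubleStarWeight {m : ℕ} (g : Fin κ → ℝ) (u v : Fin m → Fin κ → ℝ) :
    Fin (m + 2) → Fin (m + 2) → Fin κ → ℝ :=
  Fin.cons (Fin.cons 1 (Fin.cons g u)) (Fin.cons (Fin.cons 1 (Fin.cons 1 v)) fun _ => 1)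

theorem mixtureMoment_doubleStarWeight {m : ℕ} (π : Fin Q → ℝ) {p : Fin Q → Fin Q → Fin κ → ℝ}
    (hp : ∀ q l, ∑ k, p q l k = 1) (g : Fin κ → ℝ) (u v : Fin m → Fin κ → ℝ) :
    mixtureMoment π p (doubleStarWeight g u v) = ∑ q, ∑ l, π q * π l *
      ((g ⬝ᵥ p q l) * ∏ j, ∑ r, π r * ((u j ⬝ᵥ p q r) * (v j ⬝ᵥ p l r))) := by
  simp only [mixtureMoment, sum_fun_fin_succ]
  refine Finset.sum_congr rfl fun q _ => Finset.sum_congr rfl fun l _ => ?_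
  simp only [Fin.prod_univ_succ, Fin.cons_zero, Fin.cons_succ, doubleStarWeight, not_lt_zero,
    ↓reduceIte, Fin.succ_zero_eq_one, Fin.lt_one_iff, ite_mul, one_mul, mul_ite, Fin.cons_one,
    Fin.succ_pos, Fin.succ_ne_zero, Fin.succ_lt_succ_iff, Pi.one_apply, one_dotProduct, hp, ite_self,
    Finset.prod_const_one, mul_one]
  rw [Fintype.prod_sum, Finset.mul_sum, Finset.mul_sum]
  refine Finset.sum_congr rfl fun y _ => ?_
  simp only [Finset.prod_mul_distrib]
  ring

/-- The law of an edge variable `X_{ij}` given `z(i) = q`. -/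
def edgeMarginal (π : Fin Q → ℝ) (p : Fin Q → Fin Q → Fin κ → ℝ) (q : Fin Q) : Fin κ → ℝ :=
  ∑ r, π r • p q r

theorem dotProduct_edgeMarginal (π : Fin Q → ℝ) (p : Fin Q → Fin Q → Fin κ → ℝ) (c : Fin κ → ℝ)
    (q : Fin Q) : c ⬝ᵥ edgeMarginal π p q = ∑ r, π r * (c ⬝ᵥ p q r) := by
  simp [edgeMarginal, dotProduct_sum, dotProduct_smul]

theorem sum_edgeMarginal {π : Fin Q → ℝ} (hπ : ∑ q, π q = 1) {p : Fin Q → Fin Q → Fin κ → ℝ}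
    (hp : ∀ q l, ∑ k, p q l k = 1) (q : Fin Q) : ∑ k, edgeMarginal π p q k = 1 := by
  simpa [one_dotProduct, hp, hπ] using dotProduct_edgeMarginal π p 1 q

theorem Module.Dual.apply_eq_dotProduct {R ι : Type*} [CommSemiring R] [Fintype ι]
    [DecidableEq ι] (f : Module.Dual R (ι → R)) (v : ι → R) :
    f v = (dotProductEquiv R ι).symm f ⬝ᵥ v := by
  rw [← dotProductEquiv_apply_apply, LinearEquiv.apply_symm_apply]

theorem cubicMoment_edgeMarginal {m : ℕ} {π : Fin Q → ℝ} (hπ : ∑ q, π q = 1)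
    {p : Fin Q → Fin Q → Fin κ → ℝ} (hp : ∀ q l, ∑ k, p q l k = 1)
    (f₁ f₂ f₃ : Module.Dual ℝ (Fin κ → ℝ)) :
    cubicMoment π (edgeMarginal π p) f₁ f₂ f₃ = mixtureMoment π p (doubleStarWeight (m := m + 2)
      ((dotProductEquiv ℝ _).symm f₁)
      (Fin.cons ((dotProductEquiv ℝ _).symm f₂) (Fin.cons ((dotProductEquiv ℝ _).symm f₃) 1))
      1) := by
  rw [mixtureMoment_doubleStarWeight π hp]
  simp only [cubicMoment, Module.Dual.apply_eq_dotProduct, Pi.one_apply, one_dotProduct, hp,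
    mul_one, ← dotProduct_edgeMarginal, Fin.prod_univ_succ, Fin.cons_zero, Fin.cons_succ,
    sum_edgeMarginal hπ hp, Finset.prod_const_one]
  refine Finset.sum_congr rfl fun q _ => ?_
  rw [dotProduct_edgeMarginal π p ((dotProductEquiv ℝ _).symm f₁) q]
  simp only [Finset.sum_mul, Finset.mul_sum]
  exact Finset.sum_congr rfl fun l _ => by ring

theorem pairMoment_edgeMarginal {m : ℕ} {π : Fin Q → ℝ} (hπ : ∑ q, π q = 1)
    {p : Fin Q → Fin Q → Fin κ → ℝ} (hp : ∀ q l, ∑ k, p q l k = 1)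
    (g f₁ f₂ : Module.Dual ℝ (Fin κ → ℝ)) :
    pairMoment π (edgeMarginal π p) p g f₁ f₂ = mixtureMoment π p (doubleStarWeight (m := m + 2)
      ((dotProductEquiv ℝ _).symm g) (Fin.cons ((dotProductEquiv ℝ _).symm f₁) 1)
      (Fin.cons 1 (Fin.cons ((dotProductEquiv ℝ _).symm f₂) 1))) := by
  rw [mixtureMoment_doubleStarWeight π hp]
  simp [Fin.prod_univ_succ, one_dotProduct, hp, ← dotProduct_edgeMarginal, sum_edgeMarginal hπ hp,
    pairMoment, Module.Dual.apply_eq_dotProduct]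

theorem exists_dual_apply_diag {p : Fin Q → Fin Q → Fin κ → ℝ} (hsym : ∀ q l, p q l = p l q)
    (hind : LinearIndependent ℝ fun e : {e : Fin Q × Fin Q // e.1 ≤ e.2} => p e.1.1 e.1.2)
    (q : Fin Q) :
    ∃ f : Module.Dual ℝ (Fin κ → ℝ), ∀ r s, f (p r s) = if r = q ∧ s = q then 1 else 0 := by
  obtain ⟨f, hf⟩ := hind.exists_dual_apply_eq_ite ⟨(q, q), le_rfl⟩
  refine ⟨f, fun r s => ?_⟩
  rcases le_total r s with hrs | hsr
  · simpa [Subtype.ext_iff] using hf ⟨(r, s), hrs⟩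
  · simpa [Subtype.ext_iff, hsym r s, and_comm] using hf ⟨(s, r), hsr⟩

theorem linearIndependent_edgeMarginal {π : Fin Q → ℝ} (hπ : ∀ q, π q ≠ 0)
    {p : Fin Q → Fin Q → Fin κ → ℝ} (hsym : ∀ q l, p q l = p l q)
    (hind : LinearIndependent ℝ fun e : {e : Fin Q × Fin Q // e.1 ≤ e.2} => p e.1.1 e.1.2) :
    LinearIndependent ℝ (edgeMarginal π p) := by
  choose f hf using exists_dual_apply_diag hsym hind
  refine .of_pairwise_dual_eq_zero_one _ (fun q => (π q)⁻¹ • f q) (fun q s hqs => ?_) fun q => ?_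
  · simp [edgeMarginal, hf, Ne.symm hqs]
  · simp [edgeMarginal, hf, hπ q]

end MixtureModel

theorem finite_state_identifiable_from_K9_general
    (Q κ : ℕ) (hQ : 2 ≤ Q)
    (π π' : Fin Q → ℝ) (p p' : Fin Q → Fin Q → Fin κ → ℝ)
    (hπ : ∀ q, π q ∈ Set.Ioo (0 : ℝ) 1) (hπ' : ∀ q, π' q ∈ Set.Ioo (0 : ℝ) 1)
    (hπsum : ∑ q, π q = 1) (hπ'sum : ∑ q, π' q = 1)
    (hpsym : ∀ q l, p q l = p l q) (hp'sym : ∀ q l, p' q l = p' l q)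
    (hpsum : ∀ q l, ∑ k, p q l k = 1) (hp'sum : ∀ q l, ∑ k, p' q l k = 1)
    (hind : LinearIndependent ℝ
      (fun e : {e : Fin Q × Fin Q // e.1 ≤ e.2} => p e.1.1 e.1.2))
    (hind' : LinearIndependent ℝ
      (fun e : {e : Fin Q × Fin Q // e.1 ≤ e.2} => p' e.1.1 e.1.2))
    (heq : ∀ x : Fin 9 → Fin 9 → Fin κ,
      (∑ z : Fin 9 → Fin Q, (∏ i, π (z i)) *
        ∏ i, ∏ j, (if i < j then p (z i) (z j) (x i j) else 1))
      = ∑ z : Fin 9 → Fin Q, (∏ i, π' (z i)) *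
        ∏ i, ∏ j, (if i < j then p' (z i) (z j) (x i j) else 1)) :
    ∃ σ : Equiv.Perm (Fin Q),
      (∀ q, π' q = π (σ q)) ∧ ∀ q l, p' q l = p (σ q) (σ l) := by
  have hκ : κ ≠ 0 := by
    rintro rfl
    simpa using hpsum ⟨0, by omega⟩ ⟨0, by omega⟩
  have hmoment := mixtureMoment_eq_of_mixtureProb_eq hκ heq
  have hπ0 (q : Fin Q) : π q ≠ 0 := (hπ q).1.ne'
  have hπ'0 (q : Fin Q) : π' q ≠ 0 := (hπ' q).1.ne'
  have hμ := linearIndependent_edgeMarginal hπ0 hpsym hind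
  obtain ⟨σ, hσ⟩ := exists_equiv_of_cubicMoment_eq hμ
    (linearIndependent_edgeMarginal hπ'0 hp'sym hind') hπ0 hπ'0 (dotProductEquiv ℝ _ 1)
    (by simpa [one_dotProduct] using sum_edgeMarginal hπsum hpsum)
    (by simpa [one_dotProduct] using sum_edgeMarginal hπ'sum hp'sum)
    fun f₁ f₂ f₃ => by
      rw [cubicMoment_edgeMarginal (m := 5) hπsum hpsum, cubicMoment_edgeMarginal hπ'sum hp'sum]
      exact hmoment _
  refine ⟨σ, fun q => (hσ q).2, fun q l => ?_⟩
  refine eq_of_pairMoment_eq hμ hπ0 (fun d => (hσ d).1) (fun d => (hσ d).2) (fun g f₁ f₂ => ?_) q l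
  rw [pairMoment_edgeMarginal (m := 5) hπsum hpsum, pairMoment_edgeMarginal hπ'sum hp'sum]
  exact hmoment _

/-- Identifiability, up to label swapping, of the parameters of the random graph
mixture model with `κ`-state edge variables and `Q ≥ 2` latent groups from the
distribution of `K₉`, provided `κ ≥ Q(Q+1)/2` and the connectivity vectors
`{p_{ql}}_{q ≤ l}` are linearly independent. -/
theorem finite_state_identifiable_from_K9
    (Q κ : ℕ) (hQ : 2 ≤ Q) (hκ : Q * (Q + 1) / 2 ≤ κ)
    (π π' : Fin Q → ℝ) (p p' : Fin Q → Fin Q → Fin κ → ℝ)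
    (hπ : ∀ q, π q ∈ Set.Ioo (0 : ℝ) 1) (hπ' : ∀ q, π' q ∈ Set.Ioo (0 : ℝ) 1)
    (hπsum : ∑ q, π q = 1) (hπ'sum : ∑ q, π' q = 1)
    (hpsym : ∀ q l, p q l = p l q) (hp'sym : ∀ q l, p' q l = p' l q)
    (hpnn : ∀ q l k, 0 ≤ p q l k) (hp'nn : ∀ q l k, 0 ≤ p' q l k)
    (hpsum : ∀ q l, ∑ k, p q l k = 1) (hp'sum : ∀ q l, ∑ k, p' q l k = 1)
    (hind : LinearIndependent ℝ
      (fun e : {e : Fin Q × Fin Q // e.1 ≤ e.2} => p e.1.1 e.1.2))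
    (hind' : LinearIndependent ℝ
      (fun e : {e : Fin Q × Fin Q // e.1 ≤ e.2} => p' e.1.1 e.1.2))
    (heq : ∀ x : Fin 9 → Fin 9 → Fin κ,
      (∑ z : Fin 9 → Fin Q, (∏ i, π (z i)) *
        ∏ i, ∏ j, (if i < j then p (z i) (z j) (x i j) else 1))
      = ∑ z : Fin 9 → Fin Q, (∏ i, π' (z i)) *
        ∏ i, ∏ j, (if i < j then p' (z i) (z j) (x i j) else 1)) :
    ∃ σ : Equiv.Perm (Fin Q),
      (∀ q, π' q = π (σ q)) ∧ ∀ q l, p' q l = p (σ q) (σ l) :=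
  finite_state_identifiable_from_K9_general Q κ hQ π π' p p' hπ hπ' hπsum hπ'sum hpsym hp'sym hpsum
    hp'sum hind hind' heq
end

section
/- (Kruskal's theorem.) For a real matrix M with r rows, define the Kruskal rank rank_K M as the largest integer I such that every set of I rows of M is linearly independent. For v ∈ ℝ^r and matrices M_1 (r×κ_1), M_2 (r×κ_2), M_3 (r×κ_3), define the tensor [v; M_1, M_2, M_3] ∈ ℝ^{κ_1×κ_2×κ_3} by entries [v; M_1, M_2, M_3]_{s,t,u} = Σ_{i=1}^r v_i M_1(i,s) M_2(i,t) M_3(i,u). Suppose v, v′ ∈ ℝ^r have all entries strictly positive, the matrices M_j and M′_j are row-stochastic (nonnegative entries, each row summing to 1), and both triples satisfy the Kruskal condition rank_K M_1 + rank_K M_2 + rank_K M_3 ≥ 2r + 2 and rank_K M′_1 + rank_K M′_2 + rank_K M′_3 ≥ 2r + 2. If [v; M_1, M_2, M_3] = [v′; M′_1, M′_2, M′_3], then there is a permutation σ of {1,…,r} such that v′_i = v_{σ(i)} and M′_j(i, ·) = M_j(σ(i), ·) for all i and j = 1, 2, 3. -/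
/-!
Contracting the third mode of `∑ᵢ aᵢ ⊗ bᵢ ⊗ cᵢ` with a functional `f` gives the matrix
`∑ᵢ f(cᵢ) aᵢ bᵢᵀ`. By Sylvester's inequality its rank is at least `min k₁ m + min k₂ m - m`,
where `m` is the number of `i` with `f(cᵢ) ≠ 0`, and it is at most the number of nonzero terms of
any such decomposition. Taking `f` generic among the functionals vanishing on a subspace `W`,
equality of two decompositions shows that `W` contains at least as many `cᵢ` as `c'ⱼ` as soon as
it contains `k₃ - 1` of the `c'ⱼ`; Kruskal's permutation lemma turns this into a permutation
matching the lines `K ∙ c'ⱼ` and `K ∙ cᵢ`. Doing this in every mode, contractions vanishing at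
`k₃ - 1` of the `cᵢ` have full rank, which forces the three permutations to coincide and makes the
rank-one terms linearly independent. For row-stochastic factors the row sums fix all scalars.
-/

open Finset

/-- The Kruskal rank of a matrix `M` with rows `M i : Fin κ → ℝ`: the largest `I` such
that every set of `I` rows of `M` is linearly independent. -/
noncomputable def kruskalRank {r κ : ℕ} (M : Fin r → Fin κ → ℝ) : ℕ :=
  sSup {I | I ≤ r ∧ ∀ S : Finset (Fin r), S.card = I →
    LinearIndependent ℝ (fun i : {i // i ∈ S} => M i.1)}

open Module Submodule

section LinearAlgebra

variable {K V ι : Type*} [Field K] [AddCommGroup V] [Module K V]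

theorem LinearIndepOn.smul_of_ne_zero {v : ι → V} {s : Set ι} {w : ι → K}
    (h : LinearIndepOn K v s) (hw : ∀ i ∈ s, w i ≠ 0) :
    LinearIndepOn K (fun i => w i • v i) s := by
  convert h.units_smul fun i : s => Units.mk0 (w i) (hw i i.2) using 1
  simp only [LinearIndepOn]
  congr! 1

theorem LinearIndepOn.finrank_span_image_eq_card {v : ι → V} {s : Finset ι}
    (h : LinearIndepOn K v (s : Set ι)) : finrank K (span K (v '' s)) = #s := by
  rw [Set.image_eq_range, finrank_span_eq_card h]
  simp

theorem finrank_span_image_le_card (v : ι → V) (s : Finset ι) :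
    finrank K (span K (v '' s)) ≤ #s := by
  classical
  rw [← coe_image]
  exact (finrank_span_finset_le_card _).trans card_image_le

theorem LinearIndepOn.card_le_finrank [FiniteDimensional K V] {v : ι → V} {s : Finset ι}
    {W : Submodule K V} (h : LinearIndepOn K v (s : Set ι)) (hW : ∀ i ∈ s, v i ∈ W) :
    #s ≤ finrank K W := by
  rw [← h.finrank_span_image_eq_card]
  exact finrank_mono (span_le.2 (Set.image_subset_iff.2 hW))

theorem span_singleton_eq_of_le {x y : V} (h : K ∙ x ≤ K ∙ y) (hx : x ≠ 0) : K ∙ x = K ∙ y := by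
  obtain ⟨a, rfl⟩ := mem_span_singleton.1 (h (mem_span_singleton_self x))
  exact span_singleton_smul_eq (isUnit_iff_ne_zero.2 (by rintro rfl; simp at hx)) y

theorem apply_eq_zero_iff_of_span_singleton_eq {W : Type*} [AddCommGroup W] [Module K W]
    (f : V →ₗ[K] W) {x y : V} (h : K ∙ x = K ∙ y) : f x = 0 ↔ f y = 0 := by
  simp only [← LinearMap.mem_ker, ← span_singleton_le_iff_mem, h]

theorem exists_dual_apply_eq_zero_iff_mem [Infinite K] [Finite ι] (W : Submodule K V)
    (v : ι → V) : ∃ f : Dual K V, ∀ i, f (v i) = 0 ↔ v i ∈ W := by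
  obtain ⟨g, hg⟩ := Module.exists_dual_forall_apply_ne_zero (K := K)
    (fun i : {i // v i ∉ W} => W.mkQ (v i)) fun i => by
      simpa [Submodule.Quotient.mk_eq_zero] using i.2
  refine ⟨g ∘ₗ W.mkQ, fun i => ⟨fun h => ?_, fun h => by
    simp [(Submodule.Quotient.mk_eq_zero W).2 h]⟩⟩
  by_contra hi
  exact hg ⟨i, hi⟩ h

theorem LinearMap.finrank_range_add_finrank_range_le {U W : Type*} [AddCommGroup U]
    [Module K U] [AddCommGroup W] [Module K W] [FiniteDimensional K V]
    (f : U →ₗ[K] V) (g : V →ₗ[K] W) :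
    finrank K (range g) + finrank K (range f) ≤ finrank K V + finrank K (range (g ∘ₗ f)) := by
  have hrestrict := LinearMap.finrank_range_add_finrank_ker (g.domRestrict (range f))
  rw [LinearMap.range_domRestrict, ← LinearMap.range_comp] at hrestrict
  have hker : finrank K (LinearMap.ker (g.domRestrict (range f))) ≤
      finrank K (LinearMap.ker g) := by
    rw [LinearMap.ker_domRestrict, ← finrank_map_subtype_eq]
    exact finrank_mono (map_comap_le _ _)
  have := LinearMap.finrank_range_add_finrank_ker g
  omega

/-- Sylvester's rank inequality. -/
theorem Matrix.rank_add_rank_le_card_add_rank_mul {m n o : Type*} [Fintype n] [Fintype o]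
    (A : Matrix m n K) (B : Matrix n o K) :
    A.rank + B.rank ≤ Fintype.card n + (A * B).rank := by
  have := LinearMap.finrank_range_add_finrank_range_le B.mulVecLin A.mulVecLin
  rw [finrank_fintype_fun_eq_card, ← Matrix.mulVecLin_mul] at this
  exact this

end LinearAlgebra

section KruskalRank

open scoped Classical

variable {K V ι : Type*} [Field K] [AddCommGroup V] [Module K V]

variable (K) in
def KruskalRankAtLeast (v : ι → V) (k : ℕ) : Prop :=
  ∀ s : Finset ι, #s ≤ k → LinearIndepOn K v (s : Set ι)

namespace KruskalRankAtLeast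

variable {v : ι → V} {k : ℕ}

theorem mono (h : KruskalRankAtLeast K v k) {l : ℕ} (hlk : l ≤ k) : KruskalRankAtLeast K v l :=
  fun s hs => h s (hs.trans hlk)

theorem smul (h : KruskalRankAtLeast K v k) {w : ι → K} (hw : ∀ i, w i ≠ 0) :
    KruskalRankAtLeast K (fun i => w i • v i) k :=
  fun s hs => (h s hs).smul_of_ne_zero fun i _ => hw i

theorem ne_zero (h : KruskalRankAtLeast K v k) (hk : 1 ≤ k) (i : ι) : v i ≠ 0 :=
  (h {i} (by simpa using hk)).ne_zero (by simp)

theorem exists_dual [Fintype ι] (h : KruskalRankAtLeast K v k) (hk : k ≤ Fintype.card ι)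
    {i₀ : ι} {U : Finset ι} (hi₀ : i₀ ∉ U) (hU : #U < k) :
    ∃ f : Dual K V, f (v i₀) ≠ 0 ∧ (∀ i ∈ U, f (v i) = 0) ∧
      #{i | f (v i) ≠ 0} + k ≤ Fintype.card ι + 1 := by
  obtain ⟨T, hUT, hT, hTcard⟩ := exists_subsuperset_card_eq (n := k - 1)
    (subset_erase.2 ⟨subset_univ U, hi₀⟩) (by omega)
    (by rw [card_erase_of_mem (mem_univ _), card_univ]; omega)
  have hi₀T : i₀ ∉ T := fun hi => by simpa using hT hi
  have hind := h (insert i₀ T) (by rw [card_insert_of_notMem hi₀T]; omega)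
  rw [coe_insert, linearIndepOn_insert (by simpa using hi₀T)] at hind
  obtain ⟨f, hf₀, hfT⟩ := exists_dual_map_eq_bot_of_notMem hind.2 inferInstance
  have hfT' : ∀ i ∈ T, f (v i) = 0 := fun i hi => by
    have := mem_map_of_mem (f := f) (subset_span ⟨i, hi, rfl⟩ : v i ∈ span K (v '' T))
    rwa [hfT, mem_bot] at this
  refine ⟨f, hf₀, fun i hi => hfT' i (hUT hi), ?_⟩
  have hsupp : ({i | f (v i) ≠ 0} : Finset ι) ⊆ Tᶜ := fun i hi => by
    simp only [mem_filter, mem_univ, true_and, mem_compl] at hi ⊢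
    exact fun hiT => hi (hfT' i hiT)
  have := card_le_card hsupp
  rw [card_compl] at this
  omega

variable [FiniteDimensional K V]

theorem min_le_finrank_span (h : KruskalRankAtLeast K v k) (s : Finset ι) :
    min k #s ≤ finrank K (span K (v '' s)) := by
  obtain ⟨t, hts, hcard⟩ := exists_subset_card_eq (min_le_right k #s)
  rw [← hcard]
  exact (h t (by omega)).card_le_finrank fun i hi => subset_span ⟨i, hts hi, rfl⟩

variable [Fintype ι]

theorem card_filter_mem_le_finrank (h : KruskalRankAtLeast K v k) {W : Submodule K V}
    (hW : finrank K W < k) : #{i | v i ∈ W} ≤ finrank K W := by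
  by_contra! hlt
  obtain ⟨s, hs, hcard⟩ := exists_subset_card_eq hlt
  have := (h s (by omega)).card_le_finrank fun i hi => by simpa using hs hi
  omega

end KruskalRankAtLeast

end KruskalRank

theorem Finset.sum_card_sdiff_add_card_le {ι κ : Type*} [Fintype ι] [DecidableEq ι]
    (J : Finset κ) (A : κ → Finset ι) (Z : Finset ι)
    (h : ∀ j₁ ∈ J, ∀ j₂ ∈ J, j₁ ≠ j₂ → A j₁ ∩ A j₂ ⊆ Z) :
    ∑ j ∈ J, #(A j \ Z) + #Z ≤ Fintype.card ι := by
  have hdisj : (J : Set κ).PairwiseDisjoint fun j => A j \ Z := by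
    intro j₁ hj₁ j₂ hj₂ hne
    simp only [Function.onFun, disjoint_left, mem_sdiff]
    exact fun i hi₁ hi₂ => hi₁.2 (h j₁ hj₁ j₂ hj₂ hne (mem_inter.2 ⟨hi₁.1, hi₂.1⟩))
  rw [← card_biUnion hdisj, ← card_union_of_disjoint]
  · exact card_le_univ _
  · simp only [disjoint_left, mem_biUnion, mem_sdiff]
    rintro i ⟨j, -, -, hiZ⟩
    exact hiZ

section PermutationLemma

open scoped Classical

variable {K V ι : Type*} [Field K] [AddCommGroup V] [Module K V] [FiniteDimensional K V]

theorem span_image_insert_inf_span_image_insert {v : ι → V} {R : Finset ι} {j₁ j₂ : ι}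
    (h : LinearIndepOn K v ↑(insert j₁ (insert j₂ R))) (hj₁ : j₁ ∉ insert j₂ R)
    (hj₂ : j₂ ∉ R) :
    span K (v '' ↑(insert j₁ R)) ⊓ span K (v '' ↑(insert j₂ R)) = span K (v '' ↑R) := by
  have hj₁R : j₁ ∉ R := fun hj => hj₁ (mem_insert_of_mem hj)
  have h₁ : LinearIndepOn K v ↑(insert j₁ R) := h.mono (by gcongr; exact subset_insert _ _)
  have h₂ : LinearIndepOn K v ↑(insert j₂ R) :=
    h.mono (by simp [Set.subset_insert])
  have hR : LinearIndepOn K v ↑R := h₂.mono (by simp)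
  have hsup : span K (v '' ↑(insert j₁ R)) ⊔ span K (v '' ↑(insert j₂ R)) =
      span K (v '' ↑(insert j₁ (insert j₂ R))) := by
    rw [← span_union, ← Set.image_union]
    congr 2
    ext
    simp only [coe_insert, Set.mem_union, Set.mem_insert_iff, mem_coe]
    tauto
  have hdim := finrank_sup_add_finrank_inf_eq (span K (v '' ↑(insert j₁ R)))
    (span K (v '' ↑(insert j₂ R)))
  rw [hsup, h.finrank_span_image_eq_card, h₁.finrank_span_image_eq_card,
    h₂.finrank_span_image_eq_card, card_insert_of_notMem hj₁, card_insert_of_notMem hj₂,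
    card_insert_of_notMem hj₁R] at hdim
  refine (eq_of_le_of_finrank_le (le_inf (span_mono ?_) (span_mono ?_)) ?_).symm
  · exact Set.image_mono (by simp)
  · exact Set.image_mono (by simp)
  · rw [hR.finrank_span_image_eq_card]
    omega

variable [Fintype ι] {c c' : ι → V} {k : ℕ}

/-- The inductive step of Kruskal's permutation lemma: the subspaces spanned by `R` and one
more `c'_j` meet pairwise in the span of `R`, and this leaves no room for a deficit. -/
theorem card_filter_mem_span_image_of_insert (hc : KruskalRankAtLeast K c k)
    (hc' : KruskalRankAtLeast K c' k) (hk : k ≤ Fintype.card ι) {R : Finset ι}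
    (hR : #R + 2 ≤ k)
    (hins : ∀ j ∉ R, #{i | c i ∈ span K (c' '' ↑(insert j R))} = #R + 1) :
    #{i | c i ∈ span K (c' '' ↑R)} = #R := by
  set Z : Finset ι := {i | c i ∈ span K (c' '' ↑R)}
  set A : ι → Finset ι := fun j => {i | c i ∈ span K (c' '' ↑(insert j R))}
  have hdimR := (hc' R (by omega)).finrank_span_image_eq_card
  have hZ : #Z ≤ #R := hdimR ▸ hc.card_filter_mem_le_finrank (by omega)
  have hZA : ∀ j, Z ⊆ A j := fun j i hi => by
    simp only [Z, A, mem_filter, mem_univ, true_and] at hi ⊢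
    exact span_mono (Set.image_mono (by simp)) hi
  have hinter : ∀ j₁ ∈ Rᶜ, ∀ j₂ ∈ Rᶜ, j₁ ≠ j₂ → A j₁ ∩ A j₂ ⊆ Z := by
    intro j₁ hj₁ j₂ hj₂ hne i hi
    rw [mem_compl] at hj₁ hj₂
    simp only [Z, A, mem_inter, mem_filter, mem_univ, true_and] at hi ⊢
    have hcard : #(insert j₁ (insert j₂ R)) ≤ k := by
      rw [card_insert_of_notMem (by simp [hne, hj₁]), card_insert_of_notMem hj₂]
      omega
    rw [← span_image_insert_inf_span_image_insert (hc' _ hcard) (by simp [hne, hj₁]) hj₂]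
    exact hi
  have hcount := Finset.sum_card_sdiff_add_card_le Rᶜ A Z hinter
  rw [sum_congr rfl fun j hj => by rw [card_sdiff_of_subset (hZA j), hins j (mem_compl.1 hj)],
    sum_const, card_compl, smul_eq_mul] at hcount
  obtain ⟨d, hd⟩ := Nat.exists_eq_add_of_le hZ
  obtain ⟨e, he⟩ := Nat.exists_eq_add_of_le (hR.trans hk)
  rw [he, show #R + 2 + e - #R = e + 2 by omega, hd,
    show #Z + d + 1 - #Z = d + 1 by omega] at hcount
  nlinarith

theorem card_filter_mem_span_image_eq (hc : KruskalRankAtLeast K c k)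
    (hc' : KruskalRankAtLeast K c' k) (hk : k ≤ Fintype.card ι)
    (hcount : ∀ W : Submodule K V, k ≤ #{j | c' j ∈ W} + 1 →
      #{j | c' j ∈ W} ≤ #{i | c i ∈ W})
    (R : Finset ι) (hR : #R < k) : #{i | c i ∈ span K (c' '' ↑R)} = #R := by
  obtain ⟨g, hg⟩ := Nat.exists_eq_add_of_lt hR
  induction g generalizing R with
  | zero =>
    have hdim := (hc' R hR.le).finrank_span_image_eq_card
    have hle : #R ≤ #{j | c' j ∈ span K (c' '' ↑R)} :=
      card_le_card fun j hj => by
        simpa using subset_span (Set.mem_image_of_mem c' (mem_coe.2 hj))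
    have := hc.card_filter_mem_le_finrank (W := span K (c' '' ↑R)) (by omega)
    have := hcount (span K (c' '' ↑R)) (by omega)
    omega
  | succ g ih =>
    refine card_filter_mem_span_image_of_insert hc hc' hk (by omega) fun j hj => ?_
    rw [← card_insert_of_notMem hj]
    exact ih _ (by rw [card_insert_of_notMem hj]; omega) (by rw [card_insert_of_notMem hj]; omega)

/-- **Kruskal's permutation lemma.** -/
theorem exists_perm_span_singleton_eq_of_forall_card_filter_mem_le (hk : 2 ≤ k)
    (hkι : k ≤ Fintype.card ι) (hc : KruskalRankAtLeast K c k) (hc' : KruskalRankAtLeast K c' k)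
    (hcount : ∀ W : Submodule K V, k ≤ #{j | c' j ∈ W} + 1 →
      #{j | c' j ∈ W} ≤ #{i | c i ∈ W}) :
    ∃ σ : Equiv.Perm ι, ∀ j, K ∙ c' j = K ∙ c (σ j) := by
  have hone : ∀ j, #{i | c i ∈ K ∙ c' j} = 1 := fun j => by
    simpa using card_filter_mem_span_image_eq hc hc' hkι hcount {j} (by simp; omega)
  choose ν hν using fun j => card_eq_one.1 (hone j)
  have hspan : ∀ j, K ∙ c' j = K ∙ c (ν j) := fun j => by
    have hmem : ν j ∈ ({i | c i ∈ K ∙ c' j} : Finset ι) := by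
      rw [hν j]
      exact mem_singleton_self _
    rw [mem_filter] at hmem
    exact (span_singleton_eq_of_le ((span_singleton_le_iff_mem _ _).2 hmem.2)
      (hc.ne_zero (by omega) _)).symm
  have hinj : Function.Injective ν := fun j₁ j₂ h => by
    have hW := hc'.card_filter_mem_le_finrank (W := K ∙ c (ν j₁))
      (by rw [finrank_span_singleton (hc.ne_zero (by omega) _)]; omega)
    rw [finrank_span_singleton (hc.ne_zero (by omega) _)] at hW
    refine card_le_one.1 hW j₁ ?_ j₂ ?_
    · simp [← hspan, mem_span_singleton_self]
    · simp [h, ← hspan, mem_span_singleton_self]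
  exact ⟨Equiv.ofBijective ν (Finite.injective_iff_bijective.1 hinj), hspan⟩

end PermutationLemma

section Tensor

variable {K ι α β γ : Type*} [Field K] [Fintype ι]

/-- The paper's `[v; M₁, M₂, M₃]` is `cpTensor (fun i => v i • M₁ i) M₂ M₃`. -/
def cpTensor (a : ι → α → K) (b : ι → β → K) (c : ι → γ → K) (s : α) (t : β) (u : γ) : K :=
  ∑ i, a i s * b i t * c i u

def cpMatrix (w : ι → K) (a : ι → α → K) (b : ι → β → K) : Matrix α β K :=
  Matrix.of fun s t => ∑ i, w i * a i s * b i t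

variable {a a' : ι → α → K} {b b' : ι → β → K} {c c' : ι → γ → K}

theorem cpTensor_rotate_eq (h : cpTensor a b c = cpTensor a' b' c') :
    cpTensor b c a = cpTensor b' c' a' := by
  ext t u s
  have := congrFun (congrFun (congrFun h s) t) u
  simp only [cpTensor] at this ⊢
  simpa only [mul_comm, mul_left_comm] using this

theorem cpTensor_comp_perm (σ : Equiv.Perm ι) :
    cpTensor (fun j => a (σ j)) (fun j => b (σ j)) (fun j => c (σ j)) = cpTensor a b c := by
  ext s t u
  exact Equiv.sum_comp σ fun i => a i s * b i t * c i u

theorem cpMatrix_apply_dual (f : Dual K (γ → K)) (s : α) (t : β) :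
    cpMatrix (fun i => f (c i)) a b s t = f fun u => cpTensor a b c s t u := by
  have : (fun u => cpTensor a b c s t u) = ∑ i, (a i s * b i t) • c i := by
    ext u
    simp [cpTensor, Finset.sum_apply]
  rw [this, map_sum]
  simp only [cpMatrix, Matrix.of_apply, map_smul, smul_eq_mul]
  exact sum_congr rfl fun i _ => by ring

theorem cpMatrix_eq_of_cpTensor_eq (h : cpTensor a b c = cpTensor a' b' c')
    (f : Dual K (γ → K)) :
    cpMatrix (fun i => f (c i)) a b = cpMatrix (fun i => f (c' i)) a' b' := by
  ext s t
  rw [cpMatrix_apply_dual, cpMatrix_apply_dual, h]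

open scoped Classical

variable {w : ι → K}

theorem cpMatrix_eq_mul (S : Finset ι) (hS : ∀ i, w i ≠ 0 → i ∈ S) :
    cpMatrix w a b =
      (Matrix.of fun s (i : S) => a i s) * Matrix.of fun (i : S) t => w i * b i t := by
  ext s t
  simp only [cpMatrix, Matrix.of_apply, Matrix.mul_apply]
  rw [sum_coe_sort S fun i => a i s * (w i * b i t), ← sum_subset (subset_univ S)]
  · exact sum_congr rfl fun i _ => by ring
  · intro i _ hi
    simp [not_imp_comm.1 (hS i) hi]

variable [Fintype β]

theorem rank_cpMatrix_le_card : (cpMatrix w a b).rank ≤ #{i | w i ≠ 0} := by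
  rw [cpMatrix_eq_mul {i | w i ≠ 0} (by simp)]
  exact (Matrix.rank_mul_le_left _ _).trans
    ((Matrix.rank_le_card_width _).trans (Fintype.card_coe _).le)

theorem range_cpMatrix_le :
    LinearMap.range (cpMatrix w a b).mulVecLin ≤ span K (a '' ↑({i | w i ≠ 0} : Finset ι)) := by
  rw [cpMatrix_eq_mul {i | w i ≠ 0} (by simp), Matrix.mulVecLin_mul, LinearMap.range_comp,
    Matrix.range_mulVecLin, Set.image_eq_range]
  exact LinearMap.map_le_range.trans_eq (by rw [Matrix.range_mulVecLin]; rfl)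

variable [Fintype α] {k₁ k₂ : ℕ}

/-- Sylvester's inequality applied to the factorisation `cpMatrix w a b = A * B` through the
support of `w`. -/
theorem min_add_min_le_card_add_rank_cpMatrix (ha : KruskalRankAtLeast K a k₁)
    (hb : KruskalRankAtLeast K b k₂) :
    min k₁ #{i | w i ≠ 0} + min k₂ #{i | w i ≠ 0} ≤ #{i | w i ≠ 0} + (cpMatrix w a b).rank := by
  set S : Finset ι := {i | w i ≠ 0}
  have hA : min k₁ #S ≤ (Matrix.of fun s (i : S) => a i s).rank := by
    rw [Matrix.rank_eq_finrank_span_cols, show Set.range (Matrix.of fun s (i : S) => a i s).col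
      = a '' ↑S by rw [Set.image_eq_range]; rfl]
    exact ha.min_le_finrank_span S
  have hB : min k₂ #S ≤ (Matrix.of fun (i : S) t => w i * b i t).rank := by
    rw [Matrix.rank_eq_finrank_span_row]
    obtain ⟨T, hTS, hT⟩ := exists_subset_card_eq (min_le_right k₂ #S)
    rw [← hT]
    refine ((hb T (by omega)).smul_of_ne_zero (w := w) fun i hi => ?_).card_le_finrank
      fun i hi => ?_
    · simpa [S] using hTS hi
    · exact subset_span ⟨⟨i, hTS hi⟩, rfl⟩
  have := Matrix.rank_add_rank_le_card_add_rank_mul (Matrix.of fun s (i : S) => a i s)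
    (Matrix.of fun (i : S) t => w i * b i t)
  rw [← cpMatrix_eq_mul S (by simp [S]), Fintype.card_coe] at this
  omega

theorem rank_cpMatrix_eq_card (ha : KruskalRankAtLeast K a k₁) (hb : KruskalRankAtLeast K b k₂)
    (h₁ : #{i | w i ≠ 0} ≤ k₁) (h₂ : #{i | w i ≠ 0} ≤ k₂) :
    (cpMatrix w a b).rank = #{i | w i ≠ 0} := by
  have := min_add_min_le_card_add_rank_cpMatrix (w := w) ha hb
  have := rank_cpMatrix_le_card (w := w) (a := a) (b := b)
  rw [min_eq_right h₁, min_eq_right h₂] at *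
  omega

theorem eq_zero_of_cpMatrix_eq_zero (ha : KruskalRankAtLeast K a k₁)
    (hb : KruskalRankAtLeast K b k₂) (h₁ : #{i | w i ≠ 0} ≤ k₁) (h₂ : #{i | w i ≠ 0} ≤ k₂)
    (h : cpMatrix w a b = 0) : w = 0 := by
  have := rank_cpMatrix_eq_card ha hb h₁ h₂
  rw [h, Matrix.rank_zero, eq_comm, card_eq_zero, filter_eq_empty_iff] at this
  ext i
  simpa using this (mem_univ i)

/-- The column space has full dimension `#{i | w i ≠ 0}`, so it is the span of the `aᵢ` with
`i ∈ T`; an `i ∈ T` outside the support would extend an independent family inside it. -/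
theorem subset_support_of_range_cpMatrix_le (ha : KruskalRankAtLeast K a k₁)
    (hb : KruskalRankAtLeast K b k₂) (h₁ : #{i | w i ≠ 0} < k₁) (h₂ : #{i | w i ≠ 0} ≤ k₂)
    {T : Finset ι} (hT : #T ≤ #{i | w i ≠ 0})
    (hrange : LinearMap.range (cpMatrix w a b).mulVecLin ≤ span K (a '' T)) :
    T ⊆ ({i | w i ≠ 0} : Finset ι) := by
  set S : Finset ι := {i | w i ≠ 0}
  have hrank := rank_cpMatrix_eq_card ha hb h₁.le h₂
  have heq : LinearMap.range (cpMatrix w a b).mulVecLin = span K (a '' T) :=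
    eq_of_le_of_finrank_le hrange ((finrank_span_image_le_card a T).trans (hT.trans hrank.symm.le))
  intro i hiT
  by_contra hiS
  have hind := ha (insert i S) (by rw [card_insert_of_notMem hiS]; omega)
  rw [coe_insert, linearIndepOn_insert (by simpa using hiS)] at hind
  exact hind.2 (range_cpMatrix_le (heq ▸ subset_span (Set.mem_image_of_mem a (mem_coe.2 hiT))))

end Tensor

section KruskalCondition

open scoped Classical

variable {K ι α β γ : Type*} [Field K] [Fintype ι]

/-- Kruskal's condition on `cpTensor a b c`. The bounds `kᵢ ≤ card ι` are not vacuous: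
`KruskalRankAtLeast K a k` is the same statement for every `k ≥ card ι`. -/
structure KruskalCondition (a : ι → α → K) (b : ι → β → K) (c : ι → γ → K) (k₁ k₂ k₃ : ℕ) :
    Prop where
  kruskal₁ : KruskalRankAtLeast K a k₁
  kruskal₂ : KruskalRankAtLeast K b k₂
  kruskal₃ : KruskalRankAtLeast K c k₃
  le_card₁ : k₁ ≤ Fintype.card ι
  le_card₂ : k₂ ≤ Fintype.card ι
  le_card₃ : k₃ ≤ Fintype.card ι
  two_mul_card_add_two_le : 2 * Fintype.card ι + 2 ≤ k₁ + k₂ + k₃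

namespace KruskalCondition

variable {a a' : ι → α → K} {b b' : ι → β → K} {c c' : ι → γ → K}
  {k₁ k₂ k₃ k₁' k₂' k₃' : ℕ}

theorem rotate (h : KruskalCondition a b c k₁ k₂ k₃) : KruskalCondition b c a k₂ k₃ k₁ :=
  ⟨h.kruskal₂, h.kruskal₃, h.kruskal₁, h.le_card₂, h.le_card₃, h.le_card₁,
    by have := h.two_mul_card_add_two_le; omega⟩

theorem two_le (h : KruskalCondition a b c k₁ k₂ k₃) : 2 ≤ k₃ := by
  have := h.le_card₁
  have := h.le_card₂
  have := h.two_mul_card_add_two_le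
  omega

theorem exists_dual (h : KruskalCondition a b c k₁ k₂ k₃) {i₀ : ι} {U : Finset ι}
    (hi₀ : i₀ ∉ U) (hU : #U < k₃) :
    ∃ f : Dual K (γ → K), f (c i₀) ≠ 0 ∧ (∀ i ∈ U, f (c i) = 0) ∧
      #{i | f (c i) ≠ 0} < k₁ ∧ #{i | f (c i) ≠ 0} < k₂ := by
  obtain ⟨f, hf₀, hfU, hcard⟩ := h.kruskal₃.exists_dual h.le_card₃ hi₀ hU
  have := h.le_card₁
  have := h.le_card₂
  have := h.two_mul_card_add_two_le
  exact ⟨f, hf₀, hfU, by omega, by omega⟩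

variable [Fintype α] [Fintype β]

/-- The counting hypothesis of Kruskal's permutation lemma, obtained by contracting with a
functional that vanishes at a `c_i` or `c'_j` exactly when it lies in `W`. -/
theorem card_filter_mem_le [Infinite K] (h : KruskalCondition a b c k₁ k₂ k₃)
    (heq : cpTensor a b c = cpTensor a' b' c') (W : Submodule K (γ → K))
    (hW : k₃ ≤ #{j | c' j ∈ W} + 1) : #{j | c' j ∈ W} ≤ #{i | c i ∈ W} := by
  obtain ⟨f, hf⟩ := exists_dual_apply_eq_zero_iff_mem W (Sum.elim c c')
  have hsupp : ∀ x : ι → γ → K, (∀ i, f (x i) = 0 ↔ x i ∈ W) →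
      #{i | f (x i) ≠ 0} + #{i | x i ∈ W} = Fintype.card ι := fun x hx => by
    have hsplit := card_filter_add_card_filter_not (s := univ) (fun i => x i ∈ W)
    rw [card_univ, add_comm] at hsplit
    rwa [filter_congr fun i _ => (hx i).not]
  have hc := hsupp c fun i => hf (Sum.inl i)
  have hc' := hsupp c' fun i => hf (Sum.inr i)
  have hlower := min_add_min_le_card_add_rank_cpMatrix (w := fun i => f (c i)) h.kruskal₁
    h.kruskal₂
  have hupper := rank_cpMatrix_le_card (w := fun i => f (c' i)) (a := a') (b := b')
  rw [cpMatrix_eq_of_cpTensor_eq heq f] at hlower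
  have := h.le_card₁
  have := h.le_card₂
  have := h.two_mul_card_add_two_le
  omega

theorem exists_perm_span_singleton_eq [Infinite K] [Fintype γ] (h : KruskalCondition a b c k₁ k₂ k₃)
    (h' : KruskalCondition a' b' c' k₁' k₂' k₃') (heq : cpTensor a b c = cpTensor a' b' c') :
    ∃ σ : Equiv.Perm ι, ∀ j, K ∙ c' j = K ∙ c (σ j) := by
  wlog hk : k₃ ≤ k₃' generalizing a b c a' b' c' k₁ k₂ k₃ k₁' k₂' k₃'
  · obtain ⟨τ, hτ⟩ := this h' h heq.symm (by omega)
    exact ⟨τ.symm, fun j => by rw [hτ, Equiv.apply_symm_apply]⟩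
  exact exists_perm_span_singleton_eq_of_forall_card_filter_mem_le h.two_le h.le_card₃
    h.kruskal₃ (h'.kruskal₃.mono hk) (h.card_filter_mem_le heq)

/-- The permutations matching the first and the third factors coincide: otherwise a
contraction supported away from `σa j₀` but not from `σc j₀` would have a column space
spanned by `aᵢ` outside its support. -/
theorem perm_eq (h : KruskalCondition a b c k₁ k₂ k₃) (heq : cpTensor a b c = cpTensor a' b' c')
    {σa σc : Equiv.Perm ι} (ha : ∀ j, K ∙ a' j = K ∙ a (σa j))
    (hc : ∀ j, K ∙ c' j = K ∙ c (σc j)) : σa = σc := by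
  ext j₀
  by_contra hne
  obtain ⟨f, hf₀, hf₁, hk₁, hk₂⟩ := h.exists_dual (i₀ := σc j₀) (U := {σa j₀})
    (by simpa [eq_comm] using hne) (by rw [card_singleton]; exact h.two_le)
  set S : Finset ι := {i | f (c i) ≠ 0}
  set S' : Finset ι := {j | f (c' j) ≠ 0}
  have hS' : ∀ j, j ∈ S' ↔ σc j ∈ S := fun j => by
    simp [S, S', apply_eq_zero_iff_of_span_singleton_eq f (hc j)]
  have hcard : #(S'.image σa) ≤ #S :=
    card_image_le.trans (card_le_card_of_injOn σc (fun j hj => (hS' j).1 hj) σc.injective.injOn)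
  have hrange : LinearMap.range (cpMatrix (fun i => f (c i)) a b).mulVecLin ≤
      span K (a '' ↑(S'.image σa)) := by
    rw [cpMatrix_eq_of_cpTensor_eq heq f]
    refine range_cpMatrix_le.trans (span_le.2 ?_)
    rintro _ ⟨j, hj, rfl⟩
    rw [SetLike.mem_coe, ← span_singleton_le_iff_mem, ha]
    exact span_mono (Set.singleton_subset_iff.2
      (Set.mem_image_of_mem a (mem_coe.2 (mem_image_of_mem σa (mem_coe.1 hj)))))
  have hsub := subset_support_of_range_cpMatrix_le h.kruskal₁ h.kruskal₂ hk₁ hk₂.le hcard hrange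
  have hmem : σa j₀ ∈ S'.image σa := mem_image_of_mem σa ((hS' j₀).2 (by simpa [S] using hf₀))
  exact (by simpa [S] using hsub hmem : f (c (σa j₀)) ≠ 0) (hf₁ _ (mem_singleton_self _))

theorem smul_eq_one_of_cpTensor_eq (h : KruskalCondition a b c k₁ k₂ k₃) {μ : ι → K}
    (heq : cpTensor (fun i => μ i • a i) b c = cpTensor a b c) (i₀ : ι) : μ i₀ = 1 := by
  obtain ⟨f, hf₀, -, hk₁, hk₂⟩ := h.exists_dual (i₀ := i₀) (U := ∅) (by simp)
    (by simp; have := h.two_le; omega)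
  have hzero : cpMatrix (fun i => (μ i - 1) * f (c i)) a b = 0 := by
    have := cpMatrix_eq_of_cpTensor_eq heq f
    ext s t
    have hst := congrFun (congrFun this s) t
    simp only [cpMatrix, Matrix.of_apply, Pi.smul_apply, smul_eq_mul] at hst ⊢
    simp only [Matrix.zero_apply, sub_mul, sum_sub_distrib, one_mul]
    rw [sub_eq_zero, ← hst]
    exact sum_congr rfl fun i _ => by ring
  have hsupp : #{i | (μ i - 1) * f (c i) ≠ 0} ≤ #{i | f (c i) ≠ 0} :=
    card_le_card fun i => by simp only [mem_filter, mem_univ, true_and]; exact right_ne_zero_of_mul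
  have := congrFun (eq_zero_of_cpMatrix_eq_zero h.kruskal₁ h.kruskal₂ (by omega) (by omega)
    hzero) i₀
  simpa [sub_eq_zero, hf₀] using this

theorem eq_of_cpTensor_eq_comp (h : KruskalCondition a b c k₁ k₂ k₃) {σ : Equiv.Perm ι}
    (heq : cpTensor a b c = cpTensor a' (fun j => b (σ j)) (fun j => c (σ j)))
    (ha : ∀ j, a' j ∈ K ∙ a (σ j)) (j : ι) : a' j = a (σ j) := by
  choose μ hμ using fun j => mem_span_singleton.1 (ha j)
  have heq' : cpTensor (fun i => μ (σ.symm i) • a i) b c = cpTensor a b c := by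
    rw [heq, ← cpTensor_comp_perm σ]
    congr 1
    ext1 j
    simp [hμ]
  rw [← hμ j, show μ j = 1 by simpa using h.smul_eq_one_of_cpTensor_eq heq' (σ j), one_smul]

end KruskalCondition

/-- **Kruskal's theorem**, up to scaling of the rank-one terms. -/
theorem exists_perm_of_cpTensor_eq {K ι α β γ : Type*} [Field K] [Infinite K] [Fintype ι]
    [Fintype α] [Fintype β] [Fintype γ] {a a' : ι → α → K} {b b' : ι → β → K}
    {c c' : ι → γ → K} {k₁ k₂ k₃ k₁' k₂' k₃' : ℕ} (h : KruskalCondition a b c k₁ k₂ k₃)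
    (h' : KruskalCondition a' b' c' k₁' k₂' k₃') (heq : cpTensor a b c = cpTensor a' b' c') :
    ∃ σ : Equiv.Perm ι, ∀ j,
      K ∙ a' j = K ∙ a (σ j) ∧ K ∙ b' j = K ∙ b (σ j) ∧ K ∙ c' j = K ∙ c (σ j) := by
  have heq₁ := cpTensor_rotate_eq heq
  have heq₂ := cpTensor_rotate_eq heq₁
  obtain ⟨σ, hc⟩ := h.exists_perm_span_singleton_eq h' heq
  obtain ⟨σa, ha⟩ := h.rotate.exists_perm_span_singleton_eq h'.rotate heq₁
  obtain ⟨σb, hb⟩ := h.rotate.rotate.exists_perm_span_singleton_eq h'.rotate.rotate heq₂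
  obtain rfl := h.perm_eq heq ha hc
  obtain rfl := h.rotate.perm_eq heq₁ hb ha
  exact ⟨σb, fun j => ⟨ha j, hb j, hc j⟩⟩

end KruskalCondition

section KruskalRankOfMatrix

variable {r κ : ℕ} (M : Fin r → Fin κ → ℝ)

theorem kruskalRank_mem : kruskalRank M ∈ {I | I ≤ r ∧ ∀ S : Finset (Fin r), S.card = I →
    LinearIndependent ℝ (fun i : {i // i ∈ S} => M i.1)} :=
  Nat.sSup_mem ⟨0, Nat.zero_le r, fun S hS => by
    rw [card_eq_zero.1 hS]
    exact linearIndependent_empty_type⟩ ⟨r, fun _ hI => hI.1⟩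

theorem kruskalRank_le : kruskalRank M ≤ r :=
  (kruskalRank_mem M).1

theorem kruskalRankAtLeast_kruskalRank : KruskalRankAtLeast ℝ M (kruskalRank M) := fun S hS => by
  obtain ⟨T, hST, -, hT⟩ :=
    exists_subsuperset_card_eq (subset_univ S) hS (by simpa using kruskalRank_le M)
  exact LinearIndepOn.mono ((kruskalRank_mem M).2 T hT) (by simpa using hST)

end KruskalRankOfMatrix

theorem kruskalCondition_of_kruskalRank {r κ₁ κ₂ κ₃ : ℕ} {v : Fin r → ℝ} (hv : ∀ i, v i ≠ 0)
    {M₁ : Fin r → Fin κ₁ → ℝ} {M₂ : Fin r → Fin κ₂ → ℝ} {M₃ : Fin r → Fin κ₃ → ℝ}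
    (hK : 2 * r + 2 ≤ kruskalRank M₁ + kruskalRank M₂ + kruskalRank M₃) :
    KruskalCondition (fun i => v i • M₁ i) M₂ M₃
      (kruskalRank M₁) (kruskalRank M₂) (kruskalRank M₃) := by
  refine ⟨(kruskalRankAtLeast_kruskalRank M₁).smul hv, kruskalRankAtLeast_kruskalRank M₂,
    kruskalRankAtLeast_kruskalRank M₃, ?_, ?_, ?_, by simpa using hK⟩
  all_goals simpa using kruskalRank_le _

theorem eq_of_smul_eq_smul_of_sum_eq_one {ι K : Type*} [Fintype ι] [Field K] {x y : ι → K}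
    {p q : K} (hx : ∑ i, x i = 1) (hy : ∑ i, y i = 1) (hp : p ≠ 0) (h : p • x = q • y) :
    p = q ∧ x = y := by
  have hpq : p = q := by
    simpa [← mul_sum, hx, hy] using congrArg (fun z => ∑ i, z i) h
  exact ⟨hpq, smul_right_injective _ hp (by rwa [← hpq] at h)⟩

theorem eq_of_mem_span_singleton_of_sum_eq_one {ι K : Type*} [Fintype ι] [Field K]
    {x y : ι → K} (hx : ∑ i, x i = 1) (hy : ∑ i, y i = 1) (h : x ∈ K ∙ y) : x = y := by
  obtain ⟨q, rfl⟩ := mem_span_singleton.1 h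
  rw [show q = 1 by simpa [← mul_sum, hy] using hx, one_smul]

/-- Kruskal's theorem (statistical form): if `v, v'` have positive entries, the matrices
`M_j, M'_j` are row-stochastic, both triples satisfy the Kruskal condition
`rank_K M₁ + rank_K M₂ + rank_K M₃ ≥ 2r + 2`, and the associated 3-way tensors
`[v; M₁, M₂, M₃]` and `[v'; M'₁, M'₂, M'₃]` coincide, then the parameters agree up to a
simultaneous permutation of the rows. -/
theorem kruskal_theorem
    (r κ₁ κ₂ κ₃ : ℕ)
    (v v' : Fin r → ℝ)
    (M₁ M₁' : Fin r → Fin κ₁ → ℝ)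
    (M₂ M₂' : Fin r → Fin κ₂ → ℝ)
    (M₃ M₃' : Fin r → Fin κ₃ → ℝ)
    (hv : ∀ i, 0 < v i) (hv' : ∀ i, 0 < v' i)
    (hM₁ : ∀ i, (∀ s, 0 ≤ M₁ i s) ∧ ∑ s, M₁ i s = 1)
    (hM₂ : ∀ i, (∀ t, 0 ≤ M₂ i t) ∧ ∑ t, M₂ i t = 1)
    (hM₃ : ∀ i, (∀ u, 0 ≤ M₃ i u) ∧ ∑ u, M₃ i u = 1)
    (hM₁' : ∀ i, (∀ s, 0 ≤ M₁' i s) ∧ ∑ s, M₁' i s = 1)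
    (hM₂' : ∀ i, (∀ t, 0 ≤ M₂' i t) ∧ ∑ t, M₂' i t = 1)
    (hM₃' : ∀ i, (∀ u, 0 ≤ M₃' i u) ∧ ∑ u, M₃' i u = 1)
    (hK : kruskalRank M₁ + kruskalRank M₂ + kruskalRank M₃ ≥ 2 * r + 2)
    (hK' : kruskalRank M₁' + kruskalRank M₂' + kruskalRank M₃' ≥ 2 * r + 2)
    (heq : ∀ (s : Fin κ₁) (t : Fin κ₂) (u : Fin κ₃),
      ∑ i, v i * M₁ i s * M₂ i t * M₃ i u
        = ∑ i, v' i * M₁' i s * M₂' i t * M₃' i u) :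
    ∃ σ : Equiv.Perm (Fin r),
      (∀ i, v' i = v (σ i)) ∧
      (∀ i s, M₁' i s = M₁ (σ i) s) ∧
      (∀ i t, M₂' i t = M₂ (σ i) t) ∧
      (∀ i u, M₃' i u = M₃ (σ i) u) := by
  have hC := kruskalCondition_of_kruskalRank (fun i => (hv i).ne') hK
  have hC' := kruskalCondition_of_kruskalRank (fun i => (hv' i).ne') hK'
  have htensor : cpTensor (fun i => v i • M₁ i) M₂ M₃ = cpTensor (fun i => v' i • M₁' i) M₂' M₃' :=
    funext fun s => funext fun t => funext fun u => heq s t u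
  obtain ⟨σ, hσ⟩ := exists_perm_of_cpTensor_eq hC hC' htensor
  have h₂ : ∀ i, M₂' i = M₂ (σ i) := fun i => eq_of_mem_span_singleton_of_sum_eq_one (hM₂' i).2
    (hM₂ (σ i)).2 ((hσ i).2.1 ▸ mem_span_singleton_self _)
  have h₃ : ∀ i, M₃' i = M₃ (σ i) := fun i => eq_of_mem_span_singleton_of_sum_eq_one (hM₃' i).2
    (hM₃ (σ i)).2 ((hσ i).2.2 ▸ mem_span_singleton_self _)
  rw [show M₂' = fun i => M₂ (σ i) from funext h₂, show M₃' = fun i => M₃ (σ i) from funext h₃]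
    at htensor
  have h₁ := fun i => eq_of_smul_eq_smul_of_sum_eq_one (hM₁' i).2 (hM₁ (σ i)).2 (hv' i).ne'
    (hC.eq_of_cpTensor_eq_comp htensor (fun i => (hσ i).1 ▸ mem_span_singleton_self _) i)
  exact ⟨σ, fun i => (h₁ i).1, fun i => congrFun (h₁ i).2, fun i => congrFun (h₂ i),
    fun i => congrFun (h₃ i)⟩
end

section
/- Let Q ≥ 2 and let π ∈ [0,1]^Q with Σ_{q=1}^Q π_q = 1; set s_k = Σ_{q=1}^Q π_q^k. Then: (i) if π_q > 0 for at least two values of q, then −2 s_2³ + 3 s_2 s_3 − s_3 ≠ 0; (ii) s_3 − s_2² = 0 if, and only if, π is uniform on its support, i.e. there is a constant c such that every π_q is either 0 or c. (In general s_3 ≥ s_2² by the Cauchy–Schwarz inequality.) -/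
/-!
Weighted by `π_q π_l`, the squared differences `(π_q - π_l)²` sum to `2 (s₁ s₃ - s₂²)`, which is
therefore nonnegative and vanishes exactly when all positive entries coincide. This gives (ii).

For (i), `a = -2 s₂³ + (3 s₂ - 1) s₃` is affine in `s₃`, and `s₃` ranges over `[s₂², s₂^{3/2}]`:
the lower bound is the identity above, the upper bound comes from `π_q ≤ √s₂`. At the endpoints
`a` equals `s₂² (s₂ - 1)` and `-t³ (1 - t)² (2t + 1)` with `t = √s₂`, both negative because
two positive entries force `0 < s₂ < 1`.
-/

open Finset

section PowerSum

variable {ι : Type*} [Fintype ι]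

def powerSum {R : Type*} [CommSemiring R] (p : ι → R) (k : ℕ) : R := ∑ i, p i ^ k

theorem sum_sum_mul_mul_sub_sq {R : Type*} [CommRing R] (p : ι → R) :
    ∑ i, ∑ j, p i * p j * (p i - p j) ^ 2
      = 2 * (powerSum p 1 * powerSum p 3 - powerSum p 2 ^ 2) := by
  have expand : ∀ i j, p i * p j * (p i - p j) ^ 2
      = p i ^ 3 * p j + p i * p j ^ 3 - 2 * (p i ^ 2 * p j ^ 2) := fun i j => by ring
  simp only [expand, sum_add_distrib, sum_sub_distrib, ← mul_sum, ← sum_mul, powerSum,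
    pow_one]
  ring

theorem sq_powerSum_two_le_mul {R : Type*} [CommRing R] [LinearOrder R] [IsStrictOrderedRing R]
    {p : ι → R} (hp : ∀ i, 0 ≤ p i) :
    powerSum p 2 ^ 2 ≤ powerSum p 1 * powerSum p 3 := by
  have hsum : 0 ≤ ∑ i, ∑ j, p i * p j * (p i - p j) ^ 2 :=
    sum_nonneg fun i _ => sum_nonneg fun j _ => by have := hp i; have := hp j; positivity
  linarith [sum_sum_mul_mul_sub_sq p]

theorem exists_forall_eq_zero_or_eq_iff {α M : Type*} [Zero M] (p : α → M) :
    (∃ c, ∀ i, p i = 0 ∨ p i = c) ↔ ∀ i j, p i = 0 ∨ p j = 0 ∨ p i = p j := by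
  constructor
  · rintro ⟨c, hc⟩ i j
    rcases hc i with hi | hi <;> rcases hc j with hj | hj <;> simp [hi, hj]
  · intro h
    by_cases hzero : ∀ i, p i = 0
    · exact ⟨0, fun i => .inl (hzero i)⟩
    obtain ⟨i₀, hi₀⟩ := not_forall.mp hzero
    refine ⟨p i₀, fun i => ?_⟩
    rcases h i i₀ with hi | hi | hi
    exacts [.inl hi, absurd hi hi₀, .inr hi]

theorem powerSum_one_mul_three_eq_sq_iff {R : Type*} [CommRing R] [LinearOrder R]
    [IsStrictOrderedRing R] {p : ι → R} (hp : ∀ i, 0 ≤ p i) :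
    powerSum p 1 * powerSum p 3 = powerSum p 2 ^ 2 ↔ ∃ c, ∀ i, p i = 0 ∨ p i = c := by
  have hterm : ∀ i j, 0 ≤ p i * p j * (p i - p j) ^ 2 := fun i j => by
    have := hp i; have := hp j; positivity
  rw [exists_forall_eq_zero_or_eq_iff, ← sub_eq_zero, ← mul_eq_zero_iff_left two_ne_zero,
    ← sum_sum_mul_mul_sub_sq,
    sum_eq_zero_iff_of_nonneg fun i _ => sum_nonneg fun j _ => hterm i j]
  simp only [mem_univ, true_implies, sum_eq_zero_iff_of_nonneg fun j _ => hterm _ j, mul_eq_zero,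
    pow_eq_zero_iff two_ne_zero, sub_eq_zero, or_assoc]

theorem sq_le_powerSum_two {R : Type*} [CommRing R] [LinearOrder R] [IsStrictOrderedRing R]
    (p : ι → R) (i : ι) : p i ^ 2 ≤ powerSum p 2 :=
  single_le_sum (f := fun j => p j ^ 2) (fun j _ => sq_nonneg (p j)) (mem_univ i)

theorem powerSum_three_le_sqrt_mul (p : ι → ℝ) :
    powerSum p 3 ≤ √(powerSum p 2) * powerSum p 2 := by
  have hle : ∀ i, p i ≤ √(powerSum p 2) := fun i =>
    Real.le_sqrt_of_sq_le (sq_le_powerSum_two p i)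
  calc powerSum p 3 = ∑ i, p i * p i ^ 2 := sum_congr rfl fun i _ => by ring
    _ ≤ ∑ i, √(powerSum p 2) * p i ^ 2 :=
      sum_le_sum fun i _ => mul_le_mul_of_nonneg_right (hle i) (sq_nonneg _)
    _ = √(powerSum p 2) * powerSum p 2 := (mul_sum _ _ _).symm

theorem powerSum_two_lt_one {p : ι → ℝ} (hp : ∀ i, 0 ≤ p i) (hsum : powerSum p 1 = 1)
    {i j : ι} (hij : i ≠ j) (hi : 0 < p i) (hj : 0 < p j) : powerSum p 2 < 1 := by
  classical
  have hsum' : ∑ k, p k = 1 := by simpa [powerSum] using hsum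
  have hle : ∀ k, p k ≤ 1 := fun k =>
    hsum' ▸ single_le_sum (fun k _ => hp k) (mem_univ k)
  have hpair : p i + p j ≤ 1 := by
    rw [← sum_pair hij, ← hsum']
    exact sum_le_sum_of_subset_of_nonneg (subset_univ _) fun k _ _ => hp k
  rw [← hsum']
  refine sum_lt_sum (fun k _ => ?_) ⟨i, mem_univ i, ?_⟩
  · nlinarith [hp k, hle k]
  · nlinarith

end PowerSum

theorem neg_two_mul_cube_add_mul_sub_lt_zero {s u : ℝ} (hs₀ : 0 < s) (hs₁ : s < 1)
    (hlow : s ^ 2 ≤ u) (hup : u ≤ √s * s) : -2 * s ^ 3 + 3 * s * u - u < 0 := by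
  obtain ⟨t, ht₀, rfl⟩ : ∃ t, 0 < t ∧ t ^ 2 = s := ⟨√s, Real.sqrt_pos.2 hs₀, Real.sq_sqrt hs₀.le⟩
  rw [Real.sqrt_sq ht₀.le] at hup
  have ht₁ : t < 1 := by nlinarith
  rcases le_or_gt (3 * t ^ 2) 1 with hc | hc
  · have hpos : 0 < t ^ 4 * (1 - t ^ 2) := by
      have : 0 < 1 - t ^ 2 := by linarith
      positivity
    nlinarith [mul_nonneg (by linarith : (0 : ℝ) ≤ 1 - 3 * t ^ 2)
      (by linarith : 0 ≤ u - (t ^ 2) ^ 2)]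
  · have hpos : 0 < t ^ 3 * (1 - t) ^ 2 * (2 * t + 1) := by
      have : 0 < 1 - t := by linarith
      positivity
    nlinarith [mul_nonneg (by linarith : (0 : ℝ) ≤ 3 * t ^ 2 - 1)
      (by linarith : 0 ≤ t * t ^ 2 - u)]

theorem power_sums_lemma_general
    (Q : ℕ) (π : Fin Q → ℝ)
    (hπ : ∀ q, π q ∈ Set.Icc (0 : ℝ) 1) (hπsum : ∑ q, π q = 1) :
    ((∃ q l : Fin Q, q ≠ l ∧ 0 < π q ∧ 0 < π l) →
      -2 * (∑ q, π q ^ 2) ^ 3 + 3 * (∑ q, π q ^ 2) * (∑ q, π q ^ 3)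
        - (∑ q, π q ^ 3) ≠ 0) ∧
    ((∑ q, π q ^ 3) - (∑ q, π q ^ 2) ^ 2 = 0 ↔
      ∃ c : ℝ, ∀ q, π q = 0 ∨ π q = c) := by
  have hp : ∀ q, 0 ≤ π q := fun q => (hπ q).1
  have hs₁ : powerSum π 1 = 1 := by simpa [powerSum] using hπsum
  refine ⟨fun ⟨q, l, hql, hq, hl⟩ => ?_, ?_⟩
  · have hs₂ : 0 < powerSum π 2 := (pow_pos hq 2).trans_le (sq_le_powerSum_two π q)
    have hlow := sq_powerSum_two_le_mul hp
    rw [hs₁, one_mul] at hlow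
    exact (neg_two_mul_cube_add_mul_sub_lt_zero hs₂ (powerSum_two_lt_one hp hs₁ hql hq hl) hlow
      (powerSum_three_le_sqrt_mul π)).ne
  · have h := powerSum_one_mul_three_eq_sq_iff hp
    rw [hs₁, one_mul] at h
    rwa [sub_eq_zero]

/-- For a probability vector `π` with power sums `s_k = ∑ π_q^k`: (i) if at least two
entries of `π` are positive then `-2s₂³ + 3s₂s₃ - s₃ ≠ 0`; (ii) `s₃ - s₂² = 0` if and
only if `π` is uniform on its support. -/
theorem power_sums_lemma
    (Q : ℕ) (hQ : 2 ≤ Q) (π : Fin Q → ℝ)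
    (hπ : ∀ q, π q ∈ Set.Icc (0 : ℝ) 1) (hπsum : ∑ q, π q = 1) :
    ((∃ q l : Fin Q, q ≠ l ∧ 0 < π q ∧ 0 < π l) →
      -2 * (∑ q, π q ^ 2) ^ 3 + 3 * (∑ q, π q ^ 2) * (∑ q, π q ^ 3)
        - (∑ q, π q ^ 3) ≠ 0) ∧
    ((∑ q, π q ^ 3) - (∑ q, π q ^ 2) ^ 2 = 0 ↔
      ∃ c : ℝ, ∀ q, π q = 0 ∨ π q = c) :=
  power_sums_lemma_general Q π hπ hπsum
end

section
/- Let Q ≥ 2 and κ ≥ 1, and let {p_{ql}}_{1≤q,l≤Q} ⊆ ℝ^κ be probability vectors (nonnegative entries summing to 1) with p_{ql} = p_{lq}, such that the Q(Q+1)/2 vectors {p_{ql}}_{1≤q≤l≤Q} are linearly independent. Let A be the Q³ × κ³ matrix whose rows are indexed by triples z = (z_1, z_2, z_3) ∈ {1,…,Q}³ of node states, whose columns are indexed by triples x = (x_1, x_2, x_3) ∈ {1,…,κ}³ of edge states of the three edges (1,2), (1,3), (2,3), and whose (z,x)-entry is p_{z_1 z_2}(x_1) · p_{z_1 z_3}(x_2)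 · p_{z_2 z_3}(x_3). Then A has full row rank Q³. -/
/-!
By symmetry, `p` descends to a family of vectors indexed by unordered pairs `Sym2 (Fin Q)`,
and the hypothesis says that this family is linearly independent. The row of `A` indexed by
`z` is the outer product of the vectors attached to the three edges `{z₁, z₂}`, `{z₁, z₃}`,
`{z₂, z₃}`. Outer products of linearly independent families are linearly independent, and the
three edges of a labelled triangle determine its labels, so the rows form a subfamily of a
linearly independent family.
-/

theorem LinearIndependent.outer_product {R ι ι' α β : Type*} [Ring R] [Fintype ι] [Fintype ι']
    {f : ι → α → R} {g : ι' → β → R}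
    (hf : LinearIndependent R f) (hg : LinearIndependent R g) :
    LinearIndependent R (fun ij : ι × ι' => fun ab : α × β => f ij.1 ab.1 * g ij.2 ab.2) := by
  rw [Fintype.linearIndependent_iff] at hf hg ⊢
  intro c hc ⟨i, j⟩
  have hslice : ∀ a, ∑ j, (∑ i, c (i, j) * f i a) • g j = 0 := fun a => by
    ext b
    simpa [Fintype.sum_prod_type_right, Finset.sum_mul, mul_assoc] using congrFun hc (a, b)
  have hcol : ∑ i, c (i, j) • f i = 0 := by
    ext a
    simpa using hg _ (hslice a) j
  exact hf _ hcol i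

theorem linearIndependent_sym2_lift {R M α : Type*} [Semiring R] [AddCommMonoid M] [Module R M]
    [LinearOrder α] (p : α → α → M) (hsymm : ∀ a b, p a b = p b a)
    (hind : LinearIndependent R (fun e : {e : α × α // e.1 ≤ e.2} => p e.1.1 e.1.2)) :
    LinearIndependent R (Sym2.lift ⟨p, hsymm⟩) := by
  have hsort : Sym2.lift ⟨p, hsymm⟩ =
      (fun e : {e : α × α // e.1 ≤ e.2} => p e.1.1 e.1.2) ∘ Sym2.sortEquiv := by
    funext s
    induction s using Sym2.ind with | _ a b
    rcases le_total a b with h | h <;> simp [h, hsymm a b]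
  rw [hsort]
  exact hind.comp _ Sym2.sortEquiv.injective

def triangleEdges {α : Type*} (z : α × α × α) : Sym2 α × Sym2 α × Sym2 α :=
  (s(z.1, z.2.1), s(z.1, z.2.2), s(z.2.1, z.2.2))

theorem triangleEdges_injective {α : Type*} : Function.Injective (triangleEdges (α := α)) := by
  rintro ⟨a, b, c⟩ ⟨a', b', c'⟩ h
  simp only [triangleEdges, Prod.mk.injEq, Sym2.eq_iff] at h
  obtain ⟨hab | hab, hac | hac, hbc | hbc⟩ := h <;>
    obtain ⟨rfl, rfl⟩ := hab <;> obtain ⟨h1, h2⟩ := hac <;> obtain ⟨h3, h4⟩ := hbc <;>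
    subst_vars <;> rfl

theorem base_case_full_row_rank_general
    (Q κ : ℕ)
    (p : Fin Q → Fin Q → Fin κ → ℝ)
    (hpsym : ∀ q l, p q l = p l q)
    (hind : LinearIndependent ℝ
      (fun e : {e : Fin Q × Fin Q // e.1 ≤ e.2} => p e.1.1 e.1.2)) :
    LinearIndependent ℝ
      (fun z : Fin Q × Fin Q × Fin Q =>
        fun x : Fin κ × Fin κ × Fin κ =>
          p z.1 z.2.1 x.1 * p z.1 z.2.2 x.2.1 * p z.2.1 z.2.2 x.2.2) := by
  have hedge := linearIndependent_sym2_lift p hpsym hind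
  have hrows :=
    (hedge.outer_product (hedge.outer_product hedge)).comp _ triangleEdges_injective
  simpa only [Function.comp_def, triangleEdges, Sym2.lift_mk, mul_assoc] using hrows

/-- Base case for the finite-state random graph mixture model: if the `Q(Q+1)/2`
connectivity vectors `{p_{ql}}_{q ≤ l} ⊆ ℝ^κ` are linearly independent probability
vectors, then the `Q³ × κ³` matrix `A` of conditional probabilities of the three edge
variables `(X₁₂, X₁₃, X₂₃)` among 3 nodes, given the node states `(z₁, z₂, z₃)`, has
full row rank `Q³`, i.e. its rows are linearly independent. -/
theorem base_case_full_row_rank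
    (Q κ : ℕ) (hQ : 2 ≤ Q) (hκ : 1 ≤ κ)
    (p : Fin Q → Fin Q → Fin κ → ℝ)
    (hpsym : ∀ q l, p q l = p l q)
    (hpnn : ∀ q l k, 0 ≤ p q l k)
    (hpsum : ∀ q l, ∑ k, p q l k = 1)
    (hind : LinearIndependent ℝ
      (fun e : {e : Fin Q × Fin Q // e.1 ≤ e.2} => p e.1.1 e.1.2)) :
    LinearIndependent ℝ
      (fun z : Fin Q × Fin Q × Fin Q =>
        fun x : Fin κ × Fin κ × Fin κ =>
          p z.1 z.2.1 x.1 * p z.1 z.2.2 x.2.1 * p z.2.1 z.2.2 x.2.2) :=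
  base_case_full_row_rank_general Q κ p hpsym hind
end
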